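/- arXiv:2409.15793 — 3 statements merged into one kernel-verified Lean document; each statement's English description precedes it below -/
import Mathlib

section
/- Every outerplane triangulation of the polygon on n ≥ 3 vertices admits a pivot-exchange Gray code of its spanning trees, i.e., a sequence listing every spanning tree exactly once in which any two consecutive trees differ in an exchange of two edges that share an end vertex. -/
/-- `T` is (the edge set of) a spanning tree of the simple graph `G`:
a set of edges of `G` forming a connected and acyclic spanning subgraph. -/
def IsSpanningTree {V : Type*} (G : SimpleGraph V) (T : Finset (Sym2 V)) : Prop :=
  ↑T ⊆ G.edgeSet ∧ (SimpleGraph.fromEdgeSet (↑T : Set (Sym2 V))).Connected ∧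
    (SimpleGraph.fromEdgeSet (↑T : Set (Sym2 V))).IsAcyclic

/-- Two chords `e = {a,b}` and `f = {c,d}` of the convex polygon with vertices
`0 < 1 < ⋯ < n-1` cross, witnessed by the interleaving pattern `a < c < b < d`. -/
def Crossing {n : ℕ} (e f : Sym2 (Fin n)) : Prop :=
  ∃ a b c d : Fin n, a < c ∧ c < b ∧ b < d ∧ e = s(a, b) ∧ f = s(c, d)

/-- `T` and `T'` differ in a pivot-exchange: their symmetric difference consists of
exactly two edges `e ≠ f` that share an end vertex. -/
def PivotExchange {V : Type*} [DecidableEq V] (T T' : Finset (Sym2 V)) : Prop :=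
  ∃ e f : Sym2 V, e ≠ f ∧ symmDiff T T' = {e, f} ∧ ∃ v : V, v ∈ e ∧ v ∈ f

namespace OPT
variable {N : ℕ}

/-- `y` is the cyclic successor of `x` in `s`. -/
def Consec (s : Finset (Fin N)) (x y : Fin N) : Prop :=
  x ∈ s ∧ y ∈ s ∧
    ((x < y ∧ ∀ z ∈ s, ¬(x < z ∧ z < y)) ∨ (y < x ∧ ∀ z ∈ s, y ≤ z ∧ z ≤ x))

def Rch (A : Finset (Sym2 (Fin N))) (x y : Fin N) : Prop :=
  Relation.ReflTransGen (fun a b => a ≠ b ∧ s(a, b) ∈ A) x y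

lemma Rch.refl {A : Finset (Sym2 (Fin N))} {x : Fin N} : Rch A x x :=
  Relation.ReflTransGen.refl

lemma Rch.single {A : Finset (Sym2 (Fin N))} {x y : Fin N} (h : x ≠ y) (he : s(x, y) ∈ A) :
    Rch A x y := Relation.ReflTransGen.single ⟨h, he⟩

lemma Rch.symm {A : Finset (Sym2 (Fin N))} {x y : Fin N} (h : Rch A x y) : Rch A y x := by
  induction h with
  | refl => exact Rch.refl
  | tail _ hbc ih => exact (Rch.single hbc.1.symm (by rw [Sym2.eq_swap]; exact hbc.2)).trans ih

lemma Rch.trans {A : Finset (Sym2 (Fin N))} {x y z : Fin N} (h : Rch A x y) (h' : Rch A y z) :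
    Rch A x z := Relation.ReflTransGen.trans h h'

lemma Rch.mono {A B : Finset (Sym2 (Fin N))} (hAB : A ⊆ B) {x y : Fin N} (h : Rch A x y) :
    Rch B x y := Relation.ReflTransGen.mono (p := fun a b => a ≠ b ∧ s(a, b) ∈ B) (fun a b hab => ⟨hab.1, hAB hab.2⟩) _ _ h

lemma Rch.isolated {A : Finset (Sym2 (Fin N))} {v y : Fin N}
    (hv : ∀ e ∈ A, v ∉ e) (h : Rch A v y) : v = y := by
  rcases Relation.ReflTransGen.cases_head h with h' | ⟨b, ⟨hne, hm⟩, _⟩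
  · exact h'
  · exact absurd (Sym2.mem_mk_left v b) (hv _ hm)

lemma Rch_insert_iff {A : Finset (Sym2 (Fin N))} {p q : Fin N} (hpq : p ≠ q) {x y : Fin N} :
    Rch (insert s(p, q) A) x y ↔
      Rch A x y ∨ (Rch A x p ∧ Rch A q y) ∨ (Rch A x q ∧ Rch A p y) := by
  constructor
  · intro h
    induction h using Relation.ReflTransGen.head_induction_on with
    | refl => exact Or.inl Rch.refl
    | head hab _ ih =>
      obtain ⟨hne, hm⟩ := hab
      rcases Finset.mem_insert.mp hm with he | hA
      · rcases Sym2.eq_iff.mp he with ⟨rfl, rfl⟩ | ⟨rfl, rfl⟩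
        · rcases ih with h' | ⟨h1, h2⟩ | ⟨h1, h2⟩
          · exact Or.inr (Or.inl ⟨Rch.refl, h'⟩)
          · exact Or.inr (Or.inl ⟨Rch.refl, h2⟩)
          · exact Or.inl h2
        · rcases ih with h' | ⟨h1, h2⟩ | ⟨h1, h2⟩
          · exact Or.inr (Or.inr ⟨Rch.refl, h'⟩)
          · exact Or.inl h2
          · exact Or.inr (Or.inr ⟨Rch.refl, h2⟩)
      · have step : Rch A _ _ := Rch.single hne hA
        rcases ih with h' | ⟨h1, h2⟩ | ⟨h1, h2⟩
        · exact Or.inl (step.trans h')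
        · exact Or.inr (Or.inl ⟨step.trans h1, h2⟩)
        · exact Or.inr (Or.inr ⟨step.trans h1, h2⟩)
  · have hsub : A ⊆ insert s(p, q) A := Finset.subset_insert _ _
    have hstep : Rch (insert s(p, q) A) p q :=
      Rch.single hpq (Finset.mem_insert_self _ _)
    rintro (h | ⟨h1, h2⟩ | ⟨h1, h2⟩)
    · exact h.mono hsub
    · exact ((h1.mono hsub).trans hstep).trans (h2.mono hsub)
    · exact ((h1.mono hsub).trans hstep.symm).trans (h2.mono hsub)

/-- key counting bound : a spanning connected edge set on `s` has at least `s.card - 1` edges. -/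
lemma card_bound : ∀ (n : ℕ) (A : Finset (Sym2 (Fin N))) (s : Finset (Fin N)),
    A.card ≤ n →
    (∀ e ∈ A, ∀ x ∈ e, x ∈ s) → (∀ x ∈ s, ∀ y ∈ s, Rch A x y) →
    s.card ≤ A.card + 1 := by
  classical
  intro n
  induction n with
  | zero =>
      intro A s hA hin hr
      have hA0 : A = ∅ := Finset.card_eq_zero.mp (Nat.le_zero.mp hA)
      subst hA0
      -- s is a subsingleton
      by_contra h
      push_neg at h
      have : 2 ≤ s.card := by omega
      obtain ⟨x, hx, y, hy, hxy⟩ := Finset.one_lt_card.mp this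
      have := hr x hx y hy
      have := Rch.isolated (by simp) this
      exact hxy this
  | succ n ih =>
      intro A s hA hin hr
      rcases Finset.eq_empty_or_nonempty A with rfl | ⟨e, he⟩
      · exact ih ∅ s (by simp) hin hr
      · induction e using Sym2.inductionOn with
        | hf p q =>
        set A' := A.erase s(p, q) with hA'
        have hA'ss : A' ⊆ A := Finset.erase_subset _ _
        have hAcard : A'.card + 1 = A.card := Finset.card_erase_add_one he
        have hins : insert s(p, q) A' = A := Finset.insert_erase he
        by_cases hpq : p = q
        · -- diagonal edge contributes nothing
          subst hpq
          have hr' : ∀ x ∈ s, ∀ y ∈ s, Rch A' x y := by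
            intro x hx y hy
            have hxy := hr x hx y hy
            rw [← hins] at hxy
            refine Relation.ReflTransGen.mono ?_ _ _ hxy
            rintro a b ⟨hne, hm⟩
            rcases Finset.mem_insert.mp hm with he' | hA
            · rcases Sym2.eq_iff.mp he' with ⟨rfl, rfl⟩ | ⟨rfl, rfl⟩ <;> exact absurd rfl hne
            · exact ⟨hne, hA⟩
          have := ih A' s (by omega) (fun e heA x hx => hin e (hA'ss heA) x hx) hr'
          omega
        · -- partition s by reachability from p in A'
          set s1 := s.filter (fun z => Rch A' p z) with hs1
          set s2 := s.filter (fun z => ¬ Rch A' p z) with hs2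
          set A1 := A'.filter (fun f => ∀ x ∈ f, Rch A' p x) with hA1
          set A2 := A'.filter (fun f => ¬ ∀ x ∈ f, Rch A' p x) with hA2
          have hA1in : ∀ f ∈ A1, ∀ x ∈ f, x ∈ s1 := by
            intro f hf x hx
            obtain ⟨hfA, hall⟩ := Finset.mem_filter.mp hf
            exact Finset.mem_filter.mpr ⟨hin f (hA'ss hfA) x hx, hall x hx⟩
          have edge_rch : ∀ f ∈ A', ∀ x ∈ f, ∀ y ∈ f, Rch A' x y := by
            intro f hf x hx y hy
            induction f using Sym2.inductionOn with
            | hf a b =>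
              rcases Sym2.mem_iff.mp hx with rfl | rfl <;>
                rcases Sym2.mem_iff.mp hy with rfl | rfl
              · exact Rch.refl
              · by_cases hab : x = y
                · exact hab ▸ Rch.refl
                · exact Rch.single hab hf
              · by_cases hab : x = y
                · exact hab ▸ Rch.refl
                · exact Rch.single hab (by rwa [Sym2.eq_swap])
              · exact Rch.refl
          have hA2in : ∀ f ∈ A2, ∀ x ∈ f, x ∈ s2 := by
            intro f hf x hx
            obtain ⟨hfA, hnall⟩ := Finset.mem_filter.mp hf
            push_neg at hnall
            obtain ⟨z, hz, hnz⟩ := hnall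
            refine Finset.mem_filter.mpr ⟨hin f (hA'ss hfA) x hx, fun hc => hnz ?_⟩
            exact hc.trans (edge_rch f hfA x hx z hz)
          -- reachability inside s1 via A1
          have key1 : ∀ x y : Fin N, Rch A' x y → Rch A' p x → Rch A1 x y := by
            intro x y hxy
            induction hxy using Relation.ReflTransGen.head_induction_on with
            | refl => intro _; exact Rch.refl
            | head hab hby ih =>
              rename_i a b
              intro hpa
              obtain ⟨hne, hm⟩ := hab
              have hpb : Rch A' p b := hpa.trans (Rch.single hne hm)
              have hmem : s(a, b) ∈ A1 := by
                refine Finset.mem_filter.mpr ⟨hm, ?_⟩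
                intro z hz
                rcases Sym2.mem_iff.mp hz with rfl | rfl
                · exact hpa
                · exact hpb
              exact (Rch.single hne hmem).trans (ih hpb)
          have key2 : ∀ x y : Fin N, Rch A' x y → ¬ Rch A' p x → Rch A2 x y := by
            intro x y hxy
            induction hxy using Relation.ReflTransGen.head_induction_on with
            | refl => intro _; exact Rch.refl
            | head hab hby ih =>
              rename_i a b
              intro hpa
              obtain ⟨hne, hm⟩ := hab
              have hpb : ¬ Rch A' p b := fun hc =>
                hpa (hc.trans (Rch.single hne.symm (by rwa [Sym2.eq_swap])))
              have hmem : s(a, b) ∈ A2 := by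
                refine Finset.mem_filter.mpr ⟨hm, ?_⟩
                intro hall
                exact hpa (hall a (Sym2.mem_mk_left a b))
              exact (Rch.single hne hmem).trans (ih hpb)
          -- cross-pair reachability in A' for members of the same class
          have hr1 : ∀ x ∈ s1, ∀ y ∈ s1, Rch A1 x y := by
            intro x hx y hy
            obtain ⟨hxs, hpx⟩ := Finset.mem_filter.mp hx
            obtain ⟨hys, hpy⟩ := Finset.mem_filter.mp hy
            exact key1 x y (hpx.symm.trans hpy) hpx
          have hr2 : ∀ x ∈ s2, ∀ y ∈ s2, Rch A2 x y := by
            intro x hx y hy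
            obtain ⟨hxs, hpx⟩ := Finset.mem_filter.mp hx
            obtain ⟨hys, hpy⟩ := Finset.mem_filter.mp hy
            have hxyA : Rch A x y := hr x hxs y hys
            rw [← hins] at hxyA
            rcases (Rch_insert_iff hpq).mp hxyA with h | ⟨h1, h2⟩ | ⟨h1, h2⟩
            · exact key2 x y h hpx
            · exact absurd h1.symm hpx
            · exact absurd h2 hpy
          have hcards : s1.card + s2.card = s.card := by
            rw [hs1, hs2]; exact Finset.card_filter_add_card_filter_not _
          have hAcards : A1.card + A2.card ≤ A'.card := by
            rw [hA1, hA2]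
            exact le_of_eq (Finset.card_filter_add_card_filter_not _)
          have h1 := ih A1 s1 (by
            have : A1.card ≤ A'.card := Finset.card_le_card (Finset.filter_subset _ _)
            omega) hA1in hr1
          have h2 := ih A2 s2 (by
            have : A2.card ≤ A'.card := Finset.card_le_card (Finset.filter_subset _ _)
            omega) hA2in hr2
          omega


lemma Consec.ne {s : Finset (Fin N)} {x y : Fin N} (h : Consec s x y) : x ≠ y := by
  rcases h.2.2 with ⟨h, _⟩ | ⟨h, _⟩
  · exact ne_of_lt h
  · exact (ne_of_lt h).symm

lemma consec_succ_unique {s : Finset (Fin N)} {x y y' : Fin N}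
    (h : Consec s x y) (h' : Consec s x y') : y = y' := by
  obtain ⟨hx, hy, hd⟩ := h
  obtain ⟨hx', hy', hd'⟩ := h'
  rcases hd with ⟨hlt, hnb⟩ | ⟨hlt, hall⟩ <;> rcases hd' with ⟨hlt', hnb'⟩ | ⟨hlt', hall'⟩
  · rcases lt_trichotomy y y' with h | h | h
    · exact absurd ⟨hlt, h⟩ (hnb' y hy)
    · exact h
    · exact absurd ⟨hlt', h⟩ (hnb y' hy')
  · exact absurd (hall' y hy).2 (not_le.mpr hlt)
  · exact absurd (hall y' hy').2 (not_le.mpr hlt')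
  · exact le_antisymm (hall y' hy').1 (hall' y hy).1

lemma not_consec_both {s : Finset (Fin N)} (h3 : 3 ≤ s.card) {x y : Fin N}
    (h : Consec s x y) (h' : Consec s y x) : False := by
  obtain ⟨hx, hy, hd⟩ := h
  obtain ⟨-, -, hd'⟩ := h'
  have hcard2 : ∀ u v : Fin N, s ⊆ {u, v} → False := by
    intro u v hss
    have h1 := Finset.card_le_card hss
    have h2 : ({u, v} : Finset (Fin N)).card ≤ 2 := Finset.card_insert_le _ _ |>.trans (by simp)
    omega
  rcases hd with ⟨hlt, hnb⟩ | ⟨hlt, hall⟩ <;> rcases hd' with ⟨hlt', hnb'⟩ | ⟨hlt', hall'⟩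
  · exact absurd hlt' (not_lt.mpr hlt.le)
  · refine hcard2 x y fun z hz => ?_
    have h1 := hall' z hz
    have h2 := hnb z hz
    simp only [Finset.mem_insert, Finset.mem_singleton]
    rcases eq_or_lt_of_le h1.1 with h | h
    · exact Or.inl h.symm
    · rcases eq_or_lt_of_le h1.2 with h' | h'
      · exact Or.inr h'
      · exact absurd ⟨h, h'⟩ h2
  · refine hcard2 x y fun z hz => ?_
    have h1 := hall z hz
    have h2 := hnb' z hz
    simp only [Finset.mem_insert, Finset.mem_singleton]
    rcases eq_or_lt_of_le h1.1 with h | h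
    · exact Or.inr h.symm
    · rcases eq_or_lt_of_le h1.2 with h' | h'
      · exact Or.inl h'
      · exact absurd ⟨h, h'⟩ h2
  · exact absurd hlt' (not_lt.mpr hlt.le)

lemma sym2_norm (e : Sym2 (Fin N)) (h : ¬e.IsDiag) : ∃ a b : Fin N, a < b ∧ e = s(a, b) := by
  induction e using Sym2.inductionOn with
  | hf p q =>
    have hne : p ≠ q := fun hc => h (by simp [hc])
    rcases lt_or_gt_of_ne hne with hlt | hlt
    · exact ⟨p, q, hlt, rfl⟩
    · exact ⟨q, p, hlt, Sym2.eq_swap⟩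

section Side

variable {A : Finset (Fin N)} {a b : Fin N}

lemma consecA1 (ha : a ∈ A) (hb : b ∈ A) (hab : a < b) {x y : Fin N}
    (h : Consec (A.filter (fun z => a ≤ z ∧ z ≤ b)) x y) :
    Consec A x y ∨ (x = b ∧ y = a) := by
  obtain ⟨hx, hy, hd⟩ := h
  obtain ⟨hxA, hxa, hxb⟩ : x ∈ A ∧ a ≤ x ∧ x ≤ b := by
    have := Finset.mem_filter.mp hx; exact ⟨this.1, this.2.1, this.2.2⟩
  obtain ⟨hyA, hya, hyb⟩ : y ∈ A ∧ a ≤ y ∧ y ≤ b := by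
    have := Finset.mem_filter.mp hy; exact ⟨this.1, this.2.1, this.2.2⟩
  rcases hd with ⟨hlt, hnb⟩ | ⟨hlt, hall⟩
  · refine Or.inl ⟨hxA, hyA, Or.inl ⟨hlt, fun z hz hzb => ?_⟩⟩
    exact hnb z (Finset.mem_filter.mpr ⟨hz, le_trans hxa hzb.1.le, le_trans hzb.2.le hyb⟩) hzb
  · have hamem : a ∈ A.filter (fun z => a ≤ z ∧ z ≤ b) :=
      Finset.mem_filter.mpr ⟨ha, le_refl a, hab.le⟩
    have hbmem : b ∈ A.filter (fun z => a ≤ z ∧ z ≤ b) :=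
      Finset.mem_filter.mpr ⟨hb, hab.le, le_refl b⟩
    have h1 := hall a hamem
    have h2 := hall b hbmem
    exact Or.inr ⟨le_antisymm hxb h2.2, le_antisymm h1.1 hya⟩

lemma consecA2 (ha : a ∈ A) (hb : b ∈ A) (hab : a < b) {x y : Fin N}
    (h : Consec (A.filter (fun z => ¬(a < z ∧ z < b))) x y) :
    Consec A x y ∨ (x = a ∧ y = b) := by
  classical
  obtain ⟨hx, hy, hd⟩ := h
  obtain ⟨hxA, hxno⟩ := Finset.mem_filter.mp hx
  obtain ⟨hyA, hyno⟩ := Finset.mem_filter.mp hy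
  have hamem : a ∈ A.filter (fun z => ¬(a < z ∧ z < b)) :=
    Finset.mem_filter.mpr ⟨ha, by simp⟩
  have hbmem : b ∈ A.filter (fun z => ¬(a < z ∧ z < b)) :=
    Finset.mem_filter.mpr ⟨hb, by simp⟩
  rcases hd with ⟨hlt, hnb⟩ | ⟨hlt, hall⟩
  · by_cases hz : ∃ z ∈ A, x < z ∧ z < y
    · obtain ⟨z, hzA, hz1, hz2⟩ := hz
      have hzin : a < z ∧ z < b := by
        by_contra hc
        exact hnb z (Finset.mem_filter.mpr ⟨hzA, hc⟩) ⟨hz1, hz2⟩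
      have hxa : x = a := by
        have hax : a ≤ x := by
          by_contra hc
          push_neg at hc
          exact hnb a hamem ⟨hc, lt_trans hzin.1 hz2⟩
        rcases eq_or_lt_of_le hax with h | h
        · exact h.symm
        · exact absurd ⟨h, lt_trans hz1 hzin.2⟩ hxno
      have hyb : y = b := by
        have hby : y ≤ b := by
          by_contra hc
          push_neg at hc
          exact hnb b hbmem ⟨lt_trans hz1 hzin.2, hc⟩
        rcases eq_or_lt_of_le hby with h | h
        · exact h
        · exact absurd ⟨lt_trans hzin.1 hz2, h⟩ hyno
      exact Or.inr ⟨hxa, hyb⟩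
    · push_neg at hz
      exact Or.inl ⟨hxA, hyA, Or.inl ⟨hlt, fun z hzA hc => absurd (hz z hzA hc.1) (not_le.mpr hc.2)⟩⟩
  · refine Or.inl ⟨hxA, hyA, Or.inr ⟨hlt, fun z hz => ?_⟩⟩
    by_cases hzi : a < z ∧ z < b
    · have h1 := hall a hamem
      have h2 := hall b hbmem
      exact ⟨le_trans h1.1 hzi.1.le, le_trans hzi.2.le h2.2⟩
    · exact hall z (Finset.mem_filter.mpr ⟨hz, hzi⟩)

lemma sideSplit {e : Sym2 (Fin N)} (hab : a < b) (hnd : ¬e.IsDiag)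
    (hc1 : ¬ Crossing e s(a, b)) (hc2 : ¬ Crossing s(a, b) e)
    (hin : ∀ x ∈ e, x ∈ A) :
    (∀ x ∈ e, x ∈ A.filter (fun z => a ≤ z ∧ z ≤ b)) ∨
      (∀ x ∈ e, x ∈ A.filter (fun z => ¬(a < z ∧ z < b))) := by
  classical
  obtain ⟨x, y, hxy, rfl⟩ := sym2_norm e hnd
  have hxA := hin x (Sym2.mem_mk_left x y)
  have hyA := hin y (Sym2.mem_mk_right x y)
  have hmem : ∀ z, z ∈ s(x,y) → z = x ∨ z = y := fun z hz => Sym2.mem_iff.mp hz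
  by_cases hxa : x < a
  · right
    have hyno : ¬(a < y ∧ y < b) := fun ⟨h1, h2⟩ => hc1 ⟨x, y, a, b, hxa, h1, h2, rfl, rfl⟩
    intro z hz
    rcases hmem z hz with rfl | rfl
    · exact Finset.mem_filter.mpr ⟨hxA, fun hc => absurd hxa (not_lt.mpr hc.1.le)⟩
    · exact Finset.mem_filter.mpr ⟨hyA, hyno⟩
  · push_neg at hxa
    by_cases hyb : y ≤ b
    · left
      intro z hz
      rcases hmem z hz with rfl | rfl
      · exact Finset.mem_filter.mpr ⟨hxA, hxa, le_trans hxy.le hyb⟩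
      · exact Finset.mem_filter.mpr ⟨hyA, le_trans hxa hxy.le, hyb⟩
    · push_neg at hyb
      right
      have hxno : ¬(a < x ∧ x < b) := fun ⟨h1, h2⟩ => hc2 ⟨a, b, x, y, h1, h2, hyb, rfl, rfl⟩
      intro z hz
      rcases hmem z hz with rfl | rfl
      · exact Finset.mem_filter.mpr ⟨hxA, hxno⟩
      · exact Finset.mem_filter.mpr ⟨hyA, fun hc => absurd hyb (not_lt.mpr hc.2.le)⟩

end Side

/-- The bound: a family of pairwise non-crossing chords (no polygon sides) of the convex
polygon on the vertex set `A` has at most `|A| - 3` members. -/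
lemma lemB : ∀ (n : ℕ) (A : Finset (Fin N)) (F : Finset (Sym2 (Fin N))),
    A.card ≤ n →
    (∀ e ∈ F, ∀ x ∈ e, x ∈ A) →
    (∀ e ∈ F, ¬ e.IsDiag) →
    (∀ e ∈ F, ∀ f ∈ F, ¬ Crossing e f) →
    (∀ e ∈ F, ∀ x y, Consec A x y → e ≠ s(x, y)) →
    F.card + 3 ≤ A.card ∨ F = ∅ := by
  classical
  intro n
  induction n with
  | zero =>
    intro A F hAn hin _ _ _
    rcases Finset.eq_empty_or_nonempty F with rfl | ⟨e, he⟩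
    · exact Or.inr rfl
    · induction e using Sym2.inductionOn with
      | hf p q =>
        have := hin _ he p (Sym2.mem_mk_left p q)
        have := Finset.card_pos.mpr ⟨p, this⟩
        omega
  | succ n ih =>
    intro A F hAn hin hnd hnc hcons
    rcases Finset.eq_empty_or_nonempty F with rfl | ⟨e, he⟩
    · exact Or.inr rfl
    left
    obtain ⟨a, b, hab, rfl⟩ := sym2_norm e (hnd e he)
    have ha : a ∈ A := hin _ he a (Sym2.mem_mk_left a b)
    have hb : b ∈ A := hin _ he b (Sym2.mem_mk_right a b)
    have hnc1 : ¬ Consec A a b := fun hc => hcons _ he a b hc rfl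
    have hnc2 : ¬ Consec A b a := fun hc => hcons _ he b a hc Sym2.eq_swap
    obtain ⟨zi, hziA, hzi⟩ : ∃ z ∈ A, a < z ∧ z < b := by
      by_contra hc
      push_neg at hc
      exact hnc1 ⟨ha, hb, Or.inl ⟨hab, fun z hz hzc => absurd (hc z hz hzc.1) (not_le.mpr hzc.2)⟩⟩
    obtain ⟨zo, hzoA, hzo⟩ : ∃ z ∈ A, ¬(a ≤ z ∧ z ≤ b) := by
      by_contra hc
      push_neg at hc
      exact hnc2 ⟨hb, ha, Or.inr ⟨hab, hc⟩⟩
    set I := A.filter (fun z => a < z ∧ z < b) with hI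
    set A1 := A.filter (fun z => a ≤ z ∧ z ≤ b) with hA1
    set A2 := A.filter (fun z => ¬(a < z ∧ z < b)) with hA2
    have hziI : zi ∈ I := Finset.mem_filter.mpr ⟨hziA, hzi⟩
    have hIpos : 1 ≤ I.card := Finset.card_pos.mpr ⟨zi, hziI⟩
    have hA1card : A1.card = I.card + 2 := by
      have heq : A1 = insert a (insert b I) := by
        ext w
        simp only [hA1, hI, Finset.mem_insert, Finset.mem_filter]
        constructor
        · rintro ⟨hwA, hwa, hwb⟩
          rcases eq_or_lt_of_le hwa with h | h
          · exact Or.inl h.symm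
          · rcases eq_or_lt_of_le hwb with h' | h'
            · exact Or.inr (Or.inl h')
            · exact Or.inr (Or.inr ⟨hwA, h, h'⟩)
        · rintro (rfl | rfl | ⟨hwA, h1, h2⟩)
          · exact ⟨ha, le_refl _, hab.le⟩
          · exact ⟨hb, hab.le, le_refl _⟩
          · exact ⟨hwA, h1.le, h2.le⟩
      have hbI : b ∉ I := by simp [hI]
      have haI : a ∉ insert b I := by simp [hI, hab.ne]
      rw [heq, Finset.card_insert_of_notMem haI, Finset.card_insert_of_notMem hbI]
    have hpart : I.card + A2.card = A.card := by
      rw [hI, hA2]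
      exact Finset.card_filter_add_card_filter_not _
    have hA1lt : A1.card < A.card := by
      refine Finset.card_lt_card ?_
      rw [Finset.ssubset_iff_of_subset (Finset.filter_subset _ _)]
      exact ⟨zo, hzoA, by simp only [Finset.mem_filter]; tauto⟩
    have hA2lt : A2.card < A.card := by
      refine Finset.card_lt_card ?_
      rw [Finset.ssubset_iff_of_subset (Finset.filter_subset _ _)]
      exact ⟨zi, hziA, by simp only [Finset.mem_filter]; tauto⟩
    set F1 := F.filter (fun f => f ≠ s(a, b) ∧ ∀ x ∈ f, x ∈ A1) with hF1
    set F2 := F.filter (fun f => f ≠ s(a, b) ∧ ∀ x ∈ f, x ∈ A2) with hF2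
    have hcover : F ⊆ insert s(a, b) (F1 ∪ F2) := by
      intro f hf
      by_cases hfe : f = s(a, b)
      · exact hfe ▸ Finset.mem_insert_self _ _
      · refine Finset.mem_insert_of_mem (Finset.mem_union.mpr ?_)
        rcases sideSplit hab (hnd f hf) (hnc f hf _ he) (hnc _ he f hf) (hin f hf) with h | h
        · exact Or.inl (Finset.mem_filter.mpr ⟨hf, hfe, h⟩)
        · exact Or.inr (Finset.mem_filter.mpr ⟨hf, hfe, h⟩)
    have hFle : F.card ≤ F1.card + F2.card + 1 := by
      calc F.card ≤ (insert s(a, b) (F1 ∪ F2)).card := Finset.card_le_card hcover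
        _ ≤ (F1 ∪ F2).card + 1 := Finset.card_insert_le _ _
        _ ≤ F1.card + F2.card + 1 := by
            have := Finset.card_union_le F1 F2; omega
    have hIH1 := ih A1 F1 (by omega)
      (fun f hf x hx => (Finset.mem_filter.mp hf).2.2 x hx)
      (fun f hf => hnd f (Finset.filter_subset _ _ hf))
      (fun f hf g hg => hnc f (Finset.filter_subset _ _ hf) g (Finset.filter_subset _ _ hg))
      (by
        intro f hf x y hcxy heq
        obtain ⟨hfF, hfne, _⟩ := Finset.mem_filter.mp hf
        rcases consecA1 ha hb hab hcxy with h | ⟨rfl, rfl⟩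
        · exact hcons f hfF x y h heq
        · exact hfne (heq.trans Sym2.eq_swap))
    have hIH2 := ih A2 F2 (by omega)
      (fun f hf x hx => (Finset.mem_filter.mp hf).2.2 x hx)
      (fun f hf => hnd f (Finset.filter_subset _ _ hf))
      (fun f hf g hg => hnc f (Finset.filter_subset _ _ hf) g (Finset.filter_subset _ _ hg))
      (by
        intro f hf x y hcxy heq
        obtain ⟨hfF, hfne, _⟩ := Finset.mem_filter.mp hf
        rcases consecA2 ha hb hab hcxy with h | ⟨rfl, rfl⟩
        · exact hcons f hfF x y h heq
        · exact hfne heq)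
    have hc1 : F1.card + 3 ≤ I.card + 2 ∨ F1.card = 0 := by
      rcases hIH1 with h | h
      · exact Or.inl (hA1card ▸ h)
      · exact Or.inr (by simp [h])
    have hc2 : F2.card + 3 ≤ A2.card ∨ F2.card = 0 := by
      rcases hIH2 with h | h
      · exact Or.inl h
      · exact Or.inr (by simp [h])
    omega


lemma ear_descent (s : Finset (Fin N)) (G : SimpleGraph (Fin N))
    (hin : ∀ e ∈ G.edgeSet, ∀ x ∈ e, x ∈ s)
    (hnc : ∀ e ∈ G.edgeSet, ∀ f ∈ G.edgeSet, ¬ Crossing e f)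
    (C : Finset (Sym2 (Fin N)))
    (hCE : ∀ e ∈ C, e ∈ G.edgeSet)
    (hCch : ∀ e ∈ C, ∀ x y, Consec s x y → e ≠ s(x, y))
    (hCge : s.card ≤ C.card + 3) :
    ∀ (m : ℕ) (a b : Fin N), a < b → s(a, b) ∈ C →
      (s.filter (fun z => a < z ∧ z < b)).card ≤ m →
      ∃ u v w : Fin N, u < v ∧ v < w ∧ Consec s u v ∧ Consec s v w ∧ G.Adj u w ∧
        (∀ e ∈ G.edgeSet, v ∈ e → e = s(u, v) ∨ e = s(v, w)) := by
  classical
  intro m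
  induction m with
  | zero =>
    intro a b hab hC hcard
    exfalso
    have hedge := hCE _ hC
    have ha : a ∈ s := hin _ hedge a (Sym2.mem_mk_left a b)
    have hb : b ∈ s := hin _ hedge b (Sym2.mem_mk_right a b)
    have hnc1 : ¬ Consec s a b := fun hc => hCch _ hC a b hc rfl
    obtain ⟨zi, hziA, hzi⟩ : ∃ z ∈ s, a < z ∧ z < b := by
      by_contra hc
      push_neg at hc
      exact hnc1 ⟨ha, hb, Or.inl ⟨hab, fun z hz hzc => absurd (hc z hz hzc.1) (not_le.mpr hzc.2)⟩⟩
    have : zi ∈ s.filter (fun z => a < z ∧ z < b) := Finset.mem_filter.mpr ⟨hziA, hzi⟩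
    have := Finset.card_pos.mpr ⟨zi, this⟩
    omega
  | succ m ih =>
    intro a b hab hC hcard
    have hedge := hCE _ hC
    have ha : a ∈ s := hin _ hedge a (Sym2.mem_mk_left a b)
    have hb : b ∈ s := hin _ hedge b (Sym2.mem_mk_right a b)
    have hnc1 : ¬ Consec s a b := fun hc => hCch _ hC a b hc rfl
    have hnc2 : ¬ Consec s b a := fun hc => hCch _ hC b a hc Sym2.eq_swap
    obtain ⟨zi, hziA, hzi⟩ : ∃ z ∈ s, a < z ∧ z < b := by
      by_contra hc
      push_neg at hc
      exact hnc1 ⟨ha, hb, Or.inl ⟨hab, fun z hz hzc => absurd (hc z hz hzc.1) (not_le.mpr hzc.2)⟩⟩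
    obtain ⟨zo, hzoA, hzo⟩ : ∃ z ∈ s, ¬(a ≤ z ∧ z ≤ b) := by
      by_contra hc
      push_neg at hc
      exact hnc2 ⟨hb, ha, Or.inr ⟨hab, hc⟩⟩
    set I := s.filter (fun z => a < z ∧ z < b) with hI
    have hIpos : 1 ≤ I.card := Finset.card_pos.mpr ⟨zi, Finset.mem_filter.mpr ⟨hziA, hzi⟩⟩
    by_cases hI1 : I.card = 1
    · -- found the ear
      obtain ⟨v, hv⟩ := Finset.card_eq_one.mp hI1
      have hvI : v ∈ I := hv ▸ Finset.mem_singleton_self v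
      obtain ⟨hvs, hav, hvb⟩ : v ∈ s ∧ a < v ∧ v < b := by
        have := Finset.mem_filter.mp hvI; exact ⟨this.1, this.2.1, this.2.2⟩
      have honly : ∀ z ∈ s, a < z → z < b → z = v := by
        intro z hz h1 h2
        have : z ∈ I := Finset.mem_filter.mpr ⟨hz, h1, h2⟩
        rw [hv] at this
        exact Finset.mem_singleton.mp this
      refine ⟨a, v, b, hav, hvb, ?_, ?_, G.mem_edgeSet.mp hedge, ?_⟩
      · exact ⟨ha, hvs, Or.inl ⟨hav, fun z hz hzc =>
          absurd (honly z hz hzc.1 (lt_trans hzc.2 hvb)) (ne_of_lt hzc.2)⟩⟩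
      · exact ⟨hvs, hb, Or.inl ⟨hvb, fun z hz hzc =>
          absurd (honly z hz (lt_trans hav hzc.1) hzc.2) (ne_of_gt hzc.1)⟩⟩
      · intro e' he' hve'
        obtain ⟨y, hey⟩ : ∃ y, e' = s(v, y) := by
          induction e' using Sym2.inductionOn with
          | hf c d =>
            rcases Sym2.mem_iff.mp hve' with rfl | rfl
            · exact ⟨d, rfl⟩
            · exact ⟨c, Sym2.eq_swap⟩
        subst hey
        have hyA : y ∈ s := hin _ he' y (Sym2.mem_mk_right v y)
        have hvy : v ≠ y := (G.mem_edgeSet.mp he').ne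
        rcases lt_trichotomy y a with h1 | h1 | h1
        · exfalso
          refine hnc (s(y, v)) (by rwa [Sym2.eq_swap]) (s(a, b)) hedge ?_
          exact ⟨y, v, a, b, h1, hav, hvb, rfl, rfl⟩
        · left; rw [h1]; exact Sym2.eq_swap
        · rcases lt_trichotomy y b with h2 | h2 | h2
          · exfalso
            have : y = v := honly y hyA h1 h2
            exact hvy this.symm
          · right; rw [h2]
          · exfalso
            refine hnc (s(a, b)) hedge (s(v, y)) he' ?_
            exact ⟨a, b, v, y, hav, hvb, h2, rfl, rfl⟩
    · -- interior has ≥ 2 vertices : find a smaller chord inside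
      have hI2 : 2 ≤ I.card := by omega
      set A1 := s.filter (fun z => a ≤ z ∧ z ≤ b) with hA1
      set A2 := s.filter (fun z => ¬(a < z ∧ z < b)) with hA2
      have hpart : I.card + A2.card = s.card := by
        rw [hI, hA2]
        exact Finset.card_filter_add_card_filter_not _
      set F1 := C.filter (fun f => f ≠ s(a, b) ∧ ∀ x ∈ f, x ∈ A1) with hF1
      set F2 := C.filter (fun f => f ≠ s(a, b) ∧ ∀ x ∈ f, x ∈ A2) with hF2
      have hcover : C ⊆ insert s(a, b) (F1 ∪ F2) := by
        intro f hf
        by_cases hfe : f = s(a, b)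
        · exact hfe ▸ Finset.mem_insert_self _ _
        · refine Finset.mem_insert_of_mem (Finset.mem_union.mpr ?_)
          have hfnd : ¬ f.IsDiag := SimpleGraph.not_isDiag_of_mem_edgeSet _ (hCE f hf)
          rcases sideSplit hab hfnd (hnc f (hCE f hf) _ hedge) (hnc _ hedge f (hCE f hf))
            (hin f (hCE f hf)) with h | h
          · exact Or.inl (Finset.mem_filter.mpr ⟨hf, hfe, h⟩)
          · exact Or.inr (Finset.mem_filter.mpr ⟨hf, hfe, h⟩)
      have hFle : C.card ≤ F1.card + F2.card + 1 := by
        calc C.card ≤ (insert s(a, b) (F1 ∪ F2)).card := Finset.card_le_card hcover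
          _ ≤ (F1 ∪ F2).card + 1 := Finset.card_insert_le _ _
          _ ≤ F1.card + F2.card + 1 := by
              have := Finset.card_union_le F1 F2; omega
      have hF2bd := lemB A2.card A2 F2 (le_refl _)
        (fun f hf x hx => (Finset.mem_filter.mp hf).2.2 x hx)
        (fun f hf => SimpleGraph.not_isDiag_of_mem_edgeSet _
          (hCE f (Finset.filter_subset _ _ hf)))
        (fun f hf g hg => hnc f (hCE f (Finset.filter_subset _ _ hf)) g
          (hCE g (Finset.filter_subset _ _ hg)))
        (by
          intro f hf x y hcxy heq
          obtain ⟨hfF, hfne, _⟩ := Finset.mem_filter.mp hf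
          rcases consecA2 ha hb hab hcxy with h | ⟨rfl, rfl⟩
          · exact hCch f hfF x y h heq
          · exact hfne heq)
      -- A2 has at least 3 elements : a, b, zo
      have hA2ge : 3 ≤ A2.card := by
        have hasub : ({a, b, zo} : Finset (Fin N)) ⊆ A2 := by
          intro z hz
          simp only [Finset.mem_insert, Finset.mem_singleton] at hz
          rcases hz with rfl | rfl | rfl
          · exact Finset.mem_filter.mpr ⟨ha, by simp⟩
          · exact Finset.mem_filter.mpr ⟨hb, by simp⟩
          · exact Finset.mem_filter.mpr ⟨hzoA, fun hc => hzo ⟨hc.1.le, hc.2.le⟩⟩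
        have hzoa : zo ≠ a := fun hc => hzo (by rw [hc]; exact ⟨le_refl a, hab.le⟩)
        have hzob : zo ≠ b := fun hc => hzo (by rw [hc]; exact ⟨hab.le, le_refl b⟩)
        have : ({a, b, zo} : Finset (Fin N)).card = 3 := by
          rw [Finset.card_insert_of_notMem (by simp [hab.ne, Ne.symm hzoa]),
            Finset.card_insert_of_notMem (by simp [Ne.symm hzob])]
          simp
        calc 3 = ({a, b, zo} : Finset (Fin N)).card := this.symm
          _ ≤ A2.card := Finset.card_le_card hasub
      have hF1ne : F1.Nonempty := by
        rw [Finset.nonempty_iff_ne_empty]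
        intro hc
        have : F1.card = 0 := by simp [hc]
        rcases hF2bd with h | h
        · omega
        · have : F2.card = 0 := by simp [h]
          omega
      obtain ⟨f, hf⟩ := hF1ne
      obtain ⟨hfC, hfne, hfin⟩ := Finset.mem_filter.mp hf
      obtain ⟨a', b', hab', rfl⟩ := sym2_norm f
        (SimpleGraph.not_isDiag_of_mem_edgeSet _ (hCE f hfC))
      obtain ⟨ha's, haa', hb'b⟩ : a' ∈ s ∧ a ≤ a' ∧ a' ≤ b := by
        have := Finset.mem_filter.mp (hfin a' (Sym2.mem_mk_left a' b'))
        exact ⟨this.1, this.2.1, this.2.2⟩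
      obtain ⟨hb's, hab'2, hb'b2⟩ : b' ∈ s ∧ a ≤ b' ∧ b' ≤ b := by
        have := Finset.mem_filter.mp (hfin b' (Sym2.mem_mk_right a' b'))
        exact ⟨this.1, this.2.1, this.2.2⟩
      have hsub : s.filter (fun z => a' < z ∧ z < b') ⊂ I := by
        constructor
        · intro z hz
          obtain ⟨hzs, h1, h2⟩ := Finset.mem_filter.mp hz
          exact Finset.mem_filter.mpr ⟨hzs, lt_of_le_of_lt haa' h1, lt_of_lt_of_le h2 hb'b2⟩
        · intro hcon
          rcases eq_or_lt_of_le haa' with heq | hlt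
          · have hbb' : b' < b := by
              rcases eq_or_lt_of_le hb'b2 with heq2 | h
              · exfalso
                apply hfne
                rw [← heq, ← heq2]
              · exact h
            have hbI : b' ∈ I := Finset.mem_filter.mpr ⟨hb's, heq ▸ hab', hbb'⟩
            have := hcon hbI
            exact absurd (Finset.mem_filter.mp this).2.2 (lt_irrefl b')
          · have haI : a' ∈ I := Finset.mem_filter.mpr
              ⟨ha's, hlt, lt_of_lt_of_le hab' hb'b2⟩
            have := hcon haI
            exact absurd (Finset.mem_filter.mp this).2.1 (lt_irrefl a')
      have hlt : (s.filter (fun z => a' < z ∧ z < b')).card < I.card := Finset.card_lt_card hsub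
      exact ih a' b' hab' hfC (by omega)

lemma exists_ear (s : Finset (Fin N)) (G : SimpleGraph (Fin N))
    (hk : 4 ≤ s.card)
    (hin : ∀ e ∈ G.edgeSet, ∀ x ∈ e, x ∈ s)
    (hnc : ∀ e ∈ G.edgeSet, ∀ f ∈ G.edgeSet, ¬ Crossing e f)
    (hcard : G.edgeSet.ncard = 2 * s.card - 3) :
    ∃ u v w : Fin N, u < v ∧ v < w ∧ Consec s u v ∧ Consec s v w ∧ G.Adj u w ∧
      (∀ e ∈ G.edgeSet, v ∈ e → e = s(u, v) ∨ e = s(v, w)) := by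
  classical
  set E := (Set.toFinite G.edgeSet).toFinset with hE
  have hEmem : ∀ e, e ∈ E ↔ e ∈ G.edgeSet := fun e => Set.Finite.mem_toFinset _
  have hEcard : E.card = 2 * s.card - 3 := by
    rw [← hcard, hE, Set.ncard_eq_toFinset_card']
    congr 1
    exact (Set.toFinite G.edgeSet).toFinset_eq_toFinset ▸ rfl
  set O := E.filter (fun e => ∃ x y, Consec s x y ∧ e = s(x, y)) with hO
  set C := E.filter (fun e => ¬ ∃ x y, Consec s x y ∧ e = s(x, y)) with hC
  have hOC : O.card + C.card = E.card := by
    rw [hO, hC]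
    exact Finset.card_filter_add_card_filter_not _
  -- O has at most s.card elements
  have hspos : s.Nonempty := Finset.card_pos.mp (by omega)
  obtain ⟨v0, hv0⟩ := hspos
  have hOle : O.card ≤ s.card := by
    set pick : Sym2 (Fin N) → Fin N := fun e =>
      if h : ∃ x, ∃ y, Consec s x y ∧ e = s(x, y) then h.choose else v0 with hpick
    refine Finset.card_le_card_of_injOn pick ?_ ?_
    · intro e heO
      obtain ⟨-, h⟩ := Finset.mem_filter.mp heO
      rw [hpick]
      simp only [dif_pos h]
      obtain ⟨y, hcy, -⟩ := h.choose_spec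
      exact hcy.1
    · intro e heO e' heO' hpe
      obtain ⟨-, h⟩ := Finset.mem_filter.mp heO
      obtain ⟨-, h'⟩ := Finset.mem_filter.mp heO'
      rw [hpick] at hpe
      simp only [dif_pos h, dif_pos h'] at hpe
      obtain ⟨y, hcy, hey⟩ := h.choose_spec
      obtain ⟨y', hcy', hey'⟩ := h'.choose_spec
      rw [hpe] at hcy
      rw [hey, hey', hpe, consec_succ_unique hcy hcy']
  have hCge : s.card ≤ C.card + 3 := by omega
  have hCcard : 1 ≤ C.card := by omega
  obtain ⟨e, heC⟩ := Finset.card_pos.mp hCcard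
  have heE : e ∈ G.edgeSet := (hEmem e).mp (Finset.filter_subset _ _ heC)
  obtain ⟨a, b, hab, rfl⟩ := sym2_norm e (SimpleGraph.not_isDiag_of_mem_edgeSet _ heE)
  refine ear_descent s G hin hnc C (fun f hf => (hEmem f).mp (Finset.filter_subset _ _ hf))
    ?_ hCge (s.filter (fun z => a < z ∧ z < b)).card a b hab heC (le_refl _)
  intro f hf x y hcxy heq
  obtain ⟨-, hno⟩ := Finset.mem_filter.mp hf
  exact hno ⟨x, y, hcxy, heq⟩

section SymmDiff

variable {α : Type*} [DecidableEq α]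

lemma symmDiff_insert_insert {A : Finset α} {x y : α} (hx : x ∉ A) (hy : y ∉ A) (hxy : x ≠ y) :
    symmDiff (insert x A) (insert y A) = {x, y} := by
  ext a
  simp only [Finset.mem_symmDiff, Finset.mem_insert, Finset.mem_singleton]
  constructor
  · rintro (⟨h1 | h1, h2⟩ | ⟨h1 | h1, h2⟩)
    · exact Or.inl h1
    · exact absurd (Or.inr h1) h2
    · exact Or.inr h1
    · exact absurd (Or.inr h1) h2
  · rintro (rfl | rfl)
    · exact Or.inl ⟨Or.inl rfl, by push_neg; exact ⟨hxy, hx⟩⟩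
    · exact Or.inr ⟨Or.inl rfl, by push_neg; exact ⟨hxy.symm, hy⟩⟩

lemma symmDiff_insert_same {A B : Finset α} {x : α} (hA : x ∉ A) (hB : x ∉ B) :
    symmDiff (insert x A) (insert x B) = symmDiff A B := by
  ext a
  simp only [Finset.mem_symmDiff, Finset.mem_insert]
  constructor
  · rintro (⟨h1 | h1, h2⟩ | ⟨h1 | h1, h2⟩)
    · exact absurd (Or.inl h1) h2
    · push_neg at h2
      exact Or.inl ⟨h1, h2.2⟩
    · exact absurd (Or.inl h1) h2
    · push_neg at h2
      exact Or.inr ⟨h1, h2.2⟩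
  · rintro (⟨h1, h2⟩ | ⟨h1, h2⟩)
    · refine Or.inl ⟨Or.inr h1, ?_⟩
      push_neg
      exact ⟨fun hc => hA (hc ▸ h1), h2⟩
    · refine Or.inr ⟨Or.inr h1, ?_⟩
      push_neg
      exact ⟨fun hc => hB (hc ▸ h1), h2⟩

lemma symmDiff_pair {a b c : α} (hab : a ≠ b) (hbc : b ≠ c) (hac : a ≠ c) :
    symmDiff ({a, b} : Finset α) {b, c} = {a, c} := by
  ext z
  simp only [Finset.mem_symmDiff, Finset.mem_insert, Finset.mem_singleton]
  constructor
  · rintro (⟨h1 | h1, h2⟩ | ⟨h1 | h1, h2⟩)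
    · exact Or.inl h1
    · exact absurd (Or.inl h1) h2
    · push_neg at h2
      exact absurd h1 h2.2
    · exact Or.inr h1
  · rintro (rfl | rfl)
    · exact Or.inl ⟨Or.inl rfl, by push_neg; exact ⟨hab, hac⟩⟩
    · exact Or.inr ⟨Or.inr rfl, by push_neg; exact ⟨hac.symm, hbc.symm⟩⟩

end SymmDiff

section Glue

variable {u v w : Fin N}

/-- The `PivotExchange` predicate from the problem statement. -/
def PE (T T' : Finset (Sym2 (Fin N))) : Prop :=
  ∃ e f : Sym2 (Fin N), e ≠ f ∧ symmDiff T T' = {e, f} ∧ ∃ z : Fin N, z ∈ e ∧ z ∈ f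

def fib (u v w : Fin N) (p : Bool) (S : Finset (Sym2 (Fin N))) :
    List (Finset (Sym2 (Fin N))) :=
  if p then
    [insert s(u,v) S] ++
      (if s(u,w) ∈ S then [insert s(u,v) (insert s(v,w) (S.erase s(u,w)))] else []) ++
      [insert s(v,w) S]
  else
    [insert s(v,w) S] ++
      (if s(u,w) ∈ S then [insert s(u,v) (insert s(v,w) (S.erase s(u,w)))] else []) ++
      [insert s(u,v) S]

def glue (u v w : Fin N) : Bool → List (Finset (Sym2 (Fin N))) → List (Finset (Sym2 (Fin N)))
  | _, [] => []
  | p, S :: l => fib u v w p S ++ glue u v w (!p) l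

lemma mem_fib {p : Bool} {S T : Finset (Sym2 (Fin N))} :
    T ∈ fib u v w p S ↔
      (T = insert s(u,v) S ∨ T = insert s(v,w) S ∨
        (s(u,w) ∈ S ∧ T = insert s(u,v) (insert s(v,w) (S.erase s(u,w))))) := by
  cases p <;> by_cases h : s(u,w) ∈ S <;> simp [fib, h] <;> tauto

lemma mem_glue {T : Finset (Sym2 (Fin N))} :
    ∀ {p : Bool} {l : List (Finset (Sym2 (Fin N)))},
    T ∈ glue u v w p l ↔ ∃ S ∈ l, T ∈ fib u v w true S := by
  intro p l
  induction l generalizing p with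
  | nil => simp [glue]
  | cons S l ihl =>
    simp only [glue, List.mem_append, List.mem_cons, ihl]
    constructor
    · rintro (h | ⟨S', hS', h⟩)
      · exact ⟨S, Or.inl rfl, (mem_fib).mpr ((mem_fib).mp h)⟩
      · exact ⟨S', Or.inr hS', h⟩
    · rintro ⟨S', rfl | hS', h⟩
      · exact Or.inl ((mem_fib).mpr ((mem_fib).mp h))
      · exact Or.inr ⟨S', hS', h⟩

variable (huv : u ≠ v) (hvw : v ≠ w) (huw : u ≠ w)

include huv hvw huw

lemma e_ne_12 : s(u,v) ≠ s(v,w) := by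
  simp only [Ne, Sym2.eq_iff]; push_neg
  exact ⟨fun h => absurd h huv, fun h => absurd h huw⟩

lemma e_ne_13 : s(u,v) ≠ s(u,w) := by
  simp only [Ne, Sym2.eq_iff]; push_neg
  exact ⟨fun _ => hvw, fun h => absurd h huw⟩

lemma e_ne_23 : s(v,w) ≠ s(u,w) := by
  simp only [Ne, Sym2.eq_iff]; push_neg
  exact ⟨fun h => absurd h.symm huv, fun h => absurd h hvw⟩

lemma pe_ab {S : Finset (Sym2 (Fin N))} (h1 : s(u,v) ∉ S) (h2 : s(v,w) ∉ S) :
    PE (insert s(u,v) S) (insert s(v,w) S) :=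
  ⟨s(u,v), s(v,w), e_ne_12 huv hvw huw,
    symmDiff_insert_insert h1 h2 (e_ne_12 huv hvw huw),
    v, Sym2.mem_mk_right u v, Sym2.mem_mk_left v w⟩

lemma pe_ac {S : Finset (Sym2 (Fin N))} (h1 : s(u,v) ∉ S) (h2 : s(v,w) ∉ S)
    (h3 : s(u,w) ∈ S) :
    PE (insert s(u,v) S) (insert s(u,v) (insert s(v,w) (S.erase s(u,w)))) := by
  refine ⟨s(u,w), s(v,w), (e_ne_23 huv hvw huw).symm, ?_,
    w, Sym2.mem_mk_right u w, Sym2.mem_mk_right v w⟩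
  have hd : s(u,v) ∉ insert s(v,w) (S.erase s(u,w)) := by
    simp only [Finset.mem_insert, Finset.mem_erase]
    push_neg
    exact ⟨e_ne_12 huv hvw huw, fun _ => h1⟩
  rw [symmDiff_insert_same h1 hd]
  have hS : S = insert s(u,w) (S.erase s(u,w)) := (Finset.insert_erase h3).symm
  nth_rewrite 1 [hS]
  exact symmDiff_insert_insert (Finset.notMem_erase _ _)
    (fun hc => h2 (Finset.erase_subset _ _ hc)) (e_ne_23 huv hvw huw).symm

lemma pe_cb {S : Finset (Sym2 (Fin N))} (h1 : s(u,v) ∉ S) (h2 : s(v,w) ∉ S)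
    (h3 : s(u,w) ∈ S) :
    PE (insert s(u,v) (insert s(v,w) (S.erase s(u,w)))) (insert s(v,w) S) := by
  refine ⟨s(u,v), s(u,w), e_ne_13 huv hvw huw, ?_,
    u, Sym2.mem_mk_left u v, Sym2.mem_mk_left u w⟩
  rw [Finset.insert_comm]
  have hd : s(v,w) ∉ insert s(u,v) (S.erase s(u,w)) := by
    simp only [Finset.mem_insert, Finset.mem_erase]
    push_neg
    exact ⟨(e_ne_12 huv hvw huw).symm, fun _ => h2⟩
  rw [symmDiff_insert_same hd h2]
  have hS : S = insert s(u,w) (S.erase s(u,w)) := (Finset.insert_erase h3).symm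
  nth_rewrite 2 [hS]
  exact symmDiff_insert_insert (fun hc => h1 (Finset.erase_subset _ _ hc))
    (Finset.notMem_erase _ _) (e_ne_13 huv hvw huw)

omit huv hvw huw in
lemma pe_lift {S S' : Finset (Sym2 (Fin N))} {g : Sym2 (Fin N)} (hS : g ∉ S) (hS' : g ∉ S')
    (h : PE S S') : PE (insert g S) (insert g S') := by
  obtain ⟨e, f, hef, hsd, z, hz⟩ := h
  exact ⟨e, f, hef, by rw [symmDiff_insert_same hS hS', hsd], z, hz⟩

lemma fib_chain {p : Bool} {S : Finset (Sym2 (Fin N))}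
    (h1 : s(u,v) ∉ S) (h2 : s(v,w) ∉ S) :
    List.Chain' PE (fib u v w p S) := by
  have hab := pe_ab huv hvw huw h1 h2
  have hba : PE (insert s(v,w) S) (insert s(u,v) S) := by
    obtain ⟨e, f, hef, hsd, z, hz⟩ := hab
    exact ⟨e, f, hef, by rwa [symmDiff_comm], z, hz⟩
  cases p <;> by_cases h3 : s(u,w) ∈ S <;>
    simp only [fib, if_true, if_false, h3, List.singleton_append, List.nil_append,
      List.cons_append, List.append_nil]
  · -- p = false, with middle
    refine List.isChain_cons_cons.mpr ⟨?_, List.isChain_cons_cons.mpr ⟨?_, List.isChain_singleton _⟩⟩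
    · obtain ⟨e, f, hef, hsd, z, hz⟩ := pe_cb huv hvw huw h1 h2 h3
      exact ⟨e, f, hef, by rwa [symmDiff_comm], z, hz⟩
    · obtain ⟨e, f, hef, hsd, z, hz⟩ := pe_ac huv hvw huw h1 h2 h3
      exact ⟨e, f, hef, by rwa [symmDiff_comm], z, hz⟩
  · exact List.isChain_cons_cons.mpr ⟨hba, List.isChain_singleton _⟩
  · exact List.isChain_cons_cons.mpr ⟨pe_ac huv hvw huw h1 h2 h3,
      List.isChain_cons_cons.mpr ⟨pe_cb huv hvw huw h1 h2 h3, List.isChain_singleton _⟩⟩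
  · exact List.isChain_cons_cons.mpr ⟨hab, List.isChain_singleton _⟩

omit huv hvw huw in
lemma fib_head {p : Bool} {S : Finset (Sym2 (Fin N))} :
    (fib u v w p S).head? = some (insert (if p then s(u,v) else s(v,w)) S) := by
  cases p <;> by_cases h3 : s(u,w) ∈ S <;> simp [fib, h3]

omit huv hvw huw in
lemma fib_last {p : Bool} {S : Finset (Sym2 (Fin N))} :
    (fib u v w p S).getLast? = some (insert (if p then s(v,w) else s(u,v)) S) := by
  cases p <;> by_cases h3 : s(u,w) ∈ S <;> simp [fib, h3]

lemma glue_chain : ∀ (p : Bool) (l : List (Finset (Sym2 (Fin N)))),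
    List.Chain' PE l → (∀ S ∈ l, s(u,v) ∉ S ∧ s(v,w) ∉ S) →
    List.Chain' PE (glue u v w p l) := by
  intro p l
  induction l generalizing p with
  | nil => intro _ _; simp [glue]; exact List.isChain_nil
  | cons S l ihl =>
    intro hch hP
    have hPS := hP S (List.mem_cons_self)
    rw [glue]; show List.IsChain PE (_ ++ _); rw [List.isChain_append]
    refine ⟨fib_chain huv hvw huw hPS.1 hPS.2,
      ihl (!p) (List.IsChain.tail hch |>.imp (fun _ _ h => h) |> fun h => by
        cases l with
        | nil => exact List.isChain_nil
        | cons S' l' => exact (List.isChain_cons.mp hch).2) (fun S' hS' => hP S' (List.mem_cons_of_mem _ hS')), ?_⟩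
    intro x hx y hy
    cases l with
    | nil => simp [glue] at hy
    | cons S' l' =>
      rw [fib_last] at hx
      have hy' : y = insert (if !p then s(u,v) else s(v,w)) S' := by
        rw [glue] at hy
        rw [List.head?_append_of_ne_nil] at hy
        · rw [fib_head] at hy
          exact (Option.some_injective _ hy).symm
        · cases (!p) <;> by_cases h3 : s(u,w) ∈ S' <;> simp [fib, h3]
      have hx' : x = insert (if p then s(v,w) else s(u,v)) S :=
        (Option.some_injective _ hx).symm
      have hPE : PE S S' := by
        rcases List.isChain_cons_cons.mp hch with ⟨h, _⟩
        exact h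
      have hPS' := hP S' (List.mem_cons_of_mem _ (List.mem_cons_self))
      subst hx' hy'
      cases p
      · simp only [Bool.not_false, if_true, if_false]
        exact pe_lift hPS.1 hPS'.1 hPE
      · simp only [Bool.not_true, if_true, if_false]
        exact pe_lift hPS.2 hPS'.2 hPE

end Glue

section GlueNodup

variable {u v w : Fin N} (huv : u ≠ v) (hvw : v ≠ w) (huw : u ≠ w)

include huv hvw huw in
lemma fib_nodup {p : Bool} {S : Finset (Sym2 (Fin N))}
    (h1 : s(u,v) ∉ S) (h2 : s(v,w) ∉ S) :
    (fib u v w p S).Nodup := by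
  have hab : insert s(u,v) S ≠ insert s(v,w) S := by
    intro hc
    have : s(u,v) ∈ insert s(v,w) S := hc ▸ Finset.mem_insert_self _ _
    rcases Finset.mem_insert.mp this with h | h
    · exact e_ne_12 huv hvw huw h
    · exact h1 h
  have hac : insert s(u,v) S ≠ insert s(u,v) (insert s(v,w) (S.erase s(u,w))) := by
    intro hc
    have : s(v,w) ∈ insert s(u,v) S := by
      rw [hc]
      exact Finset.mem_insert_of_mem (Finset.mem_insert_self _ _)
    rcases Finset.mem_insert.mp this with h | h
    · exact e_ne_12 huv hvw huw h.symm
    · exact h2 h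
  have hbc : insert s(v,w) S ≠ insert s(u,v) (insert s(v,w) (S.erase s(u,w))) := by
    intro hc
    have : s(u,v) ∈ insert s(v,w) S := by
      rw [hc]
      exact Finset.mem_insert_self _ _
    rcases Finset.mem_insert.mp this with h | h
    · exact e_ne_12 huv hvw huw h
    · exact h1 h
  cases p <;> by_cases h3 : s(u,w) ∈ S <;>
    simp [fib, h3, hab, hac, hbc, hab.symm, hac.symm, hbc.symm]

include huv hvw huw in
lemma fib_recover {p : Bool} {S T : Finset (Sym2 (Fin N))}
    (h1 : s(u,v) ∉ S) (h2 : s(v,w) ∉ S) (hT : T ∈ fib u v w p S) :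
    S = if s(u,v) ∈ T ∧ s(v,w) ∈ T then insert s(u,w) ((T.erase s(u,v)).erase s(v,w))
      else (T.erase s(u,v)).erase s(v,w) := by
  rcases mem_fib.mp hT with rfl | rfl | ⟨h3, rfl⟩
  · rw [if_neg]
    · rw [Finset.erase_insert h1, Finset.erase_eq_of_notMem h2]
    · rintro ⟨-, hc⟩
      rcases Finset.mem_insert.mp hc with h | h
      · exact e_ne_12 huv hvw huw h.symm
      · exact h2 h
  · rw [if_neg]
    · have huvT : s(u,v) ∉ insert s(v,w) S := by
        intro hc
        rcases Finset.mem_insert.mp hc with h | h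
        · exact e_ne_12 huv hvw huw h
        · exact h1 h
      rw [Finset.erase_eq_of_notMem huvT, Finset.erase_insert h2]
    · rintro ⟨hc, -⟩
      rcases Finset.mem_insert.mp hc with h | h
      · exact e_ne_12 huv hvw huw h
      · exact h1 h
  · rw [if_pos ⟨Finset.mem_insert_self _ _,
      Finset.mem_insert_of_mem (Finset.mem_insert_self _ _)⟩]
    have hd1 : s(u,v) ∉ insert s(v,w) (S.erase s(u,w)) := by
      simp only [Finset.mem_insert, Finset.mem_erase]
      push_neg
      exact ⟨e_ne_12 huv hvw huw, fun _ => h1⟩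
    have hd2 : s(v,w) ∉ S.erase s(u,w) := fun hc => h2 (Finset.erase_subset _ _ hc)
    rw [Finset.erase_insert hd1, Finset.erase_insert hd2, Finset.insert_erase h3]

include huv hvw huw in
lemma glue_nodup : ∀ (p : Bool) (l : List (Finset (Sym2 (Fin N)))),
    l.Nodup → (∀ S ∈ l, s(u,v) ∉ S ∧ s(v,w) ∉ S) →
    (glue u v w p l).Nodup := by
  intro p l
  induction l generalizing p with
  | nil => intro _ _; simp [glue]
  | cons S l ihl =>
    intro hnd hP
    have hPS := hP S (List.mem_cons_self)
    rw [glue]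
    refine List.Nodup.append (fib_nodup huv hvw huw hPS.1 hPS.2)
      (ihl (!p) (List.Nodup.of_cons hnd) (fun S' hS' => hP S' (List.mem_cons_of_mem _ hS'))) ?_
    intro T hTf hTg
    obtain ⟨S', hS', hTf'⟩ := mem_glue.mp hTg
    have hPS' := hP S' (List.mem_cons_of_mem _ hS')
    have h1 := fib_recover huv hvw huw hPS.1 hPS.2 hTf
    have h2 := fib_recover huv hvw huw hPS'.1 hPS'.2 hTf'
    have : S = S' := h1.trans h2.symm
    subst this
    exact (List.nodup_cons.mp hnd).1 hS'

end GlueNodup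

/-- `T` is a spanning tree of `G` relative to the vertex set `s` :
`T` consists of edges of `G`, has `|s| - 1` elements, and joins up all of `s`. -/
def STree (G : SimpleGraph (Fin N)) (s : Finset (Fin N)) (T : Finset (Sym2 (Fin N))) : Prop :=
  ↑T ⊆ G.edgeSet ∧ T.card + 1 = s.card ∧ ∀ x ∈ s, ∀ y ∈ s, Rch T x y

set_option maxHeartbeats 1000000 in
lemma base_case (s : Finset (Fin N)) (G : SimpleGraph (Fin N))
    (hs3 : s.card = 3)
    (hin : ∀ e ∈ G.edgeSet, ∀ x ∈ e, x ∈ s)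
    (hout : ∀ x y, Consec s x y → G.Adj x y) :
    ∃ L : List (Finset (Sym2 (Fin N))), L.Nodup ∧ (∀ T, T ∈ L ↔ STree G s T) ∧
      L.Chain' PE := by
  obtain ⟨x, y, z, hxy, hxz, hyz, hs⟩ := Finset.card_eq_three.mp hs3
  have hxs : x ∈ s := by rw [hs]; simp
  have hys : y ∈ s := by rw [hs]; simp
  have hzs : z ∈ s := by rw [hs]; simp
  -- all pairs of distinct elements of s are adjacent
  have hAdj : ∀ a b : Fin N, a ∈ s → b ∈ s → a ≠ b → G.Adj a b := by
    have key : ∀ a b : Fin N, a ∈ s → b ∈ s → a < b → G.Adj a b := by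
      intro a b ha hb hab
      by_cases hbet : ∃ c ∈ s, a < c ∧ c < b
      · obtain ⟨c, hcs, hc1, hc2⟩ := hbet
        have hsub : ({a, c, b} : Finset (Fin N)) ⊆ s := by
          intro t ht
          simp only [Finset.mem_insert, Finset.mem_singleton] at ht
          rcases ht with rfl | rfl | rfl <;> assumption
        have hcard : ({a, c, b} : Finset (Fin N)).card = 3 := by
          rw [Finset.card_insert_of_notMem (by simp [(ne_of_lt hc1), (ne_of_lt (lt_trans hc1 hc2))]),
            Finset.card_insert_of_notMem (by simp [(ne_of_lt hc2)])]
          simp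
        have hseq : s = {a, c, b} := (Finset.eq_of_subset_of_card_le hsub (by omega)).symm
        have hcons : Consec s b a := by
          refine ⟨hb, ha, Or.inr ⟨hab, fun t ht => ?_⟩⟩
          rw [hseq] at ht
          simp only [Finset.mem_insert, Finset.mem_singleton] at ht
          rcases ht with rfl | rfl | rfl
          · exact ⟨le_refl _, hab.le⟩
          · exact ⟨hc1.le, hc2.le⟩
          · exact ⟨hab.le, le_refl _⟩
        exact (hout b a hcons).symm
      · push_neg at hbet
        exact hout a b ⟨ha, hb, Or.inl ⟨hab, fun t ht hc =>
          absurd (hbet t ht hc.1) (not_le.mpr hc.2)⟩⟩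
    intro a b ha hb hab
    rcases lt_or_gt_of_ne hab with h | h
    · exact key a b ha hb h
    · exact (key b a hb ha h).symm
  -- the edge set is exactly the triangle
  have hE : G.edgeSet = {s(x,y), s(y,z), s(x,z)} := by
    ext e
    constructor
    · intro he
      induction e using Sym2.inductionOn with
      | hf a b =>
        have hne : a ≠ b := (G.mem_edgeSet.mp he).ne
        have ha : a ∈ s := hin _ he a (Sym2.mem_mk_left a b)
        have hb : b ∈ s := hin _ he b (Sym2.mem_mk_right a b)
        rw [hs] at ha hb
        simp only [Finset.mem_insert, Finset.mem_singleton] at ha hb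
        simp only [Set.mem_insert_iff, Set.mem_singleton_iff]
        rcases ha with rfl | rfl | rfl <;> rcases hb with rfl | rfl | rfl
        · exact absurd rfl hne
        · exact Or.inl rfl
        · exact Or.inr (Or.inr rfl)
        · exact Or.inl Sym2.eq_swap
        · exact absurd rfl hne
        · exact Or.inr (Or.inl rfl)
        · exact Or.inr (Or.inr Sym2.eq_swap)
        · exact Or.inr (Or.inl Sym2.eq_swap)
        · exact absurd rfl hne
    · intro he
      simp only [Set.mem_insert_iff, Set.mem_singleton_iff] at he
      rcases he with rfl | rfl | rfl
      · exact G.mem_edgeSet.mpr (hAdj x y hxs hys hxy)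
      · exact G.mem_edgeSet.mpr (hAdj y z hys hzs hyz)
      · exact G.mem_edgeSet.mpr (hAdj x z hxs hzs hxz)
  have hne12 : s(x,y) ≠ s(y,z) := e_ne_12 hxy hyz hxz
  have hne13 : s(x,y) ≠ s(x,z) := e_ne_13 hxy hyz hxz
  have hne23 : s(y,z) ≠ s(x,z) := e_ne_23 hxy hyz hxz
  -- each pair of triangle edges is a spanning tree
  have hseq : ∀ a, a ∈ s ↔ (a = x ∨ a = y ∨ a = z) := by
    intro a; rw [hs]; simp
  -- reachability for each pair
  have hrch12 : ∀ a ∈ s, ∀ b ∈ s, Rch {s(x,y), s(y,z)} a b := by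
    have hub : ∀ a ∈ s, Rch {s(x,y), s(y,z)} a y := by
      intro a ha
      rcases (hseq a).mp ha with rfl | rfl | rfl
      · exact Rch.single hxy (by simp)
      · exact Rch.refl
      · exact Rch.single (Ne.symm hyz) (by rw [Sym2.eq_swap]; simp)
    exact fun a ha b hb => (hub a ha).trans (hub b hb).symm
  have hrch23 : ∀ a ∈ s, ∀ b ∈ s, Rch {s(y,z), s(x,z)} a b := by
    have hub : ∀ a ∈ s, Rch {s(y,z), s(x,z)} a z := by
      intro a ha
      rcases (hseq a).mp ha with rfl | rfl | rfl
      · exact Rch.single hxz (by simp)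
      · exact Rch.single hyz (by simp)
      · exact Rch.refl
    exact fun a ha b hb => (hub a ha).trans (hub b hb).symm
  have hrch13 : ∀ a ∈ s, ∀ b ∈ s, Rch {s(x,y), s(x,z)} a b := by
    have hub : ∀ a ∈ s, Rch {s(x,y), s(x,z)} a x := by
      intro a ha
      rcases (hseq a).mp ha with rfl | rfl | rfl
      · exact Rch.refl
      · exact Rch.single (Ne.symm hxy) (by rw [Sym2.eq_swap]; simp)
      · exact Rch.single (Ne.symm hxz) (by rw [Sym2.eq_swap]; simp)
    exact fun a ha b hb => (hub a ha).trans (hub b hb).symm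
  have hsub : ∀ e f : Sym2 (Fin N), e ∈ G.edgeSet → f ∈ G.edgeSet →
      ↑({e, f} : Finset (Sym2 (Fin N))) ⊆ G.edgeSet := by
    intro e f he hf t ht
    simp only [Finset.coe_insert, Finset.coe_singleton, Set.mem_insert_iff,
      Set.mem_singleton_iff] at ht
    rcases ht with rfl | rfl <;> assumption
  have he1 : s(x,y) ∈ G.edgeSet := by rw [hE]; simp
  have he2 : s(y,z) ∈ G.edgeSet := by rw [hE]; simp
  have he3 : s(x,z) ∈ G.edgeSet := by rw [hE]; simp
  have hcard2 : ∀ e f : Sym2 (Fin N), e ≠ f → ({e, f} : Finset (Sym2 (Fin N))).card = 2 := by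
    intro e f hef
    rw [Finset.card_insert_of_notMem (by simp [hef])]
    simp
  refine ⟨[{s(x,y), s(y,z)}, {s(y,z), s(x,z)}, {s(x,y), s(x,z)}], ?_, ?_, ?_⟩
  · -- nodup
    have h12 : ({s(x,y), s(y,z)} : Finset (Sym2 (Fin N))) ≠ {s(y,z), s(x,z)} := by
      intro hc
      have : s(x,y) ∈ ({s(y,z), s(x,z)} : Finset (Sym2 (Fin N))) := by
        rw [← hc]; simp
      simp only [Finset.mem_insert, Finset.mem_singleton] at this
      tauto
    have h13 : ({s(x,y), s(y,z)} : Finset (Sym2 (Fin N))) ≠ {s(x,y), s(x,z)} := by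
      intro hc
      have : s(y,z) ∈ ({s(x,y), s(x,z)} : Finset (Sym2 (Fin N))) := by
        rw [← hc]; simp
      simp only [Finset.mem_insert, Finset.mem_singleton] at this
      rcases this with h | h
      · exact hne12 h.symm
      · exact hne23 h
    have h23 : ({s(y,z), s(x,z)} : Finset (Sym2 (Fin N))) ≠ {s(x,y), s(x,z)} := by
      intro hc
      have : s(y,z) ∈ ({s(x,y), s(x,z)} : Finset (Sym2 (Fin N))) := by
        rw [← hc]; simp
      simp only [Finset.mem_insert, Finset.mem_singleton] at this
      rcases this with h | h
      · exact hne12 h.symm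
      · exact hne23 h
    simp [h12, h13, h23]
  · -- membership
    intro T
    simp only [List.mem_cons, List.mem_singleton, List.not_mem_nil, or_false]
    constructor
    · rintro (rfl | rfl | rfl)
      · exact ⟨hsub _ _ he1 he2, by rw [hcard2 _ _ hne12, hs3], hrch12⟩
      · exact ⟨hsub _ _ he2 he3, by rw [hcard2 _ _ hne23, hs3], hrch23⟩
      · exact ⟨hsub _ _ he1 he3, by rw [hcard2 _ _ hne13, hs3], hrch13⟩
    · rintro ⟨hTsub, hTcard, hTrch⟩
      rw [hs3] at hTcard
      have hTsub' : ∀ t ∈ T, t = s(x,y) ∨ t = s(y,z) ∨ t = s(x,z) := by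
        intro t ht
        have := hTsub ht
        rw [hE] at this
        simpa using this
      by_cases h1 : s(x,y) ∈ T
      · by_cases h2 : s(y,z) ∈ T
        · left
          have h3 : s(x,z) ∉ T := by
            intro h3
            have hsub3 : ({s(x,y), s(y,z), s(x,z)} : Finset (Sym2 (Fin N))) ⊆ T := by
              intro t ht
              simp only [Finset.mem_insert, Finset.mem_singleton] at ht
              rcases ht with rfl | rfl | rfl <;> assumption
            have hc3 : ({s(x,y), s(y,z), s(x,z)} : Finset (Sym2 (Fin N))).card = 3 := by
              rw [Finset.card_insert_of_notMem (by simp [hne12, hne13]),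
                Finset.card_insert_of_notMem (by simp [hne23])]
              simp
            have := Finset.card_le_card hsub3
            omega
          apply Finset.Subset.antisymm
          · intro t ht
            rcases hTsub' t ht with rfl | rfl | rfl
            · simp
            · simp
            · exact absurd ht h3
          · intro t ht
            simp only [Finset.mem_insert, Finset.mem_singleton] at ht
            rcases ht with rfl | rfl <;> assumption
        · right; right
          refine Finset.eq_of_subset_of_card_le ?_ (by rw [hcard2 _ _ hne13]; omega)
          intro t ht
          rcases hTsub' t ht with rfl | rfl | rfl
          · simp
          · exact absurd ht h2
          · simp
      · right; left
        refine Finset.eq_of_subset_of_card_le ?_ (by rw [hcard2 _ _ hne23]; omega)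
        intro t ht
        rcases hTsub' t ht with rfl | rfl | rfl
        · exact absurd ht h1
        · simp
        · simp
  · -- chain
    refine List.isChain_cons_cons.mpr ⟨?_, List.isChain_cons_cons.mpr ⟨?_, List.isChain_singleton _⟩⟩
    · exact ⟨s(x,y), s(x,z), hne13, symmDiff_pair hne12 hne23 hne13,
        x, Sym2.mem_mk_left x y, Sym2.mem_mk_left x z⟩
    · refine ⟨s(y,z), s(x,y), Ne.symm hne12, ?_,
        y, Sym2.mem_mk_left y z, Sym2.mem_mk_right x y⟩
      rw [show ({s(x,y), s(x,z)} : Finset (Sym2 (Fin N))) = {s(x,z), s(x,y)} from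
        Finset.pair_comm _ _]
      exact symmDiff_pair hne23 (Ne.symm hne13) (Ne.symm hne12)

theorem auxGC : ∀ (k : ℕ) (N : ℕ) (s : Finset (Fin N)) (G : SimpleGraph (Fin N)),
    s.card = k → 3 ≤ k →
    (∀ e ∈ G.edgeSet, ∀ x ∈ e, x ∈ s) →
    (∀ x y : Fin N, Consec s x y → G.Adj x y) →
    (∀ e ∈ G.edgeSet, ∀ f ∈ G.edgeSet, ¬ Crossing e f) →
    G.edgeSet.ncard = 2 * k - 3 →
    ∃ L : List (Finset (Sym2 (Fin N))), L.Nodup ∧ (∀ T, T ∈ L ↔ STree G s T) ∧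
      L.Chain' PE := by
  intro k
  induction k using Nat.strong_induction_on with
  | _ k ih =>
  intro N s G hsk hk3 hin hout hnc hcard
  by_cases hk : k = 3
  · exact base_case s G (by omega) hin hout
  have hk4 : 4 ≤ k := by omega
  obtain ⟨u, v, w, huv, hvw, hcuv, hcvw, hadjuw, hear⟩ :=
    exists_ear s G (by omega) hin hnc (by rw [hsk]; exact hcard)
  have huv' : u ≠ v := ne_of_lt huv
  have hvw' : v ≠ w := ne_of_lt hvw
  have huw' : u ≠ w := ne_of_lt (lt_trans huv hvw)
  have hu_s : u ∈ s := hcuv.1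
  have hv_s : v ∈ s := hcuv.2.1
  have hw_s : w ∈ s := hcvw.2.1
  have hAdjuv : G.Adj u v := hout u v hcuv
  have hAdjvw : G.Adj v w := hout v w hcvw
  have heuv : s(u,v) ∈ G.edgeSet := G.mem_edgeSet.mpr hAdjuv
  have hevw : s(v,w) ∈ G.edgeSet := G.mem_edgeSet.mpr hAdjvw
  have heuw : s(u,w) ∈ G.edgeSet := G.mem_edgeSet.mpr hadjuw
  set s' := s.erase v with hs'def
  set G' := G.deleteEdges {s(u,v), s(v,w)} with hG'def
  have hmemG' : ∀ e, e ∈ G'.edgeSet ↔ e ∈ G.edgeSet ∧ e ≠ s(u,v) ∧ e ≠ s(v,w) := by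
    intro e
    rw [hG'def, SimpleGraph.edgeSet_deleteEdges]
    simp only [Set.mem_diff, Set.mem_insert_iff, Set.mem_singleton_iff]
    tauto
  have hu_s' : u ∈ s' := Finset.mem_erase.mpr ⟨huv', hu_s⟩
  have hw_s' : w ∈ s' := Finset.mem_erase.mpr ⟨Ne.symm hvw', hw_s⟩
  have hadjuw' : G'.Adj u w := by
    rw [hG'def, SimpleGraph.deleteEdges_adj]
    refine ⟨hadjuw, ?_⟩
    simp only [Set.mem_insert_iff, Set.mem_singleton_iff]
    push_neg
    exact ⟨(e_ne_13 huv' hvw' huw').symm, (e_ne_23 huv' hvw' huw').symm⟩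
  have hnbu : ∀ z ∈ s, ¬(u < z ∧ z < v) := by
    rcases hcuv.2.2 with ⟨-, h⟩ | ⟨hlt, -⟩
    · exact h
    · exact absurd huv (not_lt.mpr hlt.le)
  have hnbw : ∀ z ∈ s, ¬(v < z ∧ z < w) := by
    rcases hcvw.2.2 with ⟨-, h⟩ | ⟨hlt, -⟩
    · exact h
    · exact absurd hvw (not_lt.mpr hlt.le)
  have hin' : ∀ e ∈ G'.edgeSet, ∀ x ∈ e, x ∈ s' := by
    intro e he x hx
    obtain ⟨heG, hne1, hne2⟩ := (hmemG' e).mp he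
    refine Finset.mem_erase.mpr ⟨?_, hin e heG x hx⟩
    rintro rfl
    rcases hear e heG hx with h | h
    · exact hne1 h
    · exact hne2 h
  have hout'' : ∀ x y : Fin N, Consec s' x y → G'.Adj x y := by
    intro x y hc
    obtain ⟨hx', hy', hd⟩ := hc
    obtain ⟨hxv, hxs⟩ := Finset.mem_erase.mp hx'
    obtain ⟨hyv, hys⟩ := Finset.mem_erase.mp hy'
    have hGadj : Consec s x y → G'.Adj x y := by
      intro hcs
      rw [hG'def, SimpleGraph.deleteEdges_adj]
      refine ⟨hout x y hcs, ?_⟩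
      simp only [Set.mem_insert_iff, Set.mem_singleton_iff]
      push_neg
      constructor
      · intro hcc
        rcases Sym2.eq_iff.mp hcc with ⟨-, h⟩ | ⟨h, -⟩
        · exact absurd h hyv
        · exact absurd h hxv
      · intro hcc
        rcases Sym2.eq_iff.mp hcc with ⟨h, -⟩ | ⟨-, h⟩
        · exact absurd h hxv
        · exact absurd h hyv
    rcases hd with ⟨hxy, hnb⟩ | ⟨hyx, hall⟩
    · by_cases hvb : x < v ∧ v < y
      · have hxu : x = u := by
          rcases lt_trichotomy x u with h | h | h
          · exact absurd ⟨h, lt_trans huv hvb.2⟩ (hnb u hu_s')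
          · exact h
          · exact absurd ⟨h, hvb.1⟩ (hnbu x hxs)
        have hyw : y = w := by
          rcases lt_trichotomy y w with h | h | h
          · exact absurd ⟨hvb.2, h⟩ (hnbw y hys)
          · exact h
          · exact absurd ⟨lt_trans hvb.1 hvw, h⟩ (hnb w hw_s')
        subst hxu; subst hyw
        exact hadjuw'
      · refine hGadj ⟨hxs, hys, Or.inl ⟨hxy, fun z hz hzc => ?_⟩⟩
        have hzv : z ≠ v := fun h => hvb (h ▸ hzc)
        exact hnb z (Finset.mem_erase.mpr ⟨hzv, hz⟩) hzc
    · refine hGadj ⟨hxs, hys, Or.inr ⟨hyx, fun z hz => ?_⟩⟩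
      by_cases hzv : z = v
      · subst hzv
        exact ⟨le_trans (hall u hu_s').1 huv.le, le_trans hvw.le (hall w hw_s').2⟩
      · exact hall z (Finset.mem_erase.mpr ⟨hzv, hz⟩)
  have hnc' : ∀ e ∈ G'.edgeSet, ∀ f ∈ G'.edgeSet, ¬ Crossing e f := by
    intro e he f hf
    exact hnc e ((hmemG' e).mp he).1 f ((hmemG' f).mp hf).1
  have hcard' : G'.edgeSet.ncard = 2 * (k - 1) - 3 := by
    have hpairsub : ({s(u,v), s(v,w)} : Set (Sym2 (Fin N))) ⊆ G.edgeSet := by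
      intro e he
      rcases he with rfl | he
      · exact heuv
      · rw [Set.mem_singleton_iff] at he
        exact he ▸ hevw
    rw [hG'def, SimpleGraph.edgeSet_deleteEdges,
      Set.ncard_diff hpairsub (Set.toFinite _),
      Set.ncard_pair (e_ne_12 huv' hvw' huw'), hcard]
    omega
  have hs'card : s'.card = k - 1 := by
    rw [hs'def, Finset.card_erase_of_mem hv_s, hsk]
  obtain ⟨L', hnd', hmem', hch'⟩ :=
    ih (k - 1) (by omega) N s' G' hs'card (by omega) hin' hout'' hnc' hcard'
  have hSfacts : ∀ S, STree G' s' S →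
      (↑S ⊆ G.edgeSet ∧ (∀ e ∈ S, v ∉ e) ∧ s(u,v) ∉ S ∧ s(v,w) ∉ S) := by
    intro S hS
    obtain ⟨hsub, hcd, hrch⟩ := hS
    have h2 : ∀ e ∈ S, v ∉ e := by
      intro e he hv
      obtain ⟨heG, hne1, hne2⟩ := (hmemG' e).mp (hsub he)
      rcases hear e heG hv with h | h
      · exact hne1 h
      · exact hne2 h
    exact ⟨fun e he => ((hmemG' e).mp (hsub he)).1, h2,
      fun hc => ((hmemG' _).mp (hsub hc)).2.1 rfl,
      fun hc => ((hmemG' _).mp (hsub hc)).2.2 rfl⟩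
  have hP : ∀ S ∈ L', s(u,v) ∉ S ∧ s(v,w) ∉ S := by
    intro S hS
    have := hSfacts S ((hmem' S).mp hS)
    exact ⟨this.2.2.1, this.2.2.2⟩
  -- the "up" constructions
  have up1 : ∀ S, STree G' s' S → STree G s (insert s(u,v) S) := by
    intro S hS
    obtain ⟨hg1, hg2, hg3, hg4⟩ := hSfacts S hS
    obtain ⟨hsub, hcd, hrch⟩ := hS
    rw [hs'card] at hcd
    refine ⟨?_, ?_, ?_⟩
    · rw [Finset.coe_insert]
      exact Set.insert_subset heuv hg1
    · rw [Finset.card_insert_of_notMem hg3, hsk]; omega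
    · have hub : ∀ x ∈ s, Rch (insert s(u,v) S) x u := by
        intro x hx
        by_cases hxv : x = v
        · rw [hxv]
          exact Rch.single (Ne.symm huv')
            (by rw [show s(v,u) = s(u,v) from Sym2.eq_swap]; exact Finset.mem_insert_self _ _)
        · exact (hrch x (Finset.mem_erase.mpr ⟨hxv, hx⟩) u hu_s').mono (Finset.subset_insert _ _)
      exact fun x hx y hy => (hub x hx).trans (hub y hy).symm
  have up2 : ∀ S, STree G' s' S → STree G s (insert s(v,w) S) := by
    intro S hS
    obtain ⟨hg1, hg2, hg3, hg4⟩ := hSfacts S hS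
    obtain ⟨hsub, hcd, hrch⟩ := hS
    rw [hs'card] at hcd
    refine ⟨?_, ?_, ?_⟩
    · rw [Finset.coe_insert]
      exact Set.insert_subset hevw hg1
    · rw [Finset.card_insert_of_notMem hg4, hsk]; omega
    · have hub : ∀ x ∈ s, Rch (insert s(v,w) S) x w := by
        intro x hx
        by_cases hxv : x = v
        · rw [hxv]
          exact Rch.single hvw' (Finset.mem_insert_self _ _)
        · exact (hrch x (Finset.mem_erase.mpr ⟨hxv, hx⟩) w hw_s').mono (Finset.subset_insert _ _)
      exact fun x hx y hy => (hub x hx).trans (hub y hy).symm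
  have up3 : ∀ S, STree G' s' S → s(u,w) ∈ S →
      STree G s (insert s(u,v) (insert s(v,w) (S.erase s(u,w)))) := by
    intro S hS h3S
    obtain ⟨hg1, hg2, hg3, hg4⟩ := hSfacts S hS
    obtain ⟨hsub, hcd, hrch⟩ := hS
    rw [hs'card] at hcd
    have hvwD : s(v,w) ∉ S.erase s(u,w) := fun hc => hg4 (Finset.erase_subset _ _ hc)
    have huvD : s(u,v) ∉ insert s(v,w) (S.erase s(u,w)) := by
      simp only [Finset.mem_insert]
      push_neg
      exact ⟨e_ne_12 huv' hvw' huw', fun hc => hg3 (Finset.erase_subset _ _ hc)⟩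
    have hDT : S.erase s(u,w) ⊆ insert s(u,v) (insert s(v,w) (S.erase s(u,w))) :=
      fun e he => Finset.mem_insert_of_mem (Finset.mem_insert_of_mem he)
    refine ⟨?_, ?_, ?_⟩
    · rw [Finset.coe_insert, Finset.coe_insert]
      exact Set.insert_subset heuv (Set.insert_subset hevw
        (fun e he => hg1 (Finset.erase_subset _ _ he)))
    · rw [Finset.card_insert_of_notMem huvD, Finset.card_insert_of_notMem hvwD, hsk]
      have := Finset.card_erase_add_one h3S
      omega
    · have hTuw : Rch (insert s(u,v) (insert s(v,w) (S.erase s(u,w)))) u w :=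
        (Rch.single huv' (Finset.mem_insert_self _ _)).trans
          (Rch.single hvw' (Finset.mem_insert_of_mem (Finset.mem_insert_self _ _)))
      have hub : ∀ x ∈ s, Rch (insert s(u,v) (insert s(v,w) (S.erase s(u,w)))) x u := by
        intro x hx
        by_cases hxv : x = v
        · rw [hxv]
          exact Rch.single (Ne.symm huv')
            (by rw [show s(v,u) = s(u,v) from Sym2.eq_swap]; exact Finset.mem_insert_self _ _)
        · have hx0 := hrch x (Finset.mem_erase.mpr ⟨hxv, hx⟩) u hu_s'
          rw [← Finset.insert_erase h3S] at hx0
          rcases (Rch_insert_iff huw').mp hx0 with h | ⟨ha, hb⟩ | ⟨ha, hb⟩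
          · exact h.mono hDT
          · exact ha.mono hDT
          · exact (ha.mono hDT).trans hTuw.symm
      exact fun x hx y hy => (hub x hx).trans (hub y hy).symm
  -- the "down" decomposition
  have down : ∀ T, STree G s T → ∃ S ∈ L', T ∈ fib u v w true S := by
    intro T hT
    obtain ⟨hTsub, hTcard, hTrch⟩ := hT
    rw [hsk] at hTcard
    have hTv : ∀ e ∈ T, v ∈ e → e = s(u,v) ∨ e = s(v,w) :=
      fun e he hv => hear e (hTsub he) hv
    have hone : s(u,v) ∈ T ∨ s(v,w) ∈ T := by
      have hvu0 := hTrch v hv_s u hu_s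
      rcases Relation.ReflTransGen.cases_head hvu0 with h | ⟨b, ⟨hne, hm⟩, -⟩
      · exact absurd h.symm huv'
      · rcases hTv _ hm (Sym2.mem_mk_left _ _) with h | h
        · exact Or.inl (h ▸ hm)
        · exact Or.inr (h ▸ hm)
    by_cases h1 : s(u,v) ∈ T <;> by_cases h2 : s(v,w) ∈ T
    · -- both ear edges present
      have huwT : s(u,w) ∉ T := by
        intro huwT
        have hvwA0 : s(v,w) ∈ T.erase s(u,v) :=
          Finset.mem_erase.mpr ⟨(e_ne_12 huv' hvw' huw').symm, h2⟩
        have huwA0 : s(u,w) ∈ T.erase s(u,v) :=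
          Finset.mem_erase.mpr ⟨(e_ne_13 huv' hvw' huw').symm, huwT⟩
        have hvu : Rch (T.erase s(u,v)) v u :=
          (Rch.single hvw' hvwA0).trans
            (Rch.single (Ne.symm huw')
              (by rw [show s(w,u) = s(u,w) from Sym2.eq_swap]; exact huwA0))
        have hall : ∀ x ∈ s, ∀ y ∈ s, Rch (T.erase s(u,v)) x y := by
          intro x hx y hy
          have hxy := hTrch x hx y hy
          rw [← Finset.insert_erase h1] at hxy
          rcases (Rch_insert_iff huv').mp hxy with h | ⟨ha, hb⟩ | ⟨ha, hb⟩
          · exact h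
          · exact ha.trans (hvu.symm.trans hb)
          · exact ha.trans (hvu.trans hb)
        have hbd := card_bound (T.erase s(u,v)).card (T.erase s(u,v)) s (le_refl _)
          (fun e he x hx => hin e (hTsub (Finset.erase_subset _ _ he)) x hx) hall
        have := Finset.card_erase_add_one h1
        rw [hsk] at hbd
        omega
      have hvwTe : s(v,w) ∈ T.erase s(u,v) :=
        Finset.mem_erase.mpr ⟨(e_ne_12 huv' hvw' huw').symm, h2⟩
      have hTD : T = insert s(u,v) (insert s(v,w) ((T.erase s(u,v)).erase s(v,w))) := by
        rw [Finset.insert_erase hvwTe, Finset.insert_erase h1]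
      have huvD : s(u,v) ∉ (T.erase s(u,v)).erase s(v,w) :=
        fun hc => Finset.notMem_erase _ _ (Finset.erase_subset _ _ hc)
      have hvwD : s(v,w) ∉ (T.erase s(u,v)).erase s(v,w) := Finset.notMem_erase _ _
      have huwD : s(u,w) ∉ (T.erase s(u,v)).erase s(v,w) :=
        fun hc => huwT (Finset.erase_subset _ _ (Finset.erase_subset _ _ hc))
      have hDv : ∀ e ∈ (T.erase s(u,v)).erase s(v,w), v ∉ e := by
        intro e he hv
        have heT : e ∈ T := Finset.erase_subset _ _ (Finset.erase_subset _ _ he)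
        rcases hTv e heT hv with h | h
        · exact huvD (h ▸ he)
        · exact hvwD (h ▸ he)
      have hDiso : ∀ z, Rch ((T.erase s(u,v)).erase s(v,w)) v z → v = z :=
        fun z h => Rch.isolated hDv h
      have hBred : ∀ z z', z ≠ v → z' ≠ v →
          Rch (insert s(v,w) ((T.erase s(u,v)).erase s(v,w))) z z' →
          Rch ((T.erase s(u,v)).erase s(v,w)) z z' := by
        intro z z' hz hz' h
        rcases (Rch_insert_iff hvw').mp h with h' | ⟨ha, hb⟩ | ⟨ha, hb⟩
        · exact h'
        · exact absurd (hDiso z ha.symm).symm hz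
        · exact absurd (hDiso z' hb).symm hz'
      have hBv : ∀ z, z ≠ v →
          Rch (insert s(v,w) ((T.erase s(u,v)).erase s(v,w))) z v →
          Rch ((T.erase s(u,v)).erase s(v,w)) z w := by
        intro z hz h
        rcases (Rch_insert_iff hvw').mp h with h' | ⟨ha, hb⟩ | ⟨ha, hb⟩
        · exact absurd (hDiso z h'.symm).symm hz
        · exact absurd (hDiso z ha.symm).symm hz
        · exact ha
      set S := insert s(u,w) ((T.erase s(u,v)).erase s(v,w)) with hSdef
      have hDS : (T.erase s(u,v)).erase s(v,w) ⊆ S := Finset.subset_insert _ _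
      have hSrch : ∀ x ∈ s', ∀ y ∈ s', Rch S x y := by
        intro x hx' y hy'
        obtain ⟨hxv, hxs⟩ := Finset.mem_erase.mp hx'
        obtain ⟨hyv, hys⟩ := Finset.mem_erase.mp hy'
        have hxy := hTrch x hxs y hys
        rw [hTD] at hxy
        have hsw : Rch S u w := Rch.single huw' (Finset.mem_insert_self _ _)
        rcases (Rch_insert_iff huv').mp hxy with h | ⟨ha, hb⟩ | ⟨ha, hb⟩
        · exact (hBred x y hxv hyv h).mono hDS
        · have hh1 : Rch ((T.erase s(u,v)).erase s(v,w)) x u := hBred x u hxv huv' ha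
          have hh2 : Rch ((T.erase s(u,v)).erase s(v,w)) y w := hBv y hyv hb.symm
          exact ((hh1.mono hDS).trans hsw).trans (hh2.mono hDS).symm
        · have hh1 : Rch ((T.erase s(u,v)).erase s(v,w)) x w := hBv x hxv ha
          have hh2 : Rch ((T.erase s(u,v)).erase s(v,w)) u y := hBred u y huv' hyv hb
          exact ((hh1.mono hDS).trans hsw.symm).trans (hh2.mono hDS)
      have hScard : S.card + 1 = s'.card := by
        rw [hSdef, Finset.card_insert_of_notMem huwD]
        have e1 := Finset.card_erase_add_one h1
        have e2 := Finset.card_erase_add_one hvwTe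
        rw [hs'card]
        omega
      have hSsub : ↑S ⊆ G'.edgeSet := by
        intro e he
        rcases Finset.mem_insert.mp (Finset.mem_coe.mp he) with rfl | heD
        · exact (hmemG' _).mpr ⟨heuw, (e_ne_13 huv' hvw' huw').symm,
            (e_ne_23 huv' hvw' huw').symm⟩
        · refine (hmemG' _).mpr ⟨hTsub (Finset.mem_coe.mpr
            (Finset.erase_subset _ _ (Finset.erase_subset _ _ heD))), ?_, ?_⟩
          · exact fun hc => huvD (hc ▸ heD)
          · exact fun hc => hvwD (hc ▸ heD)
      refine ⟨S, (hmem' S).mpr ⟨hSsub, hScard, hSrch⟩, ?_⟩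
      rw [mem_fib]
      refine Or.inr (Or.inr ⟨Finset.mem_insert_self _ _, ?_⟩)
      rw [hSdef, Finset.erase_insert huwD]
      exact hTD
    · -- only s(u,v)
      set S := T.erase s(u,v) with hSdef
      have hSv : ∀ e ∈ S, v ∉ e := by
        intro e he hv
        rcases hTv e (Finset.erase_subset _ _ he) hv with h | h
        · exact Finset.notMem_erase _ _ (h ▸ he)
        · exact h2 (h ▸ Finset.erase_subset _ _ he)
      have hSiso : ∀ z, Rch S v z → v = z := fun z h => Rch.isolated hSv h
      have hSrch : ∀ x ∈ s', ∀ y ∈ s', Rch S x y := by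
        intro x hx' y hy'
        obtain ⟨hxv, hxs⟩ := Finset.mem_erase.mp hx'
        obtain ⟨hyv, hys⟩ := Finset.mem_erase.mp hy'
        have hxy := hTrch x hxs y hys
        rw [← Finset.insert_erase h1] at hxy
        rcases (Rch_insert_iff huv').mp hxy with h | ⟨ha, hb⟩ | ⟨ha, hb⟩
        · exact h
        · exact absurd (hSiso y hb).symm hyv
        · exact absurd (hSiso x ha.symm).symm hxv
      have hScard : S.card + 1 = s'.card := by
        have hsc := Finset.card_erase_add_one h1
        rw [← hSdef] at hsc
        rw [hs'card]
        omega
      have hSsub : ↑S ⊆ G'.edgeSet := by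
        intro e he
        have heS := Finset.mem_coe.mp he
        refine (hmemG' _).mpr ⟨hTsub (Finset.mem_coe.mpr (Finset.erase_subset _ _ heS)),
          ?_, ?_⟩
        · exact fun hc => Finset.notMem_erase _ _ (hc ▸ heS)
        · exact fun hc => h2 (hc ▸ Finset.erase_subset _ _ heS)
      refine ⟨S, (hmem' S).mpr ⟨hSsub, hScard, hSrch⟩, ?_⟩
      rw [mem_fib]
      exact Or.inl (by rw [hSdef, Finset.insert_erase h1])
    · -- only s(v,w)
      set S := T.erase s(v,w) with hSdef
      have hSv : ∀ e ∈ S, v ∉ e := by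
        intro e he hv
        rcases hTv e (Finset.erase_subset _ _ he) hv with h | h
        · exact h1 (h ▸ Finset.erase_subset _ _ he)
        · exact Finset.notMem_erase _ _ (h ▸ he)
      have hSiso : ∀ z, Rch S v z → v = z := fun z h => Rch.isolated hSv h
      have hSrch : ∀ x ∈ s', ∀ y ∈ s', Rch S x y := by
        intro x hx' y hy'
        obtain ⟨hxv, hxs⟩ := Finset.mem_erase.mp hx'
        obtain ⟨hyv, hys⟩ := Finset.mem_erase.mp hy'
        have hxy := hTrch x hxs y hys
        rw [← Finset.insert_erase h2] at hxy
        rcases (Rch_insert_iff hvw').mp hxy with h | ⟨ha, hb⟩ | ⟨ha, hb⟩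
        · exact h
        · exact absurd (hSiso x ha.symm).symm hxv
        · exact absurd (hSiso y hb).symm hyv
      have hScard : S.card + 1 = s'.card := by
        have hsc := Finset.card_erase_add_one h2
        rw [← hSdef] at hsc
        rw [hs'card]
        omega
      have hSsub : ↑S ⊆ G'.edgeSet := by
        intro e he
        have heS := Finset.mem_coe.mp he
        refine (hmemG' _).mpr ⟨hTsub (Finset.mem_coe.mpr (Finset.erase_subset _ _ heS)),
          ?_, ?_⟩
        · exact fun hc => h1 (hc ▸ Finset.erase_subset _ _ heS)
        · exact fun hc => Finset.notMem_erase _ _ (hc ▸ heS)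
      refine ⟨S, (hmem' S).mpr ⟨hSsub, hScard, hSrch⟩, ?_⟩
      rw [mem_fib]
      exact Or.inr (Or.inl (by rw [hSdef, Finset.insert_erase h2]))
    · rcases hone with h | h
      · exact absurd h h1
      · exact absurd h h2
  refine ⟨glue u v w true L', glue_nodup huv' hvw' huw' true L' hnd' hP, ?_,
    glue_chain huv' hvw' huw' true L' hch' hP⟩
  intro T
  rw [mem_glue]
  constructor
  · rintro ⟨S, hSl, hTf⟩
    have hSS := (hmem' S).mp hSl
    rcases mem_fib.mp hTf with rfl | rfl | ⟨h3, rfl⟩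
    · exact up1 S hSS
    · exact up2 S hSS
    · exact up3 S hSS h3
  · intro hT
    exact down T hT

lemma stree_univ_iff {N : ℕ} (hN : 0 < N) (G : SimpleGraph (Fin N)) (T : Finset (Sym2 (Fin N))) :
    STree G Finset.univ T ↔ IsSpanningTree G T := by
  classical
  constructor
  · rintro ⟨hsub, hcd, hrch⟩
    have hconn : (SimpleGraph.fromEdgeSet (↑T : Set (Sym2 (Fin N)))).Connected := by
      rw [SimpleGraph.connected_iff]
      refine ⟨fun x y => ?_, ⟨⟨0, hN⟩⟩⟩
      rw [SimpleGraph.reachable_iff_reflTransGen]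
      refine Relation.ReflTransGen.mono ?_ _ _ (hrch x (Finset.mem_univ x) y (Finset.mem_univ y))
      rintro a b ⟨hne, hm⟩
      exact (SimpleGraph.fromEdgeSet_adj _).mpr ⟨hm, hne⟩
    refine ⟨hsub, hconn, ?_⟩
    rw [SimpleGraph.isAcyclic_iff_forall_edge_isBridge]
    intro e he
    induction e using Sym2.inductionOn with
    | hf x y =>
    rw [SimpleGraph.edgeSet_fromEdgeSet] at he
    obtain ⟨heT, hnd⟩ := he
    have hxy : x ≠ y := fun hc => hnd (by simp [hc])
    have heT' : s(x,y) ∈ T := heT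
    rw [SimpleGraph.isBridge_iff]
    intro hreach
    have hrxy : Rch (T.erase s(x,y)) x y := by
      rw [SimpleGraph.reachable_iff_reflTransGen] at hreach
      refine Relation.ReflTransGen.mono ?_ _ _ hreach
      intro a b hab
      rw [SimpleGraph.deleteEdges_adj] at hab
      obtain ⟨h1, h2⟩ := hab
      obtain ⟨hm, hne⟩ := (SimpleGraph.fromEdgeSet_adj _).mp h1
      refine ⟨hne, Finset.mem_erase.mpr ⟨?_, hm⟩⟩
      intro hc
      exact h2 (by rw [hc]; exact Set.mem_singleton _)
    have hallp : ∀ a ∈ (Finset.univ : Finset (Fin N)), ∀ b ∈ (Finset.univ : Finset (Fin N)),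
        Rch (T.erase s(x,y)) a b := by
      intro a _ b _
      have h0 := hrch a (Finset.mem_univ a) b (Finset.mem_univ b)
      rw [← Finset.insert_erase heT'] at h0
      rcases (Rch_insert_iff hxy).mp h0 with h | ⟨ha, hb⟩ | ⟨ha, hb⟩
      · exact h
      · exact (ha.trans hrxy).trans hb
      · exact (ha.trans hrxy.symm).trans hb
    have hbd := card_bound (T.erase s(x,y)).card (T.erase s(x,y)) Finset.univ (le_refl _)
      (fun e _ z _ => Finset.mem_univ z) hallp
    have hce := Finset.card_erase_add_one heT'
    rw [Finset.card_univ, Fintype.card_fin] at hbd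
    rw [Finset.card_univ, Fintype.card_fin] at hcd
    omega
  · rintro ⟨hsub, hconn, hacy⟩
    haveI : Fintype ((SimpleGraph.fromEdgeSet (↑T : Set (Sym2 (Fin N)))).edgeSet) :=
      Set.Finite.fintype (Set.toFinite _)
    have htree : (SimpleGraph.fromEdgeSet (↑T : Set (Sym2 (Fin N)))).IsTree := ⟨hconn, hacy⟩
    have hcards := htree.card_edgeFinset
    have hes : (SimpleGraph.fromEdgeSet (↑T : Set (Sym2 (Fin N)))).edgeSet = ↑T := by
      rw [SimpleGraph.edgeSet_fromEdgeSet]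
      ext e
      simp only [Set.mem_diff, Set.mem_setOf_eq]
      exact ⟨fun h => h.1, fun h => ⟨h, SimpleGraph.not_isDiag_of_mem_edgeSet G (hsub h)⟩⟩
    have hef : (SimpleGraph.fromEdgeSet (↑T : Set (Sym2 (Fin N)))).edgeFinset.card = T.card := by
      rw [SimpleGraph.edgeFinset, Set.toFinset_congr hes]
      simp
    refine ⟨hsub, ?_, ?_⟩
    · rw [Finset.card_univ, Fintype.card_fin]
      rw [Fintype.card_fin] at hcards
      omega
    · intro x _ y _
      have hre := hconn.preconnected x y
      rw [SimpleGraph.reachable_iff_reflTransGen] at hre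
      refine Relation.ReflTransGen.mono ?_ _ _ hre
      intro a b hab
      obtain ⟨hm, hne⟩ := (SimpleGraph.fromEdgeSet_adj _).mp hab
      exact ⟨hne, hm⟩

end OPT
/-- Every outerplane triangulation of the polygon on `n ≥ 3` vertices (all outer-cycle
edges present, pairwise non-crossing edges, exactly `2n - 3` edges in total) admits a
pivot-exchange Gray code of its spanning trees: a listing of all spanning trees, each
exactly once, in which any two consecutive trees differ in an exchange of two edges
sharing an end vertex. -/
theorem outerplane_triangulation_pivot_gray_code (n : ℕ) (hn : 3 ≤ n)
    (G : SimpleGraph (Fin n))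
    (hout : ∀ u v : Fin n, (u.val + 1) % n = v.val → G.Adj u v)
    (hnc : ∀ e ∈ G.edgeSet, ∀ f ∈ G.edgeSet, ¬ Crossing e f)
    (hcard : G.edgeSet.ncard = 2 * n - 3) :
    ∃ L : List (Finset (Sym2 (Fin n))),
      L.Nodup ∧
      (∀ T, T ∈ L ↔ IsSpanningTree G T) ∧
      L.Chain' PivotExchange := by
  have h0 : 0 < n := by omega
  have hcons : ∀ x y : Fin n, OPT.Consec Finset.univ x y → G.Adj x y := by
    intro x y hc
    obtain ⟨-, -, hd⟩ := hc
    rcases hd with ⟨hlt, hnb⟩ | ⟨hlt, hall⟩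
    · apply hout
      have hxy := Fin.lt_def.mp hlt
      have hyn := y.isLt
      have hyx : y.val = x.val + 1 := by
        by_contra hc2
        have hy : x.val + 1 < y.val := by omega
        have hz1 : x.val + 1 < n := by omega
        refine hnb ⟨x.val + 1, hz1⟩ (Finset.mem_univ _) ⟨?_, ?_⟩
        · exact Fin.lt_def.mpr (by simp)
        · exact Fin.lt_def.mpr (by simpa using hy)
      rw [hyx]
      exact Nat.mod_eq_of_lt (by omega)
    · apply hout
      have hy0 : y.val = 0 := by
        have h2 := Fin.le_def.mp (hall ⟨0, h0⟩ (Finset.mem_univ _)).1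
        simpa using h2
      have hxn : x.val = n - 1 := by
        have := (hall ⟨n - 1, by omega⟩ (Finset.mem_univ _)).2
        have h2 := Fin.le_def.mp this
        have := x.isLt
        simp at h2
        omega
      rw [hxn, hy0]
      have h1 : n - 1 + 1 = n := by omega
      rw [h1, Nat.mod_self]
  have hcu : (Finset.univ : Finset (Fin n)).card = n := by
    rw [Finset.card_univ, Fintype.card_fin]
  obtain ⟨L, hnd, hmem, hch⟩ := OPT.auxGC n n Finset.univ G hcu hn
    (fun e _ x _ => Finset.mem_univ x) hcons hnc hcard
  refine ⟨L, hnd, ?_, ?_⟩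
  · intro T
    rw [hmem T, OPT.stree_univ_iff h0]
  · exact hch
end

section
/- Let G be an outerplane triangulation of the polygon on n ≥ 3 vertices. There exists a bijective edge labeling ℓ : E(G) → {1, …, 2n−3} with the following property: for every spanning tree T of G and every edge exchange {e, f} for T with ℓ(e) < ℓ(f), there is an edge d of G with ℓ(d) < ℓ(f) such that d and f share an end vertex, exactly one of d, f belongs to T, and T △ {d, f} is again a spanning tree of G. -/
/-- `{e, f}` is an edge exchange for the spanning tree `T` of `G`: both are edges of
`G`, exactly one of them belongs to `T`, and `T △ {e, f}` is again a spanning tree. -/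
def IsEdgeExchange {V : Type*} [DecidableEq V] (G : SimpleGraph V)
    (T : Finset (Sym2 V)) (e f : Sym2 V) : Prop :=
  e ∈ G.edgeSet ∧ f ∈ G.edgeSet ∧ e ≠ f ∧ (e ∈ T ↔ f ∉ T) ∧
    IsSpanningTree G (symmDiff T {e, f})

open SimpleGraph
set_option linter.unusedSectionVars false
set_option maxHeartbeats 1600000

namespace OPT

variable {V : Type*} [DecidableEq V]

lemma reach_transfer {H H' : SimpleGraph V} (h : ∀ u v : V, H.Adj u v → H'.Reachable u v)
    {u v : V} (hr : H.Reachable u v) : H'.Reachable u v := by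
  obtain ⟨p⟩ := hr
  induction p with
  | nil => exact Reachable.refl _
  | cons ha _ ih => exact (h _ _ ha).trans ih

lemma fes_sdiff (F : Finset (Sym2 V)) (g : Sym2 V) :
    SimpleGraph.fromEdgeSet (↑F : Set (Sym2 V)) \ SimpleGraph.fromEdgeSet {g}
      = SimpleGraph.fromEdgeSet (↑(F.erase g) : Set (Sym2 V)) := by
  ext u v
  simp only [sdiff_adj, fromEdgeSet_adj, Finset.coe_erase, Set.mem_diff,
    Set.mem_singleton_iff, Finset.mem_coe]
  tauto

/-- removing an edge of an acyclic graph separates its endpoints -/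
lemma acyc_sep {F : Finset (Sym2 V)} (hacyc : (SimpleGraph.fromEdgeSet (↑F : Set (Sym2 V))).IsAcyclic)
    {x y : V} (hxy : x ≠ y) (hmem : s(x, y) ∈ F) :
    ¬ (SimpleGraph.fromEdgeSet (↑(F.erase s(x,y)) : Set (Sym2 V))).Reachable x y := by
  have hb := (isAcyclic_iff_forall_adj_isBridge.mp hacyc)
    (show (SimpleGraph.fromEdgeSet (↑F : Set (Sym2 V))).Adj x y by
      rw [fromEdgeSet_adj]; exact ⟨by exact_mod_cast hmem, hxy⟩)
  rw [isBridge_iff] at hb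
  rw [← fes_sdiff]
  exact hb

/-- every vertex is on the side of `x` or of `y` after removing edge `s(x,y)` -/
lemma sides {F : Finset (Sym2 V)} (hconn : (SimpleGraph.fromEdgeSet (↑F : Set (Sym2 V))).Connected)
    {x y : V} (hmem : s(x, y) ∈ F) (w : V) :
    (SimpleGraph.fromEdgeSet (↑(F.erase s(x,y)) : Set (Sym2 V))).Reachable w x ∨
    (SimpleGraph.fromEdgeSet (↑(F.erase s(x,y)) : Set (Sym2 V))).Reachable w y := by
  set K := SimpleGraph.fromEdgeSet (↑(F.erase s(x,y)) : Set (Sym2 V)) with hK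
  suffices haux : ∀ (t : V) (p : (SimpleGraph.fromEdgeSet (↑F : Set (Sym2 V))).Walk w t),
      (K.Reachable t x ∨ K.Reachable t y) → (K.Reachable w x ∨ K.Reachable w y) by
    obtain ⟨p⟩ := hconn.preconnected w x
    exact haux x p (Or.inl (Reachable.refl _))
  intro t p
  induction p with
  | nil => exact id
  | @cons u u' _ ha p ih =>
    intro hbase
    have hstep : K.Reachable u' x ∨ K.Reachable u' y → K.Reachable u x ∨ K.Reachable u y := by
      intro h'
      by_cases hg : s(u, u') = s(x, y)
      · rw [Sym2.eq_iff] at hg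
        rcases hg with ⟨rfl, rfl⟩ | ⟨rfl, rfl⟩
        · exact Or.inl (Reachable.refl _)
        · exact Or.inr (Reachable.refl _)
      · have hadj : K.Adj u u' := by
          rw [hK, fromEdgeSet_adj]
          rw [fromEdgeSet_adj] at ha
          refine ⟨?_, ha.2⟩
          have : s(u,u') ∈ F.erase s(x,y) := Finset.mem_erase.mpr ⟨hg, by exact_mod_cast ha.1⟩
          exact_mod_cast this
        rcases h' with h' | h'
        · exact Or.inl (hadj.reachable.trans h')
        · exact Or.inr (hadj.reachable.trans h')
    exact hstep (ih hbase)


/-- Remove edge `s(x,y)` from the tree `F`, insert edge `s(p,q)` with `p` on the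
side of `x` and `q` on the side of `y`: result is again a tree. -/
lemma newtree {F : Finset (Sym2 V)}
    (hconn : (SimpleGraph.fromEdgeSet (↑F : Set (Sym2 V))).Connected)
    (hacyc : (SimpleGraph.fromEdgeSet (↑F : Set (Sym2 V))).IsAcyclic)
    {x y p q : V} (hxy : x ≠ y) (hpq : p ≠ q)
    (hg : s(x,y) ∈ F) (hh : s(p,q) ∉ F)
    (hpx : (SimpleGraph.fromEdgeSet (↑(F.erase s(x,y)) : Set (Sym2 V))).Reachable p x)
    (hqy : (SimpleGraph.fromEdgeSet (↑(F.erase s(x,y)) : Set (Sym2 V))).Reachable q y) :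
    (SimpleGraph.fromEdgeSet (↑(insert s(p,q) (F.erase s(x,y))) : Set (Sym2 V))).Connected ∧
    (SimpleGraph.fromEdgeSet (↑(insert s(p,q) (F.erase s(x,y))) : Set (Sym2 V))).IsAcyclic := by
  set K := SimpleGraph.fromEdgeSet (↑(F.erase s(x,y)) : Set (Sym2 V)) with hK
  set N := SimpleGraph.fromEdgeSet (↑(insert s(p,q) (F.erase s(x,y))) : Set (Sym2 V)) with hN
  have hKN : K ≤ N := by
    rw [hK, hN]
    exact fromEdgeSet_mono (by exact_mod_cast Finset.subset_insert _ _)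
  have hsepxy : ¬ K.Reachable x y := acyc_sep hacyc hxy hg
  have hNpq : N.Adj p q := by
    rw [hN, fromEdgeSet_adj]
    exact ⟨by exact_mod_cast Finset.mem_insert_self _ _, hpq⟩
  have hNxy : N.Reachable x y :=
    ((hpx.mono hKN).symm.trans (hNpq.reachable)).trans (hqy.mono hKN)
  constructor
  · have hne : Nonempty V := ⟨x⟩
    refine ⟨fun u v => ?_⟩
    have key : ∀ a b : V, (SimpleGraph.fromEdgeSet (↑F : Set (Sym2 V))).Adj a b → N.Reachable a b := by
      intro a b hab
      rw [fromEdgeSet_adj] at hab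
      by_cases hgab : s(a,b) = s(x,y)
      · rw [Sym2.eq_iff] at hgab
        rcases hgab with ⟨rfl, rfl⟩ | ⟨rfl, rfl⟩
        · exact hNxy
        · exact hNxy.symm
      · refine Adj.reachable ?_
        rw [hN, fromEdgeSet_adj]
        refine ⟨?_, hab.2⟩
        have : s(a,b) ∈ insert s(p,q) (F.erase s(x,y)) :=
          Finset.mem_insert_of_mem (Finset.mem_erase.mpr ⟨hgab, by exact_mod_cast hab.1⟩)
        exact_mod_cast this
    exact reach_transfer key (hconn.preconnected u v)
  · -- acyclicity: s(p,q) is a bridge of N, so no cycle goes through it; then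
    -- any cycle lives in K ≤ fromEdgeSet F, contradicting hacyc
    have hKacyc : K.IsAcyclic := by
      intro v c hc
      have hle : K ≤ SimpleGraph.fromEdgeSet (↑F : Set (Sym2 V)) := by
        rw [hK]
        exact fromEdgeSet_mono (by exact_mod_cast Finset.erase_subset _ _)
      exact hacyc (c.mapLe hle) (hc.mapLe hle)
    have hbridge : N.IsBridge s(p,q) := by
      rw [isBridge_iff]
      show ¬ (N \ fromEdgeSet {s(p,q)}).Reachable p q
      have herase : (insert s(p,q) (F.erase s(x,y))).erase s(p,q) = F.erase s(x,y) :=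
        Finset.erase_insert (fun hmem => hh (Finset.mem_of_mem_erase hmem))
      rw [hN, fes_sdiff, herase]
      intro hreach
      exact hsepxy (((hpx.symm.trans hreach).trans hqy).symm.trans (Reachable.refl _) |>.symm |>.symm
        |> fun h => (hpx.symm.trans (hreach.trans hqy)))
    intro v c hc
    have hpqnot : s(p,q) ∉ c.edges :=
      hbridge.notMem_edges_of_isCycle hc
    have hsub : ∀ e ∈ c.edges, e ∈ K.edgeSet := by
      intro e he
      have h1 : e ∈ N.edgeSet := c.edges_subset_edgeSet he
      rw [hN, edgeSet_fromEdgeSet] at h1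
      rw [hK, edgeSet_fromEdgeSet]
      obtain ⟨h1, h2⟩ := h1
      refine ⟨?_, h2⟩
      have : e ∈ insert s(p,q) (F.erase s(x,y)) := by exact_mod_cast h1
      rcases Finset.mem_insert.mp this with rfl | hmem
      · exact absurd he hpqnot
      · exact_mod_cast hmem
    exact hKacyc (c.transfer K hsub) (hc.transfer hsub)


noncomputable def emin {n : ℕ} (e : Sym2 (Fin n)) : Fin n :=
  Sym2.lift ⟨fun a b => min a b, fun a b => min_comm a b⟩ e

open Classical in
noncomputable def emax {n : ℕ} (e : Sym2 (Fin n)) : Fin n :=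
  Sym2.lift ⟨fun a b => max a b, fun a b => max_comm a b⟩ e

@[simp] lemma emin_mk {n : ℕ} (a b : Fin n) : emin s(a,b) = min a b := rfl
@[simp] lemma emax_mk {n : ℕ} (a b : Fin n) : emax s(a,b) = max a b := rfl

lemma exists_rep {n : ℕ} {e : Sym2 (Fin n)} (h : ¬ e.IsDiag) :
    ∃ a b : Fin n, a < b ∧ e = s(a,b) := by
  induction e with
  | _ x y =>
    rw [Sym2.mk_isDiag_iff] at h
    rcases lt_or_gt_of_ne h with hlt | hgt
    · exact ⟨x, y, hlt, rfl⟩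
    · exact ⟨y, x, hgt, Sym2.eq_swap⟩

lemma rep_emin_emax {n : ℕ} {e : Sym2 (Fin n)} {a b : Fin n} (hab : a < b) (he : e = s(a,b)) :
    emin e = a ∧ emax e = b := by
  subst he
  simp [min_eq_left hab.le, max_eq_right hab.le]

open Classical in
lemma noncross_card_le {n : ℕ} (hn : 3 ≤ n) (S : Finset (Sym2 (Fin n)))
    (hd : ∀ e ∈ S, ¬ e.IsDiag) (hcr : ∀ e ∈ S, ∀ f ∈ S, ¬ Crossing e f) :
    S.card ≤ 2 * n - 3 := by
  classical
  set φ : Sym2 (Fin n) → ℕ := fun e =>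
    if (∃ e' ∈ S, emax e' = emax e ∧ emin e' < emin e) then (n - 1) + (emin e).val
    else (emax e).val with hφ
  have hmaps : ∀ e ∈ S, φ e ∈ Finset.Icc 1 (2 * n - 3) := by
    intro e he
    obtain ⟨a, b, hab, hrep⟩ := exists_rep (hd e he)
    obtain ⟨hmin, hmax⟩ := rep_emin_emax hab hrep
    have hav : a.val < b.val := hab
    have hbv : b.val < n := b.isLt
    rw [hφ]
    dsimp only
    split_ifs with hw
    · obtain ⟨e', he'S, he'max, he'min⟩ := hw
      have h1 : (emin e').val < a.val := by rw [hmin] at he'min; exact he'min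
      rw [hmin]
      simp only [Finset.mem_Icc]
      omega
    · rw [hmax]
      simp only [Finset.mem_Icc]
      omega
  have hinj : Set.InjOn φ S := by
    intro e1 h1 e2 h2 heq
    obtain ⟨a, b, hab, hrep1⟩ := exists_rep (hd e1 h1)
    obtain ⟨c, d, hcd, hrep2⟩ := exists_rep (hd e2 h2)
    obtain ⟨hmin1, hmax1⟩ := rep_emin_emax hab hrep1
    obtain ⟨hmin2, hmax2⟩ := rep_emin_emax hcd hrep2
    rw [hφ] at heq
    dsimp only at heq
    -- helper: a witness forces min ≥ 1
    split_ifs at heq with w1 w2 w2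
    · -- both non-maximal: same min; show same max
      rw [hmin1, hmin2] at heq
      have hac : a = c := by
        apply Fin.ext; omega
      subst hac
      by_contra hne
      have hbd : b ≠ d := by
        intro hbd
        apply hne; rw [hrep1, hrep2, hbd]
      rcases lt_or_gt_of_ne hbd with hlt | hgt
      · -- b < d : e1's witness crosses e2
        obtain ⟨e', he'S, he'max, he'min⟩ := w1
        obtain ⟨a', b', ha'b', hrep'⟩ := exists_rep (hd e' he'S)
        obtain ⟨hmin', hmax'⟩ := rep_emin_emax ha'b' hrep'
        rw [hmax1, hmax'] at he'max
        rw [hmin1, hmin'] at he'min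
        have h2' : a < b' := by rw [he'max]; exact hab
        have h3' : b' < d := by rw [he'max]; exact hlt
        exact hcr e' he'S e2 h2 ⟨a', b', a, d, he'min, h2', h3', hrep', hrep2⟩
      · -- d < b : e2's witness crosses e1
        obtain ⟨e', he'S, he'max, he'min⟩ := w2
        obtain ⟨a', b', ha'b', hrep'⟩ := exists_rep (hd e' he'S)
        obtain ⟨hmin', hmax'⟩ := rep_emin_emax ha'b' hrep'
        rw [hmax2, hmax'] at he'max
        rw [hmin2, hmin'] at he'min
        have h2' : a < b' := by rw [he'max]; exact hcd
        have h3' : b' < b := by rw [he'max]; exact hgt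
        exact hcr e' he'S e1 h1 ⟨a', b', a, b, he'min, h2', h3', hrep', hrep1⟩
    · -- w1 non-max, w2 max: impossible values
      exfalso
      obtain ⟨e', he'S, he'max, he'min⟩ := w1
      rw [hmin1] at heq he'min
      rw [hmax2] at heq
      have : (emin e').val < a.val := he'min
      have : d.val < n := d.isLt
      omega
    · exfalso
      obtain ⟨e', he'S, he'max, he'min⟩ := w2
      rw [hmin2] at heq he'min
      rw [hmax1] at heq
      have : (emin e').val < c.val := he'min
      have : b.val < n := b.isLt
      omega
    · -- both maximal: same max; show same min
      rw [hmax1, hmax2] at heq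
      have hbd : b = d := Fin.ext heq
      subst hbd
      by_contra hne
      have hac : a ≠ c := by
        intro hac; apply hne; rw [hrep1, hrep2, hac]
      rcases lt_or_gt_of_ne hac with hlt | hgt
      · exact w2 ⟨e1, h1, by rw [hmax1, hmax2], by rw [hmin1, hmin2]; exact hlt⟩
      · exact w1 ⟨e2, h2, by rw [hmax1, hmax2], by rw [hmin1, hmin2]; exact hgt⟩
  calc S.card ≤ (Finset.Icc 1 (2 * n - 3)).card :=
        Finset.card_le_card_of_injOn φ hmaps hinj
    _ = 2 * n - 3 := by rw [Nat.card_Icc]; omega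


/-- lexicographic key of an edge: smaller endpoint first, then *larger* larger endpoint first -/
noncomputable def ekey {n : ℕ} (e : Sym2 (Fin n)) : ℕ :=
  Sym2.lift ⟨fun a b => n * (min a b).val + (n - 1 - (max a b).val),
    fun a b => by simp only [min_comm a b, max_comm a b]⟩ e

lemma ekey_mk {n : ℕ} {a b : Fin n} (hab : a < b) :
    ekey s(a,b) = n * a.val + (n - 1 - b.val) := by
  show n * (min a b).val + (n - 1 - (max a b).val) = _
  rw [min_eq_left hab.le, max_eq_right hab.le]

lemma ekey_lt_iff {n : ℕ} {a b x y : Fin n} (hab : a < b) (hxy : x < y) :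
    ekey s(a,b) < ekey s(x,y) ↔ (a < x ∨ (a = x ∧ y < b)) := by
  rw [ekey_mk hab, ekey_mk hxy]
  have hbn : b.val < n := b.isLt
  have hyn : y.val < n := y.isLt
  have habv : a.val < b.val := hab
  have hxyv : x.val < y.val := hxy
  constructor
  · intro h
    rcases lt_trichotomy a.val x.val with h1 | h1 | h1
    · exact Or.inl h1
    · refine Or.inr ⟨Fin.ext h1, ?_⟩
      rw [h1] at h
      have : n - 1 - b.val < n - 1 - y.val := by omega
      exact (Fin.lt_def.mpr (by omega))
    · exfalso
      have h2 : x.val + 1 ≤ a.val := h1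
      have h3 : n * (x.val + 1) ≤ n * a.val := Nat.mul_le_mul_left n h2
      have h4 : n * (x.val + 1) = n * x.val + n := by ring
      omega
  · intro h
    rcases h with h1 | ⟨h1, h2⟩
    · have h2 : a.val + 1 ≤ x.val := h1
      have h3 : n * (a.val + 1) ≤ n * x.val := Nat.mul_le_mul_left n h2
      have h4 : n * (a.val + 1) = n * a.val + n := by ring
      omega
    · have h1' : a.val = x.val := by rw [h1]
      have h2' : y.val < b.val := h2
      rw [h1']
      omega

lemma ekey_inj {n : ℕ} {a b x y : Fin n} (hab : a < b) (hxy : x < y)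
    (h : ekey s(a,b) = ekey s(x,y)) : a = x ∧ b = y := by
  have h1 : ¬ (a < x ∨ (a = x ∧ y < b)) := by
    rw [← ekey_lt_iff hab hxy]; omega
  have h2 : ¬ (x < a ∨ (x = a ∧ b < y)) := by
    rw [← ekey_lt_iff hxy hab]; omega
  push_neg at h1 h2
  have hax : a = x := le_antisymm h2.1 h1.1
  refine ⟨hax, le_antisymm (h1.2 hax) (h2.2 hax.symm)⟩


section Apex

variable {n : ℕ} (hn : 3 ≤ n) (G : SimpleGraph (Fin n))
  (hout : ∀ u v : Fin n, (u.val + 1) % n = v.val → G.Adj u v)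
  (hnc : ∀ e ∈ G.edgeSet, ∀ f ∈ G.edgeSet, ¬ Crossing e f)
  (hcard : G.edgeSet.ncard = 2 * n - 3)

include hn hout in
lemma succ_edge {a b : Fin n} (h : a.val + 1 = b.val) : s(a, b) ∈ G.edgeSet := by
  rw [SimpleGraph.mem_edgeSet]
  exact hout a b (by rw [Nat.mod_eq_of_lt (h ▸ b.isLt)]; exact h)

include hn hout in
lemma root_edge : s((⟨0, by omega⟩ : Fin n), (⟨n-1, by omega⟩ : Fin n)) ∈ G.edgeSet := by
  rw [Sym2.eq_swap, SimpleGraph.mem_edgeSet]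
  refine hout _ _ ?_
  show (n - 1 + 1) % n = 0
  have h1 : n - 1 + 1 = n := by omega
  rw [h1, Nat.mod_self]

include hn hout hnc hcard in
lemma inner_apex {u v : Fin n} (huv : s(u,v) ∈ G.edgeSet) (hlt : u < v)
    (hgap : u.val + 1 < v.val) :
    ∃ z : Fin n, u < z ∧ z < v ∧ s(u,z) ∈ G.edgeSet ∧ s(z,v) ∈ G.edgeSet := by
  classical
  set W : Finset (Fin n) := Finset.univ.filter
    (fun w => u < w ∧ w < v ∧ s(u,w) ∈ G.edgeSet) with hW
  have hWne : W.Nonempty := by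
    refine ⟨⟨u.val + 1, by omega⟩, ?_⟩
    rw [hW, Finset.mem_filter]
    refine ⟨Finset.mem_univ _, ?_, ?_, ?_⟩
    · exact Fin.mk_lt_mk.mpr (by omega)
    · exact Fin.mk_lt_mk.mpr hgap
    · exact succ_edge hn G hout rfl
  set Z := W.max' hWne with hZ
  have hZW : Z ∈ W := W.max'_mem hWne
  rw [hW, Finset.mem_filter] at hZW
  obtain ⟨-, huZ, hZv, heuZ⟩ := hZW
  by_cases hZvE : s(Z, v) ∈ G.edgeSet
  · exact ⟨Z, huZ, hZv, heuZ, hZvE⟩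
  exfalso
  -- add the edge s(Z,v); still noncrossing, contradiction with the bound
  have hfin : G.edgeSet.Finite := Set.toFinite _
  set Ef := hfin.toFinset with hEf
  have hmemEf : ∀ e, e ∈ Ef ↔ e ∈ G.edgeSet := fun e => hfin.mem_toFinset
  have hEcard : Ef.card = 2 * n - 3 := by
    rw [← hcard, hEf, Set.ncard_eq_toFinset_card _ hfin]
  have hnew : s(Z,v) ∉ Ef := fun h => hZvE ((hmemEf _).mp h)
  set S := insert s(Z,v) Ef with hS
  have hScard : S.card = 2 * n - 2 := by
    rw [hS, Finset.card_insert_of_notMem hnew, hEcard]; omega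
  have hd : ∀ e ∈ S, ¬ e.IsDiag := by
    intro e he
    rcases Finset.mem_insert.mp he with rfl | he
    · rw [Sym2.mk_isDiag_iff]; exact hZv.ne
    · exact G.not_isDiag_of_mem_edgeSet ((hmemEf _).mp he)
  -- no crossing of any edge with s(Z,v)
  have hcr1 : ∀ f ∈ G.edgeSet, ¬ Crossing s(Z,v) f := by
    rintro f hf ⟨A, B, C, D, h1, h2, h3, hE, hF⟩
    rw [Sym2.eq_iff] at hE
    rcases hE with ⟨rfl, rfl⟩ | ⟨rfl, rfl⟩
    · exact hnc s(u,v) huv f hf ⟨u, v, C, D, huZ.trans h1, h2, h3, rfl, hF⟩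
    · exact absurd (h1.trans h2) (not_lt.mpr hZv.le)
  have hcr2 : ∀ e ∈ G.edgeSet, ¬ Crossing e s(Z,v) := by
    rintro e he ⟨A, B, C, D, h1, h2, h3, hE, hF⟩
    rw [Sym2.eq_iff] at hF
    rcases hF with ⟨rfl, rfl⟩ | ⟨rfl, rfl⟩
    swap
    · exact absurd (h2.trans h3) (not_lt.mpr hZv.le)
    -- A < Z < B < v, e = s(A,B)
    rcases lt_trichotomy A u with hAu | hAu | hAu
    · exact hnc e he s(u,v) huv ⟨A, B, u, v, hAu, huZ.trans h2, h3, hE, rfl⟩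
    · subst hAu
      -- B ∈ W with Z < B, contradicting maximality
      have hBW : B ∈ W := by
        rw [hW, Finset.mem_filter]
        exact ⟨Finset.mem_univ _, huZ.trans h2, h3, hE ▸ he⟩
      exact absurd (W.le_max' B hBW) (not_le.mpr (by rw [← hZ]; exact h2))
    · exact hnc s(u,Z) heuZ e he ⟨u, Z, A, B, hAu, h1, h2, rfl, hE⟩
  have := noncross_card_le hn S hd (by
    intro e he f hf
    rcases Finset.mem_insert.mp he with rfl | he <;> rcases Finset.mem_insert.mp hf with rfl | hf
    · rintro ⟨A, B, C, D, h1, h2, h3, hE, hF⟩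
      rw [Sym2.eq_iff] at hE hF
      have : A < B := h1.trans h2
      have : C < D := h2.trans h3
      rcases hE with ⟨rfl, rfl⟩ | ⟨rfl, rfl⟩ <;> rcases hF with ⟨h4, h5⟩ | ⟨h4, h5⟩ <;> subst h4 <;> subst h5 <;> omega
    · exact hcr1 f ((hmemEf _).mp hf)
    · exact hcr2 e ((hmemEf _).mp he)
    · exact hnc e ((hmemEf _).mp he) f ((hmemEf _).mp hf))
  omega

include hn hout hnc hcard in
lemma outer_apex {x y : Fin n} (hxy : s(x,y) ∈ G.edgeSet) (hlt : x < y)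
    (hroot : ¬(x.val = 0 ∧ y.val = n - 1)) :
    ∃ z : Fin n, (z < x ∨ y < z) ∧ s(x,z) ∈ G.edgeSet ∧ s(y,z) ∈ G.edgeSet := by
  classical
  have hfin : G.edgeSet.Finite := Set.toFinite _
  set Ef := hfin.toFinset with hEf
  have hmemEf : ∀ e, e ∈ Ef ↔ e ∈ G.edgeSet := fun e => hfin.mem_toFinset
  set C : Finset (Sym2 (Fin n)) := Ef.filter
    (fun g => emin g ≤ x ∧ y ≤ emax g ∧ g ≠ s(x,y)) with hC
  have hCne : C.Nonempty := by
    refine ⟨s((⟨0, by omega⟩ : Fin n), (⟨n-1, by omega⟩ : Fin n)), ?_⟩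
    rw [hC, Finset.mem_filter]
    have h0n : (⟨0, by omega⟩ : Fin n) < (⟨n-1, by omega⟩ : Fin n) := by
      rw [Fin.mk_lt_mk]; omega
    obtain ⟨hm1, hm2⟩ := rep_emin_emax h0n rfl
    refine ⟨(hmemEf _).mpr (root_edge hn G hout), ?_, ?_, ?_⟩
    · rw [hm1]; exact Fin.mk_le_of_le_val (by omega)
    · rw [hm2]
      have hy := y.isLt
      exact Fin.le_def.mpr (by show y.val ≤ n - 1; omega)
    · intro hEq
      rw [Sym2.eq_iff] at hEq
      rcases hEq with ⟨h1, h2⟩ | ⟨h1, h2⟩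
      · exact hroot ⟨by rw [← h1], by rw [← h2]⟩
      · have : x.val = n - 1 := by rw [← h2]
        have : y.val = 0 := by rw [← h1]
        omega
  obtain ⟨g, hgC, hgmin⟩ := C.exists_min_image (fun g => (emax g).val - (emin g).val) hCne
  rw [hC, Finset.mem_filter] at hgC
  obtain ⟨hgE, hux, hyv, hgne⟩ := hgC
  have hgE' : g ∈ G.edgeSet := (hmemEf _).mp hgE
  obtain ⟨u, v, huv, hgrep⟩ := exists_rep (G.not_isDiag_of_mem_edgeSet hgE')
  obtain ⟨hm1, hm2⟩ := rep_emin_emax huv hgrep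
  rw [hm1] at hux
  rw [hm2] at hyv
  -- measure of a competitor in C beats g : contradiction helper
  have hbeats : ∀ g' ∈ C, (emax g').val - (emin g').val < (emax g).val - (emin g).val → False := by
    intro g' hg' hlt'
    exact absurd (hgmin g' hg') (not_le.mpr hlt')
  rw [hm1, hm2] at hbeats
  have hgap : u.val + 1 < v.val := by
    rcases Nat.lt_or_ge (u.val + 1) v.val with h | h
    · exact h
    exfalso
    have h1 : u.val < v.val := huv
    have h2 : u.val ≤ x.val := hux
    have h3 : y.val ≤ v.val := hyv
    have h4 : x.val < y.val := hlt
    have hu : u = x := Fin.ext (by omega)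
    have hv : v = y := Fin.ext (by omega)
    exact hgne (by rw [hgrep, hu, hv])
  obtain ⟨z, huz, hzv, hza, hzb⟩ := inner_apex hn G hout hnc hcard (hgrep ▸ hgE') huv hgap
  -- mem-C constructor
  have hmemC : ∀ (a b : Fin n), a < b → s(a,b) ∈ G.edgeSet → a ≤ x → y ≤ b →
      ¬(a = x ∧ b = y) → s(a,b) ∈ C := by
    intro a b hab habE hax hyb hne
    rw [hC, Finset.mem_filter]
    obtain ⟨hma, hmb⟩ := rep_emin_emax hab rfl
    refine ⟨(hmemEf _).mpr habE, by rw [hma]; exact hax, by rw [hmb]; exact hyb, ?_⟩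
    intro hEq
    rw [Sym2.eq_iff] at hEq
    rcases hEq with ⟨h1, h2⟩ | ⟨h1, h2⟩
    · exact hne ⟨h1, h2⟩
    · rw [h1, h2] at hab
      exact absurd (hab.trans hlt) (lt_irrefl _)
  have hmeasC : ∀ (a b : Fin n) (hab : a < b), s(a,b) ∈ C →
      b.val - a.val < v.val - u.val → False := by
    intro a b hab hmem hlt'
    obtain ⟨hma, hmb⟩ := rep_emin_emax hab (rfl : s(a,b) = s(a,b))
    exact hbeats s(a,b) hmem (by rw [hma, hmb]; exact hlt')
  rcases lt_trichotomy z x with hzx | hzx | hzx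
  · -- z < x : s(z,v) is a smaller member of C
    exfalso
    refine hmeasC z v hzv (hmemC z v hzv hzb (le_of_lt hzx) hyv ?_) ?_
    · rintro ⟨h1, -⟩; rw [h1] at hzx; exact absurd hzx (lt_irrefl _)
    · have : u.val < z.val := huz
      omega
  · -- z = x
    rcases lt_trichotomy v y with hvy | hvy | hvy
    · exact absurd hvy (not_lt.mpr hyv)
    · -- v = y : apex u
      refine ⟨u, Or.inl (lt_of_le_of_ne hux ?_), ?_, ?_⟩
      · intro h; rw [h] at huz; rw [hzx] at huz; exact absurd huz (lt_irrefl _)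
      · rw [Sym2.eq_swap, ← hzx]; exact hza
      · rw [Sym2.eq_swap, ← hvy]; exact hgrep ▸ hgE'
    · -- v > y : s(z,v)=s(x,v) smaller member of C
      exfalso
      refine hmeasC z v hzv (hmemC z v hzv hzb (le_of_eq hzx) (le_of_lt hvy) ?_) ?_
      · rintro ⟨-, h2⟩; rw [h2] at hvy; exact absurd hvy (lt_irrefl _)
      · have : u.val < z.val := huz
        omega
  · rcases lt_trichotomy z y with hzy | hzy | hzy
    · -- x < z < y : crossing contradictions
      exfalso
      rcases lt_or_eq_of_le hux with hux' | hux'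
      · exact hnc s(u,z) hza s(x,y) hxy ⟨u, z, x, y, hux', hzx, hzy, rfl, rfl⟩
      · rcases lt_or_eq_of_le hyv with hyv' | hyv'
        · refine hnc s(x,y) hxy s(z,v) hzb ⟨x, y, z, v, hzx, hzy, hyv', rfl, rfl⟩
        · refine hgne ?_
          rw [hgrep, hux', ← hyv']
    · -- z = y
      rcases lt_or_eq_of_le hux with hux' | hux'
      · -- u < x : s(u,z)=s(u,y) smaller member of C
        exfalso
        refine hmeasC u z huz (hmemC u z huz hza hux'.le hzy.ge ?_) ?_
        · rintro ⟨h1, -⟩; rw [h1] at hux'; exact absurd hux' (lt_irrefl _)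
        · have : z.val < v.val := hzv
          omega
      · -- u = x : apex v
        refine ⟨v, Or.inr ?_, ?_, ?_⟩
        · rw [← hzy]; exact hzv
        · rw [← hux']; exact hgrep ▸ hgE'
        · rw [← hzy]; exact hzb
    · -- z > y : s(u,z) smaller member of C
      exfalso
      refine hmeasC u z huz (hmemC u z huz hza hux (le_of_lt hzy) ?_) ?_
      · rintro ⟨-, h2⟩; rw [h2] at hzy; exact absurd hzy (lt_irrefl _)
      · have : z.val < v.val := hzv
        omega

end Apex

lemma symmDiff_pair_s10 {α : Type*} [DecidableEq α] {T : Finset α} {e f : α} (hef : e ≠ f)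
    (he : e ∉ T) (hf : f ∈ T) : symmDiff T {e, f} = insert e (T.erase f) := by
  ext g
  simp only [Finset.mem_symmDiff, Finset.mem_insert, Finset.mem_erase, Finset.mem_singleton]
  by_cases h1 : g = e <;> by_cases h2 : g = f <;>
    first
      | (subst h1; subst h2; simp_all)
      | (try subst h1) <;> (try subst h2) <;> simp_all <;> tauto


end OPT

open OPT

/-- For any outerplane triangulation `G` of the polygon on `n ≥ 3` vertices there is a
bijective edge labeling `ℓ : E(G) → {1, …, 2n-3}` such that for every spanning tree `T`
of `G` and every edge exchange `{e, f}` for `T` with `ℓ e < ℓ f`, there is an edge `d`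
of `G` with `ℓ d < ℓ f` such that `d` and `f` share an end vertex and `{d, f}` is an
edge exchange for `T`. -/
theorem outerplane_triangulation_pivot_alternative (n : ℕ) (hn : 3 ≤ n)
    (G : SimpleGraph (Fin n))
    (hout : ∀ u v : Fin n, (u.val + 1) % n = v.val → G.Adj u v)
    (hnc : ∀ e ∈ G.edgeSet, ∀ f ∈ G.edgeSet, ¬ Crossing e f)
    (hcard : G.edgeSet.ncard = 2 * n - 3) :
    ∃ ℓ : Sym2 (Fin n) → ℕ, Set.BijOn ℓ G.edgeSet (Set.Icc 1 (2 * n - 3)) ∧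
      ∀ T : Finset (Sym2 (Fin n)), IsSpanningTree G T →
        ∀ e f : Sym2 (Fin n), IsEdgeExchange G T e f → ℓ e < ℓ f →
          ∃ d : Sym2 (Fin n), ℓ d < ℓ f ∧ (∃ v : Fin n, v ∈ d ∧ v ∈ f) ∧
            IsEdgeExchange G T d f := by
  classical
  have hfin : G.edgeSet.Finite := Set.toFinite _
  set Ef := hfin.toFinset with hEf
  have hmemEf : ∀ e, e ∈ Ef ↔ e ∈ G.edgeSet := fun e => hfin.mem_toFinset
  have hEcard : Ef.card = 2 * n - 3 := by rw [← hcard, hEf, Set.ncard_eq_toFinset_card _ hfin]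
  set lab : Sym2 (Fin n) → ℕ := fun e =>
    if e ∈ Ef then 1 + (Ef.filter (fun e' => ekey e' < ekey e)).card else 0 with hlab
  have hlabE : ∀ e ∈ Ef, lab e = 1 + (Ef.filter (fun e' => ekey e' < ekey e)).card := by
    intro e he; rw [hlab]; simp only [if_pos he]
  have hmono : ∀ e ∈ Ef, ∀ f ∈ Ef, ekey e < ekey f → lab e < lab f := by
    intro e he f hf hk
    rw [hlabE e he, hlabE f hf]
    have hsub : Ef.filter (fun e' => ekey e' < ekey e) ⊆ Ef.filter (fun e' => ekey e' < ekey f) := by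
      intro g hg
      rw [Finset.mem_filter] at hg ⊢
      exact ⟨hg.1, hg.2.trans hk⟩
    have hss : Ef.filter (fun e' => ekey e' < ekey e) ⊂ Ef.filter (fun e' => ekey e' < ekey f) := by
      rw [Finset.ssubset_iff_of_subset hsub]
      exact ⟨e, Finset.mem_filter.mpr ⟨he, hk⟩, fun hc => absurd (Finset.mem_filter.mp hc).2 (lt_irrefl _)⟩
    have := Finset.card_lt_card hss
    omega
  have hkeyinjE : ∀ e ∈ Ef, ∀ f ∈ Ef, ekey e = ekey f → e = f := by
    intro e he f hf hk
    obtain ⟨a, b, hab, rfl⟩ := exists_rep (G.not_isDiag_of_mem_edgeSet ((hmemEf _).mp he))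
    obtain ⟨x, y, hxy, rfl⟩ := exists_rep (G.not_isDiag_of_mem_edgeSet ((hmemEf _).mp hf))
    obtain ⟨rfl, rfl⟩ := ekey_inj hab hxy hk
    rfl
  have hltkey : ∀ e ∈ Ef, ∀ f ∈ Ef, lab e < lab f → ekey e < ekey f := by
    intro e he f hf hl
    rcases lt_trichotomy (ekey e) (ekey f) with h | h | h
    · exact h
    · rw [hkeyinjE e he f hf h] at hl; exact absurd hl (lt_irrefl _)
    · exact absurd (hl.trans (hmono f hf e he h)) (lt_irrefl _)
  have hmapsF : ∀ e ∈ Ef, lab e ∈ Finset.Icc 1 (2 * n - 3) := by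
    intro e he
    rw [hlabE e he, Finset.mem_Icc]
    refine ⟨by omega, ?_⟩
    have hsub : Ef.filter (fun e' => ekey e' < ekey e) ⊆ Ef.erase e := by
      intro g hg
      rw [Finset.mem_filter] at hg
      refine Finset.mem_erase.mpr ⟨?_, hg.1⟩
      rintro rfl
      exact absurd hg.2 (lt_irrefl _)
    have h1 := Finset.card_le_card hsub
    rw [Finset.card_erase_of_mem he, hEcard] at h1
    omega
  refine ⟨lab, ⟨?_, ?_, ?_⟩, ?_⟩
  · -- MapsTo
    intro e he
    have := hmapsF e ((hmemEf _).mpr he)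
    rw [Finset.mem_Icc] at this
    exact Set.mem_Icc.mpr this
  · -- InjOn
    intro e he f hf hl
    have he' := (hmemEf e).mpr he
    have hf' := (hmemEf f).mpr hf
    rcases lt_trichotomy (ekey e) (ekey f) with h | h | h
    · exact absurd (hl ▸ hmono e he' f hf' h) (lt_irrefl _)
    · exact hkeyinjE e he' f hf' h
    · exact absurd (hl ▸ hmono f hf' e he' h) (lt_irrefl _)
  · -- SurjOn
    intro m hm
    have hinjF : Set.InjOn lab ↑Ef := by
      intro e he f hf hl
      have he' := Finset.mem_coe.mp he
      have hf' := Finset.mem_coe.mp hf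
      rcases lt_trichotomy (ekey e) (ekey f) with h | h | h
      · exact absurd (hl ▸ hmono e he' f hf' h) (lt_irrefl _)
      · exact hkeyinjE e he' f hf' h
      · exact absurd (hl ▸ hmono f hf' e he' h) (lt_irrefl _)
    have hicard : (Ef.image lab).card = 2 * n - 3 := by
      rw [Finset.card_image_of_injOn hinjF, hEcard]
    have hisub : Ef.image lab ⊆ Finset.Icc 1 (2 * n - 3) := by
      intro m' hm'
      obtain ⟨e, he, rfl⟩ := Finset.mem_image.mp hm'
      exact hmapsF e he
    have hieq : Ef.image lab = Finset.Icc 1 (2 * n - 3) := by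
      refine Finset.eq_of_subset_of_card_le hisub ?_
      rw [hicard, Nat.card_Icc]
      omega
    have hm' : m ∈ Ef.image lab := by
      rw [hieq, Finset.mem_Icc]
      exact Set.mem_Icc.mp hm
    obtain ⟨e, he, rfl⟩ := Finset.mem_image.mp hm'
    exact ⟨e, (hmemEf _).mp he, rfl⟩
  · -- exchange property
    intro T hT e f hex hlt
    by_cases hshare : ∃ v : Fin n, v ∈ e ∧ v ∈ f
    · exact ⟨e, hlt, hshare, hex⟩
    obtain ⟨heG, hfG, hef, hefT, hsd⟩ := hex
    have heE := (hmemEf e).mpr heG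
    have hfE := (hmemEf f).mpr hfG
    have hkey := hltkey e heE f hfE hlt
    obtain ⟨a, b, hab, hrepe⟩ := exists_rep (G.not_isDiag_of_mem_edgeSet heG)
    obtain ⟨x, y, hxy, hrepf⟩ := exists_rep (G.not_isDiag_of_mem_edgeSet hfG)
    push_neg at hshare
    have hax : a ≠ x := by
      intro h; exact hshare a (hrepe ▸ Sym2.mem_mk_left a b) (by rw [hrepf, h]; exact Sym2.mem_mk_left x y)
    have hkey' : ekey s(a,b) < ekey s(x,y) := by rw [← hrepe, ← hrepf]; exact hkey
    have haxlt : a < x := by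
      rcases (ekey_lt_iff hab hxy).mp hkey' with h | ⟨h1, h2⟩
      · exact h
      · exact absurd h1 hax
    obtain ⟨hTsub, hTconn, hTacyc⟩ := hT
    obtain ⟨hT'sub, hT'conn, hT'acyc⟩ := hsd
    have hanotf : a ∉ ({x, y} : Set (Fin n)) := by
      intro h
      refine hshare a (hrepe ▸ Sym2.mem_mk_left a b) ?_
      rw [hrepf, Sym2.mem_iff]
      simpa using h
    have hbnotf : b ∉ ({x, y} : Set (Fin n)) := by
      intro h
      refine hshare b (hrepe ▸ Sym2.mem_mk_right a b) ?_
      rw [hrepf, Sym2.mem_iff]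
      simpa using h
    by_cases hfT : f ∈ T
    · -- CUT CASE : f ∈ T, e ∉ T
      have heT : e ∉ T := fun h => (hefT.mp h) hfT
      have hfT' : s(x,y) ∈ T := hrepf ▸ hfT
      have heT' : s(a,b) ∉ T := hrepe ▸ heT
      have hTsd : symmDiff T {e, f} = insert s(a,b) (T.erase s(x,y)) := by
        rw [symmDiff_pair_s10 hef heT hfT, hrepe, hrepf]
      set K := SimpleGraph.fromEdgeSet (↑(T.erase s(x,y)) : Set (Sym2 (Fin n))) with hK
      have hsep : ¬ K.Reachable x y := acyc_sep hTacyc hxy.ne hfT'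
      have hsepab : ¬ K.Reachable a b := by
        have h1 : (SimpleGraph.fromEdgeSet (↑(insert s(a,b) (T.erase s(x,y))) : Set (Sym2 (Fin n)))).IsAcyclic := by
          rw [← hTsd]; exact hT'acyc
        have h2 := acyc_sep h1 hab.ne (Finset.mem_insert_self _ _)
        rwa [Finset.erase_insert (fun hc => heT' (Finset.mem_of_mem_erase hc))] at h2
      have hside : ∀ w, K.Reachable w x ∨ K.Reachable w y := fun w => sides hTconn hfT' w
      obtain ⟨z, hz, hxzE, hyzE⟩ := outer_apex hn G hout hnc hcard (hrepf ▸ hfG) hxy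
        (by rintro ⟨h0, -⟩; have h1 : a.val < x.val := haxlt; omega)
      -- generic construction of the edge d = s(p,q), p on the x-side, q on the y-side
      have build : ∀ (p q : Fin n), p ≠ q → s(p,q) ∈ G.edgeSet →
          ekey s(p,q) < ekey s(x,y) → (∃ w : Fin n, w ∈ s(p,q) ∧ w ∈ f) →
          K.Reachable p x → K.Reachable q y →
          ∃ d : Sym2 (Fin n), lab d < lab f ∧ (∃ w : Fin n, w ∈ d ∧ w ∈ f) ∧ IsEdgeExchange G T d f := by
        intro p q hpq hdG hdkey hdsh hpx hqy
        have hdkeyf : ekey s(p,q) < ekey f := by rw [hrepf]; exact hdkey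
        have hdf : s(p,q) ≠ f := by
          intro hc; rw [hc] at hdkeyf; exact absurd hdkeyf (lt_irrefl _)
        have hdT : s(p,q) ∉ T := by
          intro hmem
          have hKadj : K.Adj p q := by
            rw [hK, SimpleGraph.fromEdgeSet_adj]
            refine ⟨?_, hpq⟩
            have : s(p,q) ∈ T.erase s(x,y) := Finset.mem_erase.mpr ⟨by rw [← hrepf]; exact hdf, hmem⟩
            exact_mod_cast this
          exact hsep (hpx.symm.trans ((hKadj.reachable).trans hqy))
        have hnt := newtree hTconn hTacyc hxy.ne hpq hfT' hdT hpx hqy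
        have hTsd2 : symmDiff T {s(p,q), f} = insert s(p,q) (T.erase s(x,y)) := by
          rw [symmDiff_pair_s10 hdf hdT hfT, hrepf]
        refine ⟨s(p,q), hmono _ ((hmemEf _).mpr hdG) f hfE hdkeyf, hdsh, hdG, hfG, hdf,
          ⟨fun h => absurd h hdT, fun h => absurd hfT h⟩, ?_⟩
        rw [hTsd2]
        refine ⟨?_, hnt.1, hnt.2⟩
        intro g hg
        rcases Finset.mem_insert.mp (by exact_mod_cast hg) with h | h
        · rw [h]; exact hdG
        · exact hTsub (by exact_mod_cast (Finset.mem_of_mem_erase h))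
      rcases hz with hzx | hzy
      · -- z < x : outer apex on the left
        rcases hside z with hzsx | hzsy
        · -- z on x-side : d = s(z,y)
          refine build z y (hzx.trans hxy).ne (show s(z,y) ∈ G.edgeSet by rw [Sym2.eq_swap]; exact hyzE) ?_ ⟨y, Sym2.mem_mk_right z y, hrepf ▸ Sym2.mem_mk_right x y⟩ hzsx (SimpleGraph.Reachable.refl _)
          exact (ekey_lt_iff (hzx.trans hxy) hxy).mpr (Or.inl hzx)
        · -- z on y-side : d = s(x,z)
          refine build x z (by intro h; rw [h] at hzx; exact absurd hzx (lt_irrefl _)) hxzE ?_ ⟨x, Sym2.mem_mk_left x z, hrepf ▸ Sym2.mem_mk_left x y⟩ (SimpleGraph.Reachable.refl _) hzsy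
          rw [show s(x,z) = s(z,x) from Sym2.eq_swap]
          exact (ekey_lt_iff hzx hxy).mpr (Or.inl hzx)
      · -- y < z : outer apex on the right
        rcases hside z with hzsx | hzsy
        · -- z on x-side : contradiction via confinement of the y-side
          exfalso
          have hconf : ∀ w, K.Reachable w y → x < w ∧ w < z := by
            have haux : ∀ (w t : Fin n) (pw : K.Walk t w), x < t → t < z → K.Reachable t y → x < w ∧ w < z := by
              intro w t pw
              induction pw with
              | nil => exact fun h1 h2 _ => ⟨h1, h2⟩
              | @cons t t₂ w hadj rest ih =>
                intro h1 h2 h3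
                have hedge : s(t, t₂) ∈ G.edgeSet := by
                  have := ((SimpleGraph.fromEdgeSet_adj _).mp hadj).1
                  have h4 : s(t,t₂) ∈ T.erase s(x,y) := by exact_mod_cast this
                  exact hTsub (by exact_mod_cast (Finset.mem_of_mem_erase h4))
                have h5 : K.Reachable t₂ y := (hadj.symm.reachable).trans h3
                rcases lt_trichotomy t₂ x with h6 | h6 | h6
                · exact (hnc s(t₂,t) (Sym2.eq_swap ▸ hedge) s(x,z) hxzE
                    ⟨t₂, t, x, z, h6, h1, h2, rfl, rfl⟩).elim
                · exact (hsep (h6 ▸ h5)).elim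
                · rcases lt_trichotomy t₂ z with h7 | h7 | h7
                  · exact ih h6 h7 h5
                  · exact (hsep (hzsx.symm.trans (h7 ▸ h5))).elim
                  · exact (hnc s(x,z) hxzE s(t,t₂) hedge ⟨x, z, t, t₂, h1, h2, h7, rfl, rfl⟩).elim
            intro w hw
            obtain ⟨pw⟩ := hw.symm
            exact haux w y pw hxy hzy (SimpleGraph.Reachable.refl _)
          have hsidesplit : K.Reachable a x ∧ K.Reachable b y := by
            rcases hside a with ha | ha <;> rcases hside b with hb | hb
            · exact absurd (ha.trans hb.symm) hsepab
            · exact ⟨ha, hb⟩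
            · obtain ⟨h8, -⟩ := hconf a ha
              exact absurd haxlt (not_lt.mpr h8.le)
            · exact absurd (ha.trans hb.symm) hsepab
          obtain ⟨h8, h9⟩ := hconf b hsidesplit.2
          exact hnc s(a,b) (hrepe ▸ heG) s(x,z) hxzE ⟨a, b, x, z, haxlt, h8, h9, rfl, rfl⟩
        · -- z on y-side : d = s(x,z)
          refine build x z (hxy.trans hzy).ne hxzE ?_ ⟨x, Sym2.mem_mk_left x z, hrepf ▸ Sym2.mem_mk_left x y⟩ (SimpleGraph.Reachable.refl _) hzsy
          · exact (ekey_lt_iff (hxy.trans hzy) hxy).mpr (Or.inr ⟨rfl, hzy⟩)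
    · -- CYCLE CASE : f ∉ T, e ∈ T
      have heT : e ∈ T := hefT.mpr hfT
      have heT' : s(a,b) ∈ T := hrepe ▸ heT
      have hfT' : s(x,y) ∉ T := fun h => hfT (hrepf ▸ h)
      obtain ⟨p0⟩ := hTconn.preconnected x y
      obtain ⟨pth, hpath⟩ := p0.toPath
      revert hpath
      rcases pth with _ | @⟨_, p₁, _, hadj, q⟩
      · intro _; exact absurd hxy (lt_irrefl _)
      intro hpath
      have hp1T : s(x, p₁) ∈ T := by
        have := ((SimpleGraph.fromEdgeSet_adj _).mp hadj).1
        exact_mod_cast this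
      have hp1x : x ≠ p₁ := ((SimpleGraph.fromEdgeSet_adj _).mp hadj).2
      have hqpath : q.IsPath := ((SimpleGraph.Walk.cons_isPath_iff _ _).mp hpath).1
      have hxq : x ∉ q.support := ((SimpleGraph.Walk.cons_isPath_iff _ _).mp hpath).2
      -- e lies on the path (else x,y would be connected in T \ e)
      have hsepK2 : ¬ (SimpleGraph.fromEdgeSet (↑(T.erase s(a,b)) : Set (Sym2 (Fin n)))).Reachable x y := by
        have hTsd : symmDiff T {e, f} = insert s(x,y) (T.erase s(a,b)) := by
          rw [Finset.pair_comm, symmDiff_pair_s10 (Ne.symm hef) hfT heT, hrepe, hrepf]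
        have h1 : (SimpleGraph.fromEdgeSet (↑(insert s(x,y) (T.erase s(a,b))) : Set (Sym2 (Fin n)))).IsAcyclic := by
          rw [← hTsd]; exact hT'acyc
        have h2 := acyc_sep h1 hxy.ne (Finset.mem_insert_self _ _)
        rwa [Finset.erase_insert (fun hc => hfT' (Finset.mem_of_mem_erase hc))] at h2
      have heP : s(a,b) ∈ (SimpleGraph.Walk.cons hadj q).edges := by
        by_contra hne
        refine hsepK2 ⟨(SimpleGraph.Walk.cons hadj q).transfer _ ?_⟩
        intro g hg
        have hgT : g ∈ (SimpleGraph.fromEdgeSet (↑T : Set (Sym2 (Fin n)))).edgeSet :=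
          (SimpleGraph.Walk.cons hadj q).edges_subset_edgeSet hg
        rw [SimpleGraph.edgeSet_fromEdgeSet] at hgT ⊢
        refine ⟨?_, hgT.2⟩
        have : g ∈ T.erase s(a,b) := Finset.mem_erase.mpr ⟨fun hc => hne (hc ▸ hg), by exact_mod_cast hgT.1⟩
        exact_mod_cast this
      have haq : a ∈ q.support := by
        have h1 : a ∈ (SimpleGraph.Walk.cons hadj q).support :=
          SimpleGraph.Walk.fst_mem_support_of_mem_edges _ heP
        rw [SimpleGraph.Walk.support_cons] at h1
        rcases List.mem_cons.mp h1 with h | h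
        · exact absurd h (by intro hc; rw [hc] at haxlt; exact absurd haxlt (lt_irrefl _))
        · exact h
      -- p₁ is outside the open interval (x,y)
      have hp1pos : ¬ (x < p₁ ∧ p₁ < y) := by
        rintro ⟨h1, h2⟩
        have haux : ∀ (u w' : Fin n) (r : (SimpleGraph.fromEdgeSet (↑T : Set (Sym2 (Fin n)))).Walk u w'),
            r.IsPath → x ∉ r.support → y = w' → x < u → u ≤ y → ∀ w ∈ r.support, x < w ∧ w ≤ y := by
          intro u w' r
          induction r with
          | nil =>
            intro _ _ hwy h3 h4 w hw
            rw [SimpleGraph.Walk.support_nil] at hw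
            rcases List.mem_singleton.mp hw with rfl
            exact ⟨h3, h4⟩
          | @cons u v w' hadj2 r' ih =>
            intro hrp hxs hwy h3 h4 w hw
            subst hwy
            have hrp' : r'.IsPath := ((SimpleGraph.Walk.cons_isPath_iff _ _).mp hrp).1
            have huns : u ∉ r'.support := ((SimpleGraph.Walk.cons_isPath_iff _ _).mp hrp).2
            have hxs' : x ∉ r'.support := fun hc => hxs (by rw [SimpleGraph.Walk.support_cons]; exact List.mem_cons_of_mem _ hc)
            have huy : u < y := by
              rcases lt_or_eq_of_le h4 with h | h
              · exact h
              · exfalso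
                apply huns
                rw [h]
                exact r'.end_mem_support
            have hedge : s(u, v) ∈ G.edgeSet := by
              have := ((SimpleGraph.fromEdgeSet_adj _).mp hadj2).1
              exact hTsub (by exact_mod_cast this)
            have hvx : v ≠ x := fun hc => hxs' (hc ▸ r'.start_mem_support)
            have hvb : x < v ∧ v ≤ y := by
              rcases lt_trichotomy v x with h5 | h5 | h5
              · exact (hnc s(v,u) (Sym2.eq_swap ▸ hedge) s(x,y) (hrepf ▸ hfG)
                  ⟨v, u, x, y, h5, h3, huy, rfl, rfl⟩).elim
              · exact absurd h5 hvx
              · rcases lt_trichotomy v y with h6 | h6 | h6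
                · exact ⟨h5, h6.le⟩
                · exact ⟨h5, h6.le⟩
                · exact (hnc s(x,y) (hrepf ▸ hfG) s(u,v) hedge
                    ⟨x, y, u, v, h3, huy, h6, rfl, rfl⟩).elim
            rw [SimpleGraph.Walk.support_cons] at hw
            rcases List.mem_cons.mp hw with rfl | hw'
            · exact ⟨h3, h4⟩
            · exact ih hrp' hxs' rfl hvb.1 hvb.2 w hw'
        have := haux p₁ y q hqpath hxq rfl h1 h2.le a haq
        exact absurd this.1 (not_lt.mpr haxlt.le)
      have hp1y : p₁ ≠ y := by
        intro hc
        rw [hc] at hp1T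
        exact hfT' hp1T
      -- the exchange edge d = s(x, p₁)
      have hdG : s(x, p₁) ∈ G.edgeSet := hTsub (by exact_mod_cast hp1T)
      have hdkeyf : ekey s(x,p₁) < ekey f := by
        rw [hrepf]
        rcases lt_trichotomy p₁ x with h1 | h1 | h1
        · rw [show s(x,p₁) = s(p₁,x) from Sym2.eq_swap]
          exact (ekey_lt_iff h1 hxy).mpr (Or.inl h1)
        · exact absurd h1.symm hp1x
        · have h2 : y < p₁ := by
            rcases lt_trichotomy p₁ y with h3 | h3 | h3
            · exact absurd ⟨h1, h3⟩ hp1pos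
            · exact absurd h3 hp1y
            · exact h3
          exact (ekey_lt_iff h1 hxy).mpr (Or.inr ⟨rfl, h2⟩)
      have hdf : s(x,p₁) ≠ f := by
        intro hc; rw [hc] at hdkeyf; exact absurd hdkeyf (lt_irrefl _)
      -- y reaches p₁ without the edge d
      have hqd : s(x,p₁) ∉ q.edges := by
        intro hc
        exact hxq (SimpleGraph.Walk.fst_mem_support_of_mem_edges _ hc)
      have hyp1 : (SimpleGraph.fromEdgeSet (↑(T.erase s(x,p₁)) : Set (Sym2 (Fin n)))).Reachable y p₁ := by
        refine SimpleGraph.Reachable.symm ⟨q.transfer _ ?_⟩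
        intro g hg
        have hgT : g ∈ (SimpleGraph.fromEdgeSet (↑T : Set (Sym2 (Fin n)))).edgeSet :=
          q.edges_subset_edgeSet hg
        rw [SimpleGraph.edgeSet_fromEdgeSet] at hgT ⊢
        refine ⟨?_, hgT.2⟩
        have : g ∈ T.erase s(x,p₁) := Finset.mem_erase.mpr ⟨fun hc => hqd (hc ▸ hg), by exact_mod_cast hgT.1⟩
        exact_mod_cast this
      have hnt := newtree hTconn hTacyc hp1x hxy.ne hp1T hfT'
        (SimpleGraph.Reachable.refl _) hyp1
      have hTsd : symmDiff T {s(x,p₁), f} = insert s(x,y) (T.erase s(x,p₁)) := by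
        rw [Finset.pair_comm, symmDiff_pair_s10 (Ne.symm hdf) hfT hp1T, hrepf]
      refine ⟨s(x,p₁), hmono _ ((hmemEf _).mpr hdG) f hfE hdkeyf,
        ⟨x, Sym2.mem_mk_left x p₁, hrepf ▸ Sym2.mem_mk_left x y⟩,
        hdG, hfG, hdf, ⟨fun _ => hfT, fun _ => hp1T⟩, ?_⟩
      rw [hTsd]
      refine ⟨?_, hnt.1, hnt.2⟩
      intro g hg
      rcases Finset.mem_insert.mp (by exact_mod_cast hg) with h | h
      · rw [h]; exact hrepf ▸ hfG
      · exact hTsub (by exact_mod_cast (Finset.mem_of_mem_erase h))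
end

section
/- Let G be a 2-connected outerplane graph on n ≥ 3 vertices (the outer cycle plus pairwise non-crossing chords) with m edges. There exists a bijective edge labeling ℓ : E(G) → {1, …, m} with the following property: for every spanning tree T of G and every edge exchange {e, f} for T with ℓ(e) < ℓ(f), there is an edge d of G with ℓ(d) < ℓ(f) such that d and f share an end vertex or lie on a common face of G, exactly one of d, f belongs to T, and T △ {d, f} is again a spanning tree of G. -/
/-- A listing `L` of spanning trees (as edge sets) is genlex with respect to the edge
labeling `ℓ`: for every `k` and every set `S` of edges, the set of positions `i` in the
listing whose tree restricted to the edges with label `> k` equals `S` is an interval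
of consecutive integers. -/
def IsGenlex {V : Type*} [DecidableEq V] (ℓ : Sym2 V → ℕ) (L : List (Finset (Sym2 V))) :
    Prop :=
  ∀ (k : ℕ) (S : Finset (Sym2 V)) (i p j : ℕ)
    (hi : i < L.length) (hp : p < L.length) (hj : j < L.length),
    i ≤ p → p ≤ j →
    (L.get ⟨i, hi⟩).filter (fun e => k < ℓ e) = S →
    (L.get ⟨j, hj⟩).filter (fun e => k < ℓ e) = S →
    (L.get ⟨p, hp⟩).filter (fun e => k < ℓ e) = S

/-- The increasing list of vertices `l = [a_1, …, a_k]` (with `k ≥ 3`) is an inner face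
of the 2-connected outerplane graph `G`: consecutive vertices `a_i, a_{i+1}` as well as
the pair `a_1, a_k` are adjacent in `G`, and no other pair of vertices of `l` is
adjacent in `G`. -/
def IsInnerFace {n : ℕ} (G : SimpleGraph (Fin n)) (l : List (Fin n)) : Prop :=
  3 ≤ l.length ∧ l.Pairwise (· < ·) ∧ l.Chain' G.Adj ∧
  (∀ (h : 0 < l.length),
    G.Adj (l.get ⟨0, h⟩) (l.get ⟨l.length - 1, Nat.sub_lt h one_pos⟩)) ∧
  (∀ (i j : ℕ) (hi : i < l.length) (hj : j < l.length),
    i + 1 < j → ¬(i = 0 ∧ j = l.length - 1) → ¬ G.Adj (l.get ⟨i, hi⟩) (l.get ⟨j, hj⟩))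

/-- `e` is a boundary edge of the inner face given by the vertex list `l`: an edge
between two consecutive vertices of `l` or the closing edge between the first and the
last vertex of `l`. -/
def FaceBoundaryEdge {n : ℕ} (l : List (Fin n)) (e : Sym2 (Fin n)) : Prop :=
  (∃ (i : ℕ) (h : i + 1 < l.length),
    e = s(l.get ⟨i, Nat.lt_of_succ_lt h⟩, l.get ⟨i + 1, h⟩)) ∨
  (∃ h : 0 < l.length, e = s(l.get ⟨0, h⟩, l.get ⟨l.length - 1, Nat.sub_lt h one_pos⟩))

/-- `e` is an outer-cycle edge `{i, (i+1) mod n}` of the convex polygon on `n` vertices. -/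
def IsOuterEdge {n : ℕ} (e : Sym2 (Fin n)) : Prop :=
  ∃ u v : Fin n, (u.val + 1) % n = v.val ∧ e = s(u, v)

/-- Two edges `e, f` of the 2-connected outerplane graph `G` lie on a common face:
either both are boundary edges of a common inner face of `G`, or both are outer-cycle
edges (which bound the outer face). -/
def OnCommonFace {n : ℕ} (G : SimpleGraph (Fin n)) (e f : Sym2 (Fin n)) : Prop :=
  (∃ l : List (Fin n), IsInnerFace G l ∧ FaceBoundaryEdge l e ∧ FaceBoundaryEdge l f) ∨
  (IsOuterEdge e ∧ IsOuterEdge f)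

/-!
Label the edges in the order of `edgeKey`: by larger end, ties broken by decreasing smaller end.
Let `f = s(x, y)` with `x < y`.

If `f ∉ T`, the first edge `s(x, p)` of the tree path from `x` to `y` is a partner sharing `x`.
Were it to come after `f`, then `y < p`, and since chords do not cross, the whole path would lie
in `{x} ∪ [y, n)`; every edge on it, `e` included, would then come after `f`.

If `f ∈ T`, deleting `f` splits `T` into the side of `x` and the side of `y`, and every edge of `G`
between the sides is a partner. For an outer edge `f = s(x, x + 1)` both ends of `e` are at most
`x` and one of them lies on the side of `y`, so some outer edge `s(c, c + 1)` with `c < x` crosses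
over. Otherwise the inner face under the chord `f`, traced greedily from `x` by always stepping to
the farthest neighbour, runs from `x` to `y` inside `[x, y]`; one of its edges crosses over, and
all of them except `f` come before `f`.
-/

open SimpleGraph

theorem SimpleGraph.Reachable.reachable_deleteEdges_or {V : Type*} {H : SimpleGraph V}
    {v a b : V} (h : H.Reachable v a) :
    (H.deleteEdges {s(a, b)}).Reachable v a ∨ (H.deleteEdges {s(a, b)}).Reachable v b := by
  classical
  obtain ⟨P, hP⟩ := h.exists_isPath
  by_cases hab : s(a, b) ∈ P.edges
  · have hb := P.snd_mem_support_of_mem_edges hab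
    have ha := Walk.endpoint_notMem_support_takeUntil hP hb (P.adj_of_mem_edges hab).ne
    exact .inr ⟨(P.takeUntil b hb).toDeleteEdges _ fun e he he' => ha <| by
      rw [Set.mem_singleton_iff.mp he'] at he
      exact Walk.fst_mem_support_of_mem_edges _ he⟩
  · exact .inl ⟨P.toDeleteEdges _ fun e he he' => hab (Set.mem_singleton_iff.mp he' ▸ he)⟩

section SpanningTree

variable {V : Type*} {G : SimpleGraph V} {T : Finset (Sym2 V)}

theorem IsSpanningTree.not_reachable_deleteEdges (hT : IsSpanningTree G T) {a b : V}
    (hab : s(a, b) ∈ T) : ¬((fromEdgeSet (T : Set (Sym2 V))).deleteEdges {s(a, b)}).Reachable a b :=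
  isBridge_iff.mp <| isAcyclic_iff_forall_adj_isBridge.mp hT.2.2 <|
    (fromEdgeSet_adj _).mpr ⟨hab, G.ne_of_adj (hT.1 hab)⟩

variable [DecidableEq V]

theorem SimpleGraph.fromEdgeSet_insert_erase (T : Finset (Sym2 V)) (d : Sym2 V) (x y : V) :
    fromEdgeSet (↑(insert s(x, y) (T.erase d)) : Set (Sym2 V)) =
      (fromEdgeSet (T : Set (Sym2 V))).deleteEdges {d} ⊔ edge x y := by
  rw [deleteEdges, edge, Finset.coe_insert, Finset.coe_erase, Set.insert_eq, ← fromEdgeSet_sdiff,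
    fromEdgeSet_union, sup_comm]

theorem IsSpanningTree.isSpanningTree_symmDiff_iff (hT : IsSpanningTree G T)
    {d : Sym2 V} {x y : V} (hd : d ∈ T) (hf : s(x, y) ∈ G.edgeSet) (hfT : s(x, y) ∉ T) :
    IsSpanningTree G (symmDiff T {d, s(x, y)}) ↔
      ¬((fromEdgeSet (T : Set (Sym2 V))).deleteEdges {d}).Reachable x y := by
  set K := (fromEdgeSet (T : Set (Sym2 V))).deleteEdges {d}
  have hT' : symmDiff T {d, s(x, y)} = insert s(x, y) (T.erase d) := by
    ext a
    simp only [Finset.mem_symmDiff, Finset.mem_insert, Finset.mem_singleton, Finset.mem_erase]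
    grind
  have hxy : x ≠ y := G.ne_of_adj hf
  rw [IsSpanningTree, hT', fromEdgeSet_insert_erase]
  constructor
  · rintro ⟨-, -, hacyc⟩ hK
    rcases (isAcyclic_sup_fromEdgeSet_iff.mp hacyc).2 hK with h | h
    · exact hxy h
    · exact hfT ((fromEdgeSet_adj _).mp (deleteEdges_adj.mp h).1).1
  · intro hK
    refine ⟨?_, ?_, (hT.2.2.anti (deleteEdges_le _)).sup_edge_of_not_reachable hK⟩
    · grind [Finset.coe_insert, Finset.coe_erase, hT.1]
    induction d with | h a b => ?_
    have hxy' : (K ⊔ edge x y).Reachable x y := Adj.reachable (by simp [edge_adj, hxy])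
    have hside : ∀ v, K.Reachable v a ∨ K.Reachable v b := fun v =>
      (hT.2.1.preconnected v a).reachable_deleteEdges_or
    have hab : (K ⊔ edge x y).Reachable a b := by
      rcases hside x with hx | hx <;> rcases hside y with hy | hy
      · exact absurd (hx.trans hy.symm) hK
      · exact (hx.symm.mono le_sup_left).trans (hxy'.trans (hy.mono le_sup_left))
      · exact ((hy.symm.mono le_sup_left).trans hxy'.symm).trans (hx.mono le_sup_left)
      · exact absurd (hx.trans hy.symm) hK
    refine (connected_iff_exists_forall_reachable _).mpr ⟨a, fun v => ?_⟩
    rcases hside v with hv | hv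
    · exact (hv.mono le_sup_left).symm
    · exact hab.trans (hv.mono le_sup_left).symm

theorem isEdgeExchange_comm {e f : Sym2 V} : IsEdgeExchange G T e f ↔ IsEdgeExchange G T f e := by
  unfold IsEdgeExchange
  rw [Finset.pair_comm]
  tauto

theorem IsSpanningTree.isEdgeExchange_iff_not_reachable (hT : IsSpanningTree G T)
    {d : Sym2 V} {x y : V} (hd : d ∈ T) (hf : s(x, y) ∈ G.edgeSet) (hfT : s(x, y) ∉ T) :
    IsEdgeExchange G T d s(x, y) ↔
      ¬((fromEdgeSet (T : Set (Sym2 V))).deleteEdges {d}).Reachable x y := by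
  rw [← hT.isSpanningTree_symmDiff_iff hd hf hfT]
  exact ⟨fun h => h.2.2.2.2, fun h => ⟨hT.1 hd, hf, fun h => hfT (h ▸ hd), iff_of_true hd hfT, h⟩⟩

theorem IsSpanningTree.isEdgeExchange_of_reachable_of_not_reachable (hT : IsSpanningTree G T)
    {x y c c' : V} (hf : s(x, y) ∈ T) (hd : G.Adj c c') (hne : s(c, c') ≠ s(x, y))
    (hc : ((fromEdgeSet (T : Set (Sym2 V))).deleteEdges {s(x, y)}).Reachable x c)
    (hc' : ¬((fromEdgeSet (T : Set (Sym2 V))).deleteEdges {s(x, y)}).Reachable x c') :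
    IsEdgeExchange G T s(c, c') s(x, y) := by
  have hdT : s(c, c') ∉ T := fun h => hc' <| hc.trans <| Adj.reachable <| by
    simpa [deleteEdges_adj, fromEdgeSet_adj, h, hd.ne] using hne
  rw [isEdgeExchange_comm, hT.isEdgeExchange_iff_not_reachable hf hd hdT]
  exact fun h => hc' (hc.trans h)

end SpanningTree

section EdgeKey

variable {α : Type*} [LinearOrder α]

def edgeKey (e : Sym2 α) : α ×ₗ αᵒᵈ := toLex (e.sup, OrderDual.toDual e.inf)

theorem edgeKey_injective : Function.Injective (edgeKey (α := α)) := fun e f h => by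
  simp only [edgeKey, toLex_inj, Prod.mk.injEq, OrderDual.toDual_inj] at h
  exact Sym2.inf_eq_inf_and_sup_eq_sup.mp h.symm

theorem edgeKey_mk_lt_mk_iff {a b c d : α} : edgeKey s(a, b) < edgeKey s(c, d) ↔
    max a b < max c d ∨ max a b = max c d ∧ min c d < min a b :=
  Prod.Lex.toLex_lt_toLex

theorem edgeKey_mk_lt_mk_iff_of_le {a b c d : α} (hab : a ≤ b) (hcd : c ≤ d) :
    edgeKey s(a, b) < edgeKey s(c, d) ↔ b < d ∨ b = d ∧ c < a := by
  rw [edgeKey_mk_lt_mk_iff, max_eq_right hab, max_eq_right hcd, min_eq_left hab, min_eq_left hcd]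

theorem edgeKey_le_of_forall_mem {x y : α} {e : Sym2 α} (hxy : x < y) (he : ¬e.IsDiag)
    (h : ∀ v ∈ e, v = x ∨ y ≤ v) : edgeKey s(x, y) ≤ edgeKey e := by
  induction e with | h u w => ?_
  have huw : u ≠ w := he
  have hlt : y < max u w → edgeKey s(x, y) ≤ edgeKey s(u, w) := fun h =>
    (edgeKey_mk_lt_mk_iff.mpr (.inl (by rwa [max_eq_right hxy.le]))).le
  rcases h u (Sym2.mem_mk_left u w) with rfl | hu <;>
    rcases h w (Sym2.mem_mk_right u w) with rfl | hw
  · exact absurd rfl huw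
  · rcases hw.lt_or_eq with hw | rfl
    · exact hlt (lt_max_of_lt_right hw)
    · exact le_rfl
  · rcases hu.lt_or_eq with hu | rfl
    · exact hlt (lt_max_of_lt_left hu)
    · exact Sym2.eq_swap ▸ le_rfl
  · exact hlt (lt_max_iff.mpr (by grind))

end EdgeKey

theorem Set.Finite.exists_bijOn_Icc_lt_iff_lt {α β : Type*} [LinearOrder β] {s : Set α}
    (hs : s.Finite) (k : α → β) (hk : Set.InjOn k s) :
    ∃ ℓ : α → ℕ, Set.BijOn ℓ s (Set.Icc 1 s.ncard) ∧
      ∀ a ∈ s, ∀ b ∈ s, ℓ a < ℓ b ↔ k a < k b := by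
  classical
  lift s to Finset α using hs
  set ℓ : α → ℕ := fun a => (s.filter fun b => k b ≤ k a).card
  have hmono : ∀ a, ∀ b ∈ s, k a < k b → ℓ a < ℓ b := fun a b hb hab =>
    Finset.card_lt_card <| (Finset.ssubset_iff_of_subset
      (Finset.monotone_filter_right s fun _ _ hc => hc.trans hab.le)).mpr
      ⟨b, by simp [hb], by simpa using fun _ => hab⟩
  have hlt : ∀ a ∈ s, ∀ b ∈ s, ℓ a < ℓ b ↔ k a < k b := by
    refine fun a ha b hb => ⟨fun h => ?_, hmono a b hb⟩
    by_contra! hba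
    rcases hba.lt_or_eq with hba | hba
    · exact (hmono b a ha hba).not_gt h
    · exact h.ne (by rw [hk hb ha hba])
  have hmaps : Set.MapsTo ℓ s (Finset.Icc 1 s.card) := fun a ha => by
    simpa using ⟨Finset.card_pos.mpr ⟨a, by simpa using ha⟩, Finset.card_filter_le _ _⟩
  have hinj : Set.InjOn ℓ s := fun a ha b hb hab =>
    hk ha hb (le_antisymm (not_lt.mp fun h => ((hlt b hb a ha).mpr h).ne hab.symm)
      (not_lt.mp fun h => ((hlt a ha b hb).mpr h).ne hab))
  refine ⟨ℓ, ?_, hlt⟩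
  rw [Set.ncard_coe_finset, ← Finset.coe_Icc]
  exact ⟨hmaps, hinj, Finset.surjOn_of_injOn_of_card_le ℓ hmaps hinj (by simp)⟩

theorem Nat.exists_mem_Ico_and_not_succ {P : ℕ → Prop} {a b : ℕ} (hab : a ≤ b) (ha : P a)
    (hb : ¬P b) : ∃ c ∈ Set.Ico a b, P c ∧ ¬P (c + 1) := by
  induction b, hab using Nat.le_induction with
  | base => exact absurd ha hb
  | succ b hab ih =>
    by_cases hPb : P b
    · exact ⟨b, ⟨hab, b.lt_succ_self⟩, hPb, hb⟩
    · obtain ⟨c, hc, h⟩ := ih hPb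
      exact ⟨c, ⟨hc.1, hc.2.trans b.lt_succ_self⟩, h⟩

section Outerplane

variable {n : ℕ} {G : SimpleGraph (Fin n)} {T : Finset (Sym2 (Fin n))}

theorem mem_Ioo_iff_of_adj (hnc : ∀ e ∈ G.edgeSet, ∀ f ∈ G.edgeSet, ¬Crossing e f)
    {a b u v : Fin n} (hab : G.Adj a b) (huv : G.Adj u v) (hu : u ≠ a ∧ u ≠ b)
    (hv : v ≠ a ∧ v ≠ b) : u ∈ Set.Ioo a b ↔ v ∈ Set.Ioo a b := by
  have hstep : ∀ {u v : Fin n}, G.Adj u v → v ≠ a → v ≠ b →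
      u ∈ Set.Ioo a b → v ∈ Set.Ioo a b := by
    intro u v huv hva hvb ⟨hau, hub⟩
    by_contra hv
    rcases lt_or_gt_of_ne hva with hva | hav
    · exact hnc _ huv.symm _ hab ⟨v, u, a, b, hva, hau, hub, rfl, rfl⟩
    · have hbv : b < v := lt_of_le_of_ne (not_lt.mp fun h => hv ⟨hav, h⟩) hvb.symm
      exact hnc _ hab _ huv ⟨a, b, u, v, hau, hub, hbv, rfl, rfl⟩
  exact ⟨hstep huv hv.1 hv.2, hstep huv.symm hu.1 hu.2⟩

theorem SimpleGraph.Walk.mem_Ioo_iff_of_notMem_support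
    (hnc : ∀ e ∈ G.edgeSet, ∀ f ∈ G.edgeSet, ¬Crossing e f) {H : SimpleGraph (Fin n)}
    (hHG : H ≤ G) {a b u v : Fin n} (hab : G.Adj a b) (W : H.Walk u v) (ha : a ∉ W.support)
    (hb : b ∉ W.support) : u ∈ Set.Ioo a b ↔ v ∈ Set.Ioo a b := by
  induction W with
  | nil => rfl
  | cons h p ih =>
    simp only [Walk.support_cons, List.mem_cons, not_or] at ha hb
    exact (mem_Ioo_iff_of_adj hnc hab (hHG h) ⟨Ne.symm ha.1, Ne.symm hb.1⟩
      ⟨fun h => ha.2 (h ▸ p.start_mem_support), fun h => hb.2 (h ▸ p.start_mem_support)⟩).trans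
      (ih ha.2 hb.2)

theorem SimpleGraph.Walk.IsPath.le_of_mem_support
    (hnc : ∀ e ∈ G.edgeSet, ∀ f ∈ G.edgeSet, ¬Crossing e f) {H : SimpleGraph (Fin n)}
    (hHG : H ≤ G) {x y p : Fin n} (hxy : x < y) (hyp : y < p) (hxyG : G.Adj x y)
    (hxpG : G.Adj x p) {P : H.Walk p y} (hP : P.IsPath) (hx : x ∉ P.support) :
    ∀ z ∈ P.support, y ≤ z := by
  classical
  intro z hz
  by_contra! hzy
  rcases lt_or_gt_of_ne (show z ≠ x by rintro rfl; exact hx hz) with hzx | hxz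
  · -- the part of `P` from `y` back to `z` stays under the chord `s(x, p)`
    have hz' : z ∈ P.reverse.support := by simpa using hz
    set Q := P.reverse.takeUntil z hz'
    have hpQ : p ∉ Q.support :=
      Walk.endpoint_notMem_support_takeUntil hP.reverse hz' (by rintro rfl; order)
    have hxQ : x ∉ Q.support := fun h =>
      hx (by simpa using P.reverse.support_takeUntil_subset_support hz' h)
    exact absurd ((Q.mem_Ioo_iff_of_notMem_support hnc hHG hxpG hxQ hpQ).mp ⟨hxy, hyp⟩).1
      (not_lt.mpr hzx.le)
  · set Q := P.takeUntil z hz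
    have hyQ : y ∉ Q.support := Walk.endpoint_notMem_support_takeUntil hP hz hzy.ne'
    have hxQ : x ∉ Q.support := fun h => hx (P.support_takeUntil_subset_support hz h)
    exact absurd ((Q.mem_Ioo_iff_of_notMem_support hnc hHG hxyG hxQ hyQ).mpr ⟨hxz, hzy⟩).2
      (not_lt.mpr hyp.le)

theorem exists_chordless_increasing_path
    (hsucc : ∀ (v : Fin n) (h : v.val + 1 < n), G.Adj v ⟨v.val + 1, h⟩) {y : Fin n} :
    ∀ v ≤ y, ∃ l : List (Fin n), (v :: l).Pairwise (· < ·) ∧ (v :: l).IsChain G.Adj ∧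
      (v :: l).getLast (List.cons_ne_nil v l) = y ∧ (∀ w ∈ v :: l, w ≤ y) ∧
      ∀ i j (hi : i < (v :: l).length) (hj : j < (v :: l).length), i + 1 < j →
        ¬G.Adj (v :: l)[i] (v :: l)[j] := by
  intro v
  induction v using WellFoundedGT.induction with | _ v ih => ?_
  intro hvy
  rcases hvy.lt_or_eq with hvy | rfl
  · have hv1 : v.val + 1 < n := by omega
    obtain ⟨g, ⟨hvg, hvg', hgy⟩, hgmax⟩ :=
      Set.exists_max_image {w | G.Adj v w ∧ v < w ∧ w ≤ y} id (Set.toFinite _)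
        ⟨⟨v.val + 1, hv1⟩, hsucc v hv1, Nat.lt_succ_self _, hvy⟩
    obtain ⟨l, hsort, hchain, hlast, hle, hchord⟩ := ih g hvg' hgy
    have hsort' := List.pairwise_iff_getElem.mp hsort
    refine ⟨g :: l, List.pairwise_cons.mpr ⟨fun w hw => ?_, hsort⟩,
      List.isChain_cons_cons.mpr ⟨hvg, hchain⟩, by simpa using hlast, ?_, ?_⟩
    · rcases List.mem_cons.mp hw with rfl | hw
      · exact hvg'
      · exact hvg'.trans (List.rel_of_pairwise_cons hsort hw)
    · simpa [hvy.le] using hle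
    · rintro (_ | i) (_ | _ | j) hi hj hij
      · omega
      · omega
      · intro hadj
        have hj' : j + 1 < (g :: l).length := Nat.lt_of_succ_lt_succ hj
        have hgw : g < (g :: l)[j + 1] := hsort' 0 (j + 1) (by simp) hj' (by omega)
        exact (hgmax _ ⟨hadj, hvg'.trans hgw, hle _ (List.getElem_mem _)⟩).not_gt hgw
      · omega
      · omega
      · exact hchord i (j + 1) (by simpa using hi) (by simpa using hj) (by omega)
  · exact ⟨[], by simp, by simp, rfl, by simp, by simp⟩

theorem exists_isInnerFace
    (hsucc : ∀ (v : Fin n) (h : v.val + 1 < n), G.Adj v ⟨v.val + 1, h⟩) {x y : Fin n}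
    (hxy : x.val + 1 < y.val) (hf : G.Adj x y) :
    ∃ l, IsInnerFace G l ∧ ∃ h : 0 < l.length, l[0] = x ∧ l[l.length - 1] = y := by
  have hx1 : x.val + 1 < n := by omega
  obtain ⟨z, ⟨hxz, hxz', hzy⟩, hzmax⟩ :=
    Set.exists_max_image {w | G.Adj x w ∧ x < w ∧ w < y} id (Set.toFinite _)
      ⟨⟨x.val + 1, hx1⟩, hsucc x hx1, Nat.lt_succ_self _, hxy⟩
  obtain ⟨l, hsort, hchain, hlast, -, hchord⟩ := exists_chordless_increasing_path hsucc z hzy.le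
  have hl : l ≠ [] := by rintro rfl; exact hzy.ne hlast
  rw [List.getLast_eq_getElem] at hlast
  have hlast' : (x :: z :: l)[(x :: z :: l).length - 1] = y := by simpa using hlast
  have hsort' := List.pairwise_iff_getElem.mp hsort
  refine ⟨x :: z :: l, ⟨?_, ?_, ?_, ?_, ?_⟩, by simp, rfl, hlast'⟩
  · have := List.length_pos_iff.mpr hl
    simp only [List.length_cons]
    omega
  · refine List.pairwise_cons.mpr ⟨fun w hw => ?_, hsort⟩
    rcases List.mem_cons.mp hw with rfl | hw
    · exact hxz'
    · exact hxz'.trans (List.rel_of_pairwise_cons hsort hw)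
  · exact List.isChain_cons_cons.mpr ⟨hxz, hchain⟩
  · exact fun _ => by rwa [List.get_eq_getElem, List.get_eq_getElem, hlast']
  · rintro (_ | i) (_ | j) hi hj hij hne
    · omega
    · intro hadj
      simp only [List.get_eq_getElem] at hadj
      simp only [List.length_cons, add_tsub_cancel_right, Nat.add_right_cancel_iff, true_and]
        at hj hne
      have hj' : j < (z :: l).length - 1 := by simp only [List.length_cons]; omega
      have hzw : z < (z :: l)[j] := hsort' 0 j (by simp) (by omega) (by omega)
      have hwy : (z :: l)[j] < y := hlast ▸ hsort' j _ (by omega) (by simp) hj'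
      exact (hzmax _ ⟨hadj, hxz'.trans hzw, hwy⟩).not_gt hzw
    · omega
    · exact hchord i j (by simpa using hi) (by simpa using hj) (by omega)

theorem IsInnerFace.exists_boundaryEdge_mem_notMem {l : List (Fin n)} (hl : IsInnerFace G l)
    {x y : Fin n} (h0 : 0 < l.length) (hx : l[0] = x) (hy : l[l.length - 1] = y)
    {A : Set (Fin n)} (hxA : x ∈ A) (hyA : y ∉ A) :
    ∃ c ∈ A, ∃ c' ∉ A, G.Adj c c' ∧ FaceBoundaryEdge l s(c, c') ∧
      edgeKey s(c, c') < edgeKey s(x, y) := by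
  obtain ⟨hlen, hsort, hchain, -, -⟩ := hl
  have hsort' := List.pairwise_iff_getElem.mp hsort
  obtain ⟨i, hi1, hc, hc'⟩ : ∃ i, ∃ hi1 : i + 1 < l.length, l[i] ∈ A ∧ l[i + 1] ∉ A := by
    obtain ⟨i, ⟨-, hi⟩, hiA, hiA'⟩ :=
      Nat.exists_mem_Ico_and_not_succ (P := fun k => ∀ h : k < l.length, l[k] ∈ A)
        (Nat.zero_le (l.length - 1)) (fun _ => hx ▸ hxA) (fun h => hyA (hy ▸ h (by omega)))
    exact ⟨i, Nat.add_lt_of_lt_sub hi, hiA _, fun h => hiA' fun _ => h⟩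
  refine ⟨l[i], hc, l[i + 1], hc',
    List.isChain_iff_getElem.mp hchain i hi1, .inl ⟨i, hi1, rfl⟩, ?_⟩
  have hxy : x < y := hx ▸ hy ▸ hsort' 0 _ h0 (by omega) (by omega)
  rw [edgeKey_mk_lt_mk_iff_of_le (hsort' i (i + 1) _ hi1 (by omega)).le hxy.le]
  rcases (show i + 1 < l.length - 1 ∨ i + 1 = l.length - 1 by omega) with h | h
  · exact .inl (hy ▸ hsort' _ _ hi1 (by omega) h)
  · exact .inr ⟨by simp [← hy, h], hx ▸ hsort' 0 i h0 (by omega) (by omega)⟩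

theorem le_and_le_of_edgeKey_lt_of_val_eq_succ {u w x y : Fin n} (huw : u ≠ w)
    (hyx : y.val = x.val + 1) (h : edgeKey s(u, w) < edgeKey s(x, y)) : u ≤ x ∧ w ≤ x := by
  have hxy : x ≤ y := Fin.le_def.mpr (by omega)
  rw [edgeKey_mk_lt_mk_iff, max_eq_right hxy, min_eq_left hxy] at h
  rcases le_total u w with huw' | huw' <;>
    simp only [huw', max_eq_left, max_eq_right, min_eq_left, min_eq_right] at h <;> omega

theorem IsSpanningTree.exists_outer_exchange
    (hsucc : ∀ (v : Fin n) (h : v.val + 1 < n), G.Adj v ⟨v.val + 1, h⟩)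
    (hT : IsSpanningTree G T) {x y : Fin n} {e : Sym2 (Fin n)} (hyx : y.val = x.val + 1)
    (hfT : s(x, y) ∈ T) (he : IsEdgeExchange G T e s(x, y))
    (hkey : edgeKey e < edgeKey s(x, y)) :
    ∃ d, edgeKey d < edgeKey s(x, y) ∧ OnCommonFace G d s(x, y) ∧
      IsEdgeExchange G T d s(x, y) := by
  set K := (fromEdgeSet (T : Set (Sym2 (Fin n)))).deleteEdges {s(x, y)}
  induction e using Sym2.ind with | h u w => ?_
  have heT : s(u, w) ∉ T := fun h => he.2.2.2.1.mp h hfT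
  have huw : ¬K.Reachable u w :=
    (hT.isEdgeExchange_iff_not_reachable hfT he.1 heT).mp (isEdgeExchange_comm.mp he)
  have hle : u ≤ x ∧ w ≤ x := le_and_le_of_edgeKey_lt_of_val_eq_succ (G.ne_of_adj he.1) hyx hkey
  -- an end `z ≤ x` of `e` on the side of `y`, then walk up the outer path from `z` to `x`
  obtain ⟨z, hzx, hz⟩ : ∃ z ≤ x, ¬K.Reachable x z := by
    by_contra! h
    exact huw ((h u hle.1).symm.trans (h w hle.2))
  obtain ⟨c, ⟨-, hcx⟩, hc, hc'⟩ :=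
    Nat.exists_mem_Ico_and_not_succ (P := fun k => ∀ h : k < n, ¬K.Reachable x ⟨k, h⟩)
      (Fin.le_def.mp hzx) (fun _ => hz) (fun h => h x.isLt .rfl)
  have hc1 : c + 1 < n := Nat.lt_of_le_of_lt hcx x.isLt
  set a : Fin n := ⟨c, Nat.lt_of_succ_lt hc1⟩
  set b : Fin n := ⟨c + 1, hc1⟩
  have ha : ¬K.Reachable x a := hc _
  have hb : K.Reachable x b := not_not.mp fun h => hc' fun _ => h
  have hkey' : edgeKey s(b, a) < edgeKey s(x, y) := by
    rw [Sym2.eq_swap, edgeKey_mk_lt_mk_iff_of_le (Fin.le_def.mpr (Nat.le_succ c))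
      (Fin.le_def.mpr (by omega))]
    exact .inl (Fin.lt_def.mpr (show c + 1 < y.val by omega))
  refine ⟨_, hkey', .inr ⟨⟨a, b, Nat.mod_eq_of_lt hc1, Sym2.eq_swap⟩,
    ⟨x, y, by rw [Nat.mod_eq_of_lt (by omega)]; exact hyx.symm, rfl⟩⟩, ?_⟩
  exact hT.isEdgeExchange_of_reachable_of_not_reachable hfT (hsucc a hc1).symm
    (ne_of_apply_ne edgeKey hkey'.ne) hb ha

theorem IsSpanningTree.exists_face_exchange
    (hsucc : ∀ (v : Fin n) (h : v.val + 1 < n), G.Adj v ⟨v.val + 1, h⟩)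
    (hT : IsSpanningTree G T) {x y : Fin n} (hxy : x.val + 1 < y.val) (hfT : s(x, y) ∈ T) :
    ∃ d, edgeKey d < edgeKey s(x, y) ∧ OnCommonFace G d s(x, y) ∧
      IsEdgeExchange G T d s(x, y) := by
  set K := (fromEdgeSet (T : Set (Sym2 (Fin n)))).deleteEdges {s(x, y)}
  obtain ⟨l, hl, h0, hx, hy⟩ := exists_isInnerFace hsucc hxy (hT.1 hfT)
  obtain ⟨c, hc, c', hc', hadj, hbd, hkey⟩ :=
    hl.exists_boundaryEdge_mem_notMem h0 hx hy (A := {z | K.Reachable x z}) (.refl x)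
      (hT.not_reachable_deleteEdges hfT)
  refine ⟨s(c, c'), hkey, .inl ⟨l, hl, hbd, .inr ⟨h0, by simp [hx, hy]⟩⟩, ?_⟩
  exact hT.isEdgeExchange_of_reachable_of_not_reachable hfT hadj
    (ne_of_apply_ne edgeKey hkey.ne) hc hc'

theorem IsSpanningTree.exists_exchange_of_notMem
    (hnc : ∀ e ∈ G.edgeSet, ∀ f ∈ G.edgeSet, ¬Crossing e f) (hT : IsSpanningTree G T)
    {x y : Fin n} {e : Sym2 (Fin n)} (hxy : x < y) (hfT : s(x, y) ∉ T)
    (he : IsEdgeExchange G T e s(x, y)) (hkey : edgeKey e < edgeKey s(x, y)) :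
    ∃ p, edgeKey s(x, p) < edgeKey s(x, y) ∧ IsEdgeExchange G T s(x, p) s(x, y) := by
  have hf : G.Adj x y := he.2.1
  have heT : e ∈ T := he.2.2.2.1.mpr hfT
  have hTG : fromEdgeSet (T : Set (Sym2 (Fin n))) ≤ G := fun a b h =>
    hT.1 ((fromEdgeSet_adj _).mp h).1
  obtain ⟨W, hW⟩ := (hT.2.1.preconnected x y).exists_isPath
  obtain ⟨p, hadj, P, rfl⟩ := W.exists_eq_cons_of_ne hxy.ne
  obtain ⟨hP, hxP⟩ := (Walk.cons_isPath_iff hadj P).mp hW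
  have hd : s(x, p) ∈ T := ((fromEdgeSet_adj _).mp hadj).1
  refine ⟨p, ?_, ?_⟩
  · by_contra hpkey
    have hyp : y < p := by
      refine lt_of_le_of_ne (not_lt.mp fun hpy => hpkey ?_) fun h => hfT (h ▸ hd)
      exact edgeKey_mk_lt_mk_iff.mpr (.inl (by rw [max_eq_right hxy.le]; exact max_lt hxy hpy))
    have hright := hP.le_of_mem_support hnc hTG hxy hyp hf (hTG hadj) hxP
    have heW : e ∈ (Walk.cons hadj P).edges := Walk.mem_edges_of_not_reachable_deleteEdges _
      ((hT.isEdgeExchange_iff_not_reachable heT hf hfT).mp he)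
    refine (edgeKey_le_of_forall_mem hxy (G.not_isDiag_of_mem_edgeSet he.1) fun v hv => ?_).not_gt
      hkey
    rcases List.mem_cons.mp (Walk.mem_support_of_mem_edges heW hv) with rfl | hv
    · exact .inl rfl
    · exact .inr (hright v hv)
  · rw [hT.isEdgeExchange_iff_not_reachable hd hf hfT]
    refine fun h => hT.not_reachable_deleteEdges hd
      (h.trans ⟨(P.toDeleteEdges {s(x, p)} fun d hdP hdx => hxP ?_).reverse⟩)
    rw [Set.mem_singleton_iff.mp hdx] at hdP
    exact P.fst_mem_support_of_mem_edges hdP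

theorem IsSpanningTree.exists_exchange_of_edgeKey_lt
    (hsucc : ∀ (v : Fin n) (h : v.val + 1 < n), G.Adj v ⟨v.val + 1, h⟩)
    (hnc : ∀ e ∈ G.edgeSet, ∀ f ∈ G.edgeSet, ¬Crossing e f) (hT : IsSpanningTree G T)
    {e f : Sym2 (Fin n)} (he : IsEdgeExchange G T e f) (hkey : edgeKey e < edgeKey f) :
    ∃ d, edgeKey d < edgeKey f ∧ ((∃ v, v ∈ d ∧ v ∈ f) ∨ OnCommonFace G d f) ∧
      IsEdgeExchange G T d f := by
  obtain ⟨x, y, hxy, rfl⟩ : ∃ x y, x < y ∧ f = s(x, y) := by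
    induction f using Sym2.ind with | h a b => ?_
    rcases lt_or_gt_of_ne (G.ne_of_adj he.2.1) with h | h
    · exact ⟨a, b, h, rfl⟩
    · exact ⟨b, a, h, Sym2.eq_swap⟩
  by_cases hfT : s(x, y) ∈ T
  · obtain ⟨d, hd, hface, hexch⟩ : ∃ d, edgeKey d < edgeKey s(x, y) ∧
        OnCommonFace G d s(x, y) ∧ IsEdgeExchange G T d s(x, y) := by
      rcases (Nat.succ_le_of_lt (Fin.lt_def.mp hxy)).eq_or_lt with h | h
      · exact hT.exists_outer_exchange hsucc h.symm hfT he hkey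
      · exact hT.exists_face_exchange hsucc h hfT
    exact ⟨d, hd, .inr hface, hexch⟩
  · obtain ⟨p, hp, hexch⟩ := hT.exists_exchange_of_notMem hnc hxy hfT he hkey
    exact ⟨s(x, p), hp, .inl ⟨x, Sym2.mem_mk_left x p, Sym2.mem_mk_left x y⟩, hexch⟩

end Outerplane

theorem outerplane_pof_alternative_general (n m : ℕ)
    (G : SimpleGraph (Fin n))
    (hout : ∀ u v : Fin n, (u.val + 1) % n = v.val → G.Adj u v)
    (hnc : ∀ e ∈ G.edgeSet, ∀ f ∈ G.edgeSet, ¬ Crossing e f)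
    (hm : G.edgeSet.ncard = m) :
    ∃ ℓ : Sym2 (Fin n) → ℕ, Set.BijOn ℓ G.edgeSet (Set.Icc 1 m) ∧
      ∀ T : Finset (Sym2 (Fin n)), IsSpanningTree G T →
        ∀ e f : Sym2 (Fin n), IsEdgeExchange G T e f → ℓ e < ℓ f →
          ∃ d : Sym2 (Fin n), ℓ d < ℓ f ∧
            ((∃ v : Fin n, v ∈ d ∧ v ∈ f) ∨ OnCommonFace G d f) ∧
            IsEdgeExchange G T d f := by
  obtain ⟨ℓ, hbij, hℓ⟩ :=
    (Set.toFinite G.edgeSet).exists_bijOn_Icc_lt_iff_lt edgeKey edgeKey_injective.injOn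
  refine ⟨ℓ, hm ▸ hbij, fun T hT e f he hlt => ?_⟩
  obtain ⟨d, hkey, hdf, hd⟩ := hT.exists_exchange_of_edgeKey_lt
    (fun v h => hout _ _ (Nat.mod_eq_of_lt h)) hnc he ((hℓ e he.1 f he.2.1).mp hlt)
  exact ⟨d, (hℓ d hd.1 f he.2.1).mpr hkey, hdf, hd⟩

/-- For any 2-connected outerplane graph `G` on `n ≥ 3` vertices (the outer cycle plus
pairwise non-crossing chords) with `m` edges there is a bijective edge labeling
`ℓ : E(G) → {1, …, m}` such that for every spanning tree `T` of `G` and every edge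
exchange `{e, f}` for `T` with `ℓ e < ℓ f`, there is an edge `d` of `G` with
`ℓ d < ℓ f` such that `d` and `f` share an end vertex or lie on a common face of `G`,
and `{d, f}` is an edge exchange for `T`. -/
theorem outerplane_pof_alternative (n m : ℕ) (hn : 3 ≤ n)
    (G : SimpleGraph (Fin n))
    (hout : ∀ u v : Fin n, (u.val + 1) % n = v.val → G.Adj u v)
    (hnc : ∀ e ∈ G.edgeSet, ∀ f ∈ G.edgeSet, ¬ Crossing e f)
    (hm : G.edgeSet.ncard = m) :
    ∃ ℓ : Sym2 (Fin n) → ℕ, Set.BijOn ℓ G.edgeSet (Set.Icc 1 m) ∧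
      ∀ T : Finset (Sym2 (Fin n)), IsSpanningTree G T →
        ∀ e f : Sym2 (Fin n), IsEdgeExchange G T e f → ℓ e < ℓ f →
          ∃ d : Sym2 (Fin n), ℓ d < ℓ f ∧
            ((∃ v : Fin n, v ∈ d ∧ v ∈ f) ∨ OnCommonFace G d f) ∧
            IsEdgeExchange G T d f :=
  outerplane_pof_alternative_general n m G hout hnc hm
end
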